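/- arXiv:2506.18788 — 9 statements merged into one kernel-verified Lean document; each statement's English description precedes it below -/
import Mathlib

section
/- Let G be a finite graph with at least one edge, and let v be a vertex of G. Then the sum over all nuclei N of G containing v of (-1)^{|E(N)|} equals 0, where a nucleus is a connected non-empty subgraph whose vertex set is a vertex cover of G. -/
open scoped Classical

namespace Stmt0

variable {V E : Type} [Fintype V] [Fintype E] [DecidableEq V] [DecidableEq E]

/-- Adjacency of two vertices via an edge in the edge set `A` of a multigraph
with incidence map `ends`. -/
def Adj (ends : E → Sym2 V) (A : Finset E) (u v : V) : Prop :=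
  ∃ e ∈ A, ends e = s(u, v)

/-- Reachability (the equivalence relation generated by adjacency). -/
def Reach (ends : E → Sym2 V) (A : Finset E) : V → V → Prop :=
  Relation.EqvGen (Adj ends A)

/-- A nucleus of the multigraph `(V, E, ends)`: a connected non-empty subgraph
`(S, A)` whose vertex set `S` is a vertex cover. -/
def IsNucleus (ends : E → Sym2 V) (S : Finset V) (A : Finset E) : Prop :=
  S.Nonempty ∧ (∀ e ∈ A, ∀ v ∈ ends e, v ∈ S) ∧
    (∀ u ∈ S, ∀ v ∈ S, Reach ends A u v) ∧
    (∀ e : E, ∃ v ∈ ends e, v ∈ S)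

/-- The shade of an edge set `F`: the connected component of `v`. -/
noncomputable def shade (ends : E → Sym2 V) (v : V) (F : Finset E) : Finset V :=
  Finset.univ.filter fun u => Reach ends F v u

lemma mem_shade {ends : E → Sym2 V} {v u : V} {F : Finset E} :
    u ∈ shade ends v F ↔ Reach ends F v u := by simp [shade]

/-- Pandemic: every edge of the graph has an endpoint in the shade of `F`. -/
def Pandemic (ends : E → Sym2 V) (v : V) (F : Finset E) : Prop :=
  ∀ e : E, ∃ w ∈ ends e, w ∈ shade ends v F

lemma eqvGen_iff_of_iff {R : V → V → Prop} {S : Set V}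
    (h : ∀ a b, R a b → (a ∈ S ↔ b ∈ S)) {a b : V} (hab : Relation.EqvGen R a b) :
    a ∈ S ↔ b ∈ S := by
  induction hab with
  | rel a b hr => exact h a b hr
  | refl a => exact Iff.rfl
  | symm a b _ ih => exact ih.symm
  | trans a b c _ _ ih1 ih2 => exact ih1.trans ih2

lemma reach_mono {ends : E → Sym2 V} {F G : Finset E} (h : F ⊆ G) {a b : V}
    (hr : Reach ends F a b) : Reach ends G a b := by
  induction hr with
  | rel a b hr => exact Relation.EqvGen.rel _ _ ⟨hr.choose, h hr.choose_spec.1, hr.choose_spec.2⟩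
  | refl a => exact Relation.EqvGen.refl a
  | symm a b _ ih => exact ih.symm a b
  | trans a b c _ _ ih1 ih2 => exact ih1.trans a b c ih2

lemma reach_toggle {ends : E → Sym2 V} {v : V} {F G : Finset E} {e : E}
    (hFG : ∀ f ∈ F, f = e ∨ f ∈ G)
    (he : ∀ w ∈ ends e, ¬ Reach ends G v w) {u : V} (h : Reach ends F v u) :
    Reach ends G v u := by
  have key : ∀ a b : V, Adj ends F a b →
      (a ∈ {x | Reach ends G v x} ↔ b ∈ {x | Reach ends G v x}) := by
    rintro a b ⟨f, hf, hends⟩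
    rcases hFG f hf with rfl | hfG
    · have ha : a ∈ ends f := by rw [hends]; exact Sym2.mem_mk_left a b
      have hb : b ∈ ends f := by rw [hends]; exact Sym2.mem_mk_right a b
      exact iff_of_false (he a ha) (he b hb)
    · have hadj : Adj ends G a b := ⟨f, hfG, hends⟩
      constructor
      · intro hx
        exact hx.trans _ _ _ (Relation.EqvGen.rel a b hadj)
      · intro hx
        exact hx.trans _ _ _ ((Relation.EqvGen.rel a b hadj).symm _ _)
  exact (eqvGen_iff_of_iff key h).mp (Relation.EqvGen.refl v)

lemma shade_insert {ends : E → Sym2 V} {v : V} {F : Finset E} {e : E}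
    (he : ∀ w ∈ ends e, w ∉ shade ends v F) :
    shade ends v (insert e F) = shade ends v F := by
  ext u
  simp only [mem_shade]
  constructor
  · intro h
    refine reach_toggle (fun f hf => Finset.mem_insert.mp hf) ?_ h
    intro w hw hr
    exact he w hw (mem_shade.mpr hr)
  · exact reach_mono (Finset.subset_insert e F)

lemma shade_erase {ends : E → Sym2 V} {v : V} {F : Finset E} {e : E}
    (he : ∀ w ∈ ends e, w ∉ shade ends v F) :
    shade ends v (F.erase e) = shade ends v F := by
  ext u
  simp only [mem_shade]
  constructor
  · exact reach_mono (Finset.erase_subset e F)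
  · intro h
    refine reach_toggle (e := e) (G := F.erase e) ?_ ?_ h
    · intro f hf
      rcases eq_or_ne f e with rfl | hne
      · exact Or.inl rfl
      · exact Or.inr (Finset.mem_erase.mpr ⟨hne, hf⟩)
    · intro w hw hr
      exact he w hw (mem_shade.mpr (reach_mono (Finset.erase_subset e F) hr))

/-- The set of edges missed by the shade of `F`. -/
noncomputable def bad (ends : E → Sym2 V) (v : V) (F : Finset E) : Finset E :=
  Finset.univ.filter fun e => ∀ w ∈ ends e, w ∉ shade ends v F

lemma bad_congr {ends : E → Sym2 V} {v : V} {F G : Finset E}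
    (h : shade ends v F = shade ends v G) : bad ends v F = bad ends v G := by
  unfold bad; rw [h]

/-- Key involution lemma: for any `K`, the signed sum over `F` with
`K ⊆ bad F` vanishes. -/
lemma key_sum (ends : E → Sym2 V) (hE : Nonempty E) (v : V) (K : Finset E) :
    ∑ F ∈ (Finset.univ : Finset (Finset E)).filter (fun F => K ⊆ bad ends v F),
      (-1 : ℤ) ^ F.card = 0 := by
  set e₀ : E := if h : K.Nonempty then h.choose else hE.some with he₀def
  have he₀K : K.Nonempty → e₀ ∈ K := by
    intro h
    rw [he₀def, dif_pos h]
    exact h.choose_spec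
  set g : Finset E → Finset E := fun F => if e₀ ∈ F then F.erase e₀ else insert e₀ F with hg
  have hshade : K.Nonempty → ∀ F : Finset E, K ⊆ bad ends v F →
      shade ends v (g F) = shade ends v F := by
    intro hK F hKF
    · have he₀bad : e₀ ∈ bad ends v F := hKF (he₀K hK)
      have hends : ∀ w ∈ ends e₀, w ∉ shade ends v F := by
        have := Finset.mem_filter.mp he₀bad
        exact this.2
      by_cases hmem : e₀ ∈ F
      · simp only [hg, if_pos hmem]
        exact shade_erase hends
      · simp only [hg, if_neg hmem]
        exact shade_insert hends
  have hmemg : ∀ F : Finset E, K ⊆ bad ends v F → K ⊆ bad ends v (g F) := by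
    intro F hKF
    rcases K.eq_empty_or_nonempty with rfl | hK
    · exact Finset.empty_subset _
    · rw [bad_congr (hshade hK F hKF)]
      exact hKF
  refine Finset.sum_involution (fun F _ => g F) ?_ ?_ ?_ ?_
  · intro F _
    by_cases hmem : e₀ ∈ F
    · simp only [hg, if_pos hmem]
      have : F.card = (F.erase e₀).card + 1 := (Finset.card_erase_add_one hmem).symm
      rw [this, pow_succ]
      ring
    · simp only [hg, if_neg hmem]
      rw [Finset.card_insert_of_notMem hmem, pow_succ]
      ring
  · intro F _ _
    by_cases hmem : e₀ ∈ F
    · simp only [hg, if_pos hmem]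
      intro heq
      exact (heq ▸ Finset.notMem_erase e₀ F) hmem
    · simp only [hg, if_neg hmem]
      intro heq
      exact hmem (heq ▸ Finset.mem_insert_self e₀ F)
  · intro F hF
    simp only [Finset.mem_filter, Finset.mem_univ, true_and] at hF ⊢
    exact hmemg F hF
  · intro F _
    by_cases hmem : e₀ ∈ F
    · have h1 : g F = F.erase e₀ := if_pos hmem
      have h2 : e₀ ∉ g F := h1 ▸ Finset.notMem_erase e₀ F
      have h3 : g (g F) = insert e₀ (g F) := if_neg h2
      show g (g F) = F
      rw [h3, h1, Finset.insert_erase hmem]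
    · have h1 : g F = insert e₀ F := if_neg hmem
      have h2 : e₀ ∈ g F := h1 ▸ Finset.mem_insert_self e₀ F
      have h3 : g (g F) = (g F).erase e₀ := if_pos h2
      show g (g F) = F
      rw [h3, h1, Finset.erase_insert hmem]

/-- The signed sum over pandemic sets vanishes. -/
lemma pandemic_sum (ends : E → Sym2 V) (hE : Nonempty E) (v : V) :
    ∑ F ∈ (Finset.univ : Finset (Finset E)).filter (Pandemic ends v),
      (-1 : ℤ) ^ F.card = 0 := by
  have hpan : ∀ F : Finset E, Pandemic ends v F ↔ bad ends v F = ∅ := by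
    intro F
    unfold Pandemic bad
    rw [Finset.filter_eq_empty_iff]
    constructor
    · intro h e _ hall
      obtain ⟨w, hw, hws⟩ := h e
      exact hall w hw hws
    · intro h e
      have := h (Finset.mem_univ e)
      push_neg at this
      exact this
  calc ∑ F ∈ (Finset.univ : Finset (Finset E)).filter (Pandemic ends v), (-1 : ℤ) ^ F.card
      = ∑ F : Finset E, (-1 : ℤ) ^ F.card *
          ∑ K ∈ (bad ends v F).powerset, (-1 : ℤ) ^ K.card := by
        rw [Finset.sum_filter]
        refine Finset.sum_congr rfl fun F _ => ?_
        rw [Finset.sum_powerset_neg_one_pow_card]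
        by_cases h : Pandemic ends v F
        · rw [if_pos h, if_pos ((hpan F).mp h), mul_one]
        · rw [if_neg h, if_neg (fun hh => h ((hpan F).mpr hh)), mul_zero]
    _ = ∑ F : Finset E, ∑ K : Finset E,
          (if K ⊆ bad ends v F then (-1 : ℤ) ^ K.card * (-1 : ℤ) ^ F.card else 0) := by
        refine Finset.sum_congr rfl fun F _ => ?_
        have : (bad ends v F).powerset =
            (Finset.univ : Finset (Finset E)).filter (fun K => K ⊆ bad ends v F) := by
          ext K; simp [Finset.mem_powerset]
        rw [this, Finset.sum_filter, Finset.mul_sum]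
        refine Finset.sum_congr rfl fun K _ => ?_
        by_cases h : K ⊆ bad ends v F
        · rw [if_pos h, if_pos h]; ring
        · rw [if_neg h, if_neg h, mul_zero]
    _ = ∑ K : Finset E, ∑ F : Finset E,
          (if K ⊆ bad ends v F then (-1 : ℤ) ^ K.card * (-1 : ℤ) ^ F.card else 0) :=
        Finset.sum_comm
    _ = 0 := by
        refine Finset.sum_eq_zero fun K _ => ?_
        have : ∀ F : Finset E,
            (if K ⊆ bad ends v F then (-1 : ℤ) ^ K.card * (-1 : ℤ) ^ F.card else 0) =
            (-1 : ℤ) ^ K.card * (if K ⊆ bad ends v F then (-1 : ℤ) ^ F.card else 0) := by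
          intro F
          by_cases h : K ⊆ bad ends v F
          · rw [if_pos h, if_pos h]
          · rw [if_neg h, if_neg h, mul_zero]
        simp_rw [this]
        rw [← Finset.mul_sum, ← Finset.sum_filter, key_sum ends hE v K, mul_zero]

lemma nucleus_shade {ends : E → Sym2 V} {v : V} {S : Finset V} {A : Finset E}
    (h : IsNucleus ends S A) (hv : v ∈ S) : shade ends v A = S := by
  obtain ⟨-, hends, hconn, -⟩ := h
  apply Finset.Subset.antisymm
  · intro u hu
    have hkey : ∀ a b : V, Adj ends A a b → ((a ∈ (↑S : Set V)) ↔ (b ∈ (↑S : Set V))) := by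
      rintro a b ⟨f, hf, hf2⟩
      have ha : a ∈ ends f := by rw [hf2]; exact Sym2.mem_mk_left a b
      have hb : b ∈ ends f := by rw [hf2]; exact Sym2.mem_mk_right a b
      exact iff_of_true (hends f hf a ha) (hends f hf b hb)
    exact (eqvGen_iff_of_iff hkey (mem_shade.mp hu)).mp hv
  · intro u hu
    exact mem_shade.mpr (hconn v hv u hu)

lemma nucleus_pandemic {ends : E → Sym2 V} {v : V} {S : Finset V} {A : Finset E}
    (h : IsNucleus ends S A) (hv : v ∈ S) : Pandemic ends v A := by
  intro e
  obtain ⟨w, hw, hwS⟩ := h.2.2.2 e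
  exact ⟨w, hw, (nucleus_shade h hv) ▸ hwS⟩

lemma pandemic_nucleus {ends : E → Sym2 V} {v : V} {A : Finset E}
    (h : Pandemic ends v A) : IsNucleus ends (shade ends v A) A := by
  refine ⟨⟨v, mem_shade.mpr (Relation.EqvGen.refl v)⟩, ?_, ?_, h⟩
  · intro e he u hu
    obtain ⟨w, hw, hws⟩ := h e
    have hother : s(w, (Sym2.Mem.other' hw)) = ends e := Sym2.other_spec' hw
    have hadj : Adj ends A w (Sym2.Mem.other' hw) := ⟨e, he, hother.symm⟩
    have hreach_other : Reach ends A v (Sym2.Mem.other' hw) :=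
      (mem_shade.mp hws).trans _ _ _ (Relation.EqvGen.rel _ _ hadj)
    rw [← hother] at hu
    rcases Sym2.mem_iff.mp hu with rfl | rfl
    · exact hws
    · exact mem_shade.mpr hreach_other
  · intro a ha b hb
    exact ((mem_shade.mp ha).symm _ _).trans _ _ _ (mem_shade.mp hb)

/-- Elser's lemma: for a graph with at least one edge and any vertex `v`, the sum
over all nuclei containing `v` of `(-1)^{|E(N)|}` vanishes. -/
theorem elser_nuclei_sum (ends : E → Sym2 V) (hE : Nonempty E) (v : V) :
    ∑ p ∈ (Finset.univ : Finset (Finset V × Finset E)).filter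
        (fun p => IsNucleus ends p.1 p.2 ∧ v ∈ p.1),
      (-1 : ℤ) ^ p.2.card = 0 := by
  rw [← pandemic_sum ends hE v]
  refine Finset.sum_bij' (fun p _ => p.2) (fun F _ => (shade ends v F, F)) ?_ ?_ ?_ ?_ ?_
  · intro p hp
    simp only [Finset.mem_filter, Finset.mem_univ, true_and] at hp ⊢
    exact nucleus_pandemic hp.1 hp.2
  · intro F hF
    simp only [Finset.mem_filter, Finset.mem_univ, true_and] at hF ⊢
    exact ⟨pandemic_nucleus hF, mem_shade.mpr (Relation.EqvGen.refl v)⟩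
  · intro p hp
    simp only [Finset.mem_filter, Finset.mem_univ, true_and] at hp
    exact Prod.ext (nucleus_shade hp.1 hp.2) rfl
  · intro F _
    rfl
  · intro p _
    rfl

end Stmt0
end

section
/- Let G be a finite graph with at least one edge. Then the sum over all nuclei N of G of (-1)^{|E(N)|} · |V(N)| equals 0. -/
open scoped Classical

namespace Stmt1

variable {V E : Type} [Fintype V] [Fintype E] [DecidableEq V] [DecidableEq E]

/-- Adjacency of two vertices via an edge in the edge set `A`. -/
def Adj (ends : E → Sym2 V) (A : Finset E) (u v : V) : Prop :=
  ∃ e ∈ A, ends e = s(u, v)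

/-- Reachability (the equivalence relation generated by adjacency). -/
def Reach (ends : E → Sym2 V) (A : Finset E) : V → V → Prop :=
  Relation.EqvGen (Adj ends A)

/-- A nucleus: a connected non-empty subgraph `(S, A)` whose vertex set `S`
is a vertex cover of the whole graph. -/
def IsNucleus (ends : E → Sym2 V) (S : Finset V) (A : Finset E) : Prop :=
  S.Nonempty ∧ (∀ e ∈ A, ∀ v ∈ ends e, v ∈ S) ∧
    (∀ u ∈ S, ∀ v ∈ S, Reach ends A u v) ∧
    (∀ e : E, ∃ v ∈ ends e, v ∈ S)

set_option linter.unusedSectionVars false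

def InVA (ends : E → Sym2 V) (A : Finset E) (u : V) : Prop := ∃ e ∈ A, u ∈ ends e
def ConnAt (ends : E → Sym2 V) (A : Finset E) (v : V) : Prop :=
  ∀ e ∈ A, ∀ u ∈ ends e, Reach ends A u v
def Good (ends : E → Sym2 V) (F : Finset E) (v : V) (A : Finset E) : Prop :=
  A ⊆ F ∧ ConnAt ends A v ∧ ∀ f ∈ F, ∃ u ∈ ends f, u = v ∨ InVA ends A u
def gam (v y : V) : V → V := fun w => if w = y then v else w
def cends (ends : E → Sym2 V) (v y : V) : E → Sym2 V := fun f => (ends f).map (gam v y)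
lemma gam_v (v y : V) : gam v y v = v := by unfold gam; split <;> rfl
lemma sym2_cases (z : Sym2 V) : ∃ p q, z = s(p, q) :=
  Sym2.ind (f := fun z => ∃ p q, z = s(p, q)) (fun p q => ⟨p, q, rfl⟩) z

lemma gam_y (v y : V) : gam v y y = v := by unfold gam; simp

lemma gam_of_ne {u y : V} (v : V) (h : u ≠ y) : gam v y u = u := by unfold gam; simp [h]

section Contract
variable {ends : E → Sym2 V} {e : E} {v y : V} {A' : Finset E}

lemma reach_gam (he : ends e = s(v, y)) (x : V) :
    Reach ends (insert e A') x (gam v y x) := by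
  unfold gam
  split
  · rename_i h
    subst h
    exact Relation.EqvGen.rel _ _ ⟨e, Finset.mem_insert_self e A', by rw [he, Sym2.eq_swap]⟩
  · exact Relation.EqvGen.refl x
lemma reach_of_reach' (he : ends e = s(v, y)) {a b : V}
    (h : Reach (cends ends v y) A' a b) : Reach ends (insert e A') a b := by
  induction h with
  | rel p q hpq =>
    obtain ⟨f, hf, hends⟩ := hpq
    obtain ⟨p', q', hpq'⟩ := sym2_cases (ends f)
    rw [cends, hpq', Sym2.map_pair_eq, Sym2.eq_iff] at hends
    have hf' : f ∈ insert e A' := Finset.mem_insert_of_mem hf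
    have hmid : Reach ends (insert e A') p' q' :=
      Relation.EqvGen.rel _ _ ⟨f, hf', hpq'⟩
    rcases hends with ⟨h1, h2⟩ | ⟨h1, h2⟩
    · exact Relation.EqvGen.trans _ _ _
        (Relation.EqvGen.trans _ _ _ (h1 ▸ (reach_gam he p').symm) hmid)
        (h2 ▸ reach_gam he q')
    · exact Relation.EqvGen.trans _ _ _
        (Relation.EqvGen.trans _ _ _ (h2 ▸ (reach_gam he q').symm) hmid.symm)
        (h1 ▸ reach_gam he p')
  | refl x => exact Relation.EqvGen.refl x
  | symm x y' _ ih => exact ih.symm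
  | trans x y' z _ _ ih1 ih2 => exact ih1.trans _ _ _ ih2
lemma reach'_of_reach (he : ends e = s(v, y)) {a b : V}
    (h : Reach ends (insert e A') a b) :
    Reach (cends ends v y) A' (gam v y a) (gam v y b) := by
  induction h with
  | rel p q hpq =>
    obtain ⟨f, hf, hends⟩ := hpq
    rcases Finset.mem_insert.mp hf with rfl | hf'
    · rw [he, Sym2.eq_iff] at hends
      have : gam v y p = gam v y q := by
        rcases hends with ⟨rfl, rfl⟩ | ⟨rfl, rfl⟩
        · rw [gam_v]; unfold gam; simp
        · rw [gam_v]; unfold gam; simp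
      rw [this]
      exact Relation.EqvGen.refl _
    · refine Relation.EqvGen.rel _ _ ⟨f, hf', ?_⟩
      rw [cends, hends, Sym2.map_pair_eq]
  | refl x => exact Relation.EqvGen.refl _
  | symm x y' _ ih => exact ih.symm
  | trans x y' z _ _ ih1 ih2 => exact ih1.trans _ _ _ ih2

lemma connAt_insert_iff (he : ends e = s(v, y)) :
    ConnAt ends (insert e A') v ↔ ConnAt (cends ends v y) A' v := by
  constructor
  · intro hc f hf u' hu'
    obtain ⟨u, hu, rfl⟩ := Sym2.mem_map.mp hu'
    have := hc f (Finset.mem_insert_of_mem hf) u hu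
    have h2 := reach'_of_reach he this
    rwa [gam_v] at h2
  · intro hc f hf u hu
    rcases Finset.mem_insert.mp hf with rfl | hf'
    · rw [he, Sym2.mem_iff] at hu
      rcases hu with rfl | rfl
      · exact Relation.EqvGen.refl u
      · have := reach_gam (A' := A') he u
        unfold gam at this
        simpa using this
    · have hu' : gam v y u ∈ cends ends v y f := Sym2.mem_map.mpr ⟨u, hu, rfl⟩
      have h2 := hc f hf' _ hu'
      exact (reach_gam he u).trans _ _ _ (reach_of_reach' he h2)

lemma covers_insert_iff (he : ends e = s(v, y)) (heF : e ∈ Finset.univ) {F : Finset E}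
    (heF' : e ∈ F) :
    (∀ f ∈ F, ∃ u ∈ ends f, u = v ∨ InVA ends (insert e A') u) ↔
      (∀ f ∈ F.erase e, ∃ u ∈ cends ends v y f, u = v ∨ InVA (cends ends v y) A' u) := by
  constructor
  · intro hcov f hf
    obtain ⟨u, hu, hcase⟩ := hcov f (Finset.mem_of_mem_erase hf)
    refine ⟨gam v y u, Sym2.mem_map.mpr ⟨u, hu, rfl⟩, ?_⟩
    rcases hcase with huv | ⟨g, hg, hug⟩
    · left; rw [huv]; exact gam_v v y
    · rcases Finset.mem_insert.mp hg with heq | hg'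
      · rw [heq, he, Sym2.mem_iff] at hug
        left
        rcases hug with huv | huy
        · rw [huv]; exact gam_v v y
        · rw [huy]; exact gam_y v y
      · right; exact ⟨g, hg', Sym2.mem_map.mpr ⟨u, hug, rfl⟩⟩
  · intro hcov f hf
    by_cases hfe : f = e
    · subst hfe
      exact ⟨v, by rw [he]; exact Sym2.mem_mk_left v y, Or.inl rfl⟩
    · obtain ⟨u', hu', hcase⟩ := hcov f (Finset.mem_erase.mpr ⟨hfe, hf⟩)
      obtain ⟨u, hu, rfl⟩ := Sym2.mem_map.mp hu'
      by_cases huy : u = y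
      · exact ⟨u, hu, Or.inr ⟨e, Finset.mem_insert_self e A',
          by rw [he, huy]; exact Sym2.mem_mk_right v y⟩⟩
      · have hgu : gam v y u = u := gam_of_ne v huy
        rcases hcase with hv | ⟨g, hg, hug⟩
        · rw [hgu] at hv
          exact ⟨u, hu, Or.inl hv⟩
        · obtain ⟨w, hw, hwu⟩ := Sym2.mem_map.mp hug
          by_cases hwy : w = y
          · rw [hwy, gam_y, hgu] at hwu
            exact ⟨u, hu, Or.inl hwu.symm⟩
          · rw [gam_of_ne v hwy, hgu] at hwu
            exact ⟨u, hu, Or.inr ⟨g, Finset.mem_insert_of_mem hg, hwu ▸ hw⟩⟩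

lemma good_insert_iff (he : ends e = s(v, y)) {F : Finset E} (heF : e ∈ F) (heA : e ∉ A') :
    Good ends F v (insert e A') ↔ Good (cends ends v y) (F.erase e) v A' := by
  unfold Good
  rw [connAt_insert_iff he, covers_insert_iff he (Finset.mem_univ e) heF]
  constructor
  · rintro ⟨hsub, h2, h3⟩
    exact ⟨fun a ha => Finset.mem_erase.mpr
      ⟨fun h => heA (h ▸ ha), hsub (Finset.mem_insert_of_mem ha)⟩, h2, h3⟩
  · rintro ⟨hsub, h2, h3⟩
    refine ⟨Finset.insert_subset heF (fun a ha => Finset.mem_of_mem_erase (hsub ha)), h2, h3⟩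

lemma good_erase_iff (he : ends e = s(v, y)) {F A : Finset E} (heF : e ∈ F) (heA : e ∉ A) :
    Good ends F v A ↔ Good ends (F.erase e) v A := by
  unfold Good
  constructor
  · rintro ⟨hsub, h2, h3⟩
    exact ⟨fun a ha => Finset.mem_erase.mpr ⟨fun h => heA (h ▸ ha), hsub ha⟩, h2,
      fun f hf => h3 f (Finset.mem_of_mem_erase hf)⟩
  · rintro ⟨hsub, h2, h3⟩
    refine ⟨fun a ha => Finset.mem_of_mem_erase (hsub ha), h2, fun f hf => ?_⟩
    by_cases hfe : f = e
    · subst hfe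
      exact ⟨v, by rw [he]; exact Sym2.mem_mk_left v y, Or.inl rfl⟩
    · exact h3 f (Finset.mem_erase.mpr ⟨hfe, hf⟩)

end Contract
lemma reach_cases {ends : E → Sym2 V} {A : Finset E} {a b : V}
    (h : Reach ends A a b) : a = b ∨ (InVA ends A a ∧ InVA ends A b) := by
  induction h with
  | rel x y hxy =>
    obtain ⟨e, he, hx⟩ := hxy
    exact Or.inr ⟨⟨e, he, hx ▸ Sym2.mem_mk_left x y⟩, ⟨e, he, hx ▸ Sym2.mem_mk_right x y⟩⟩
  | refl x => exact Or.inl rfl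
  | symm x y _ ih => exact ih.imp Eq.symm And.symm
  | trans x y z _ _ ih1 ih2 =>
    rcases ih1 with rfl | h1
    · exact ih2
    · rcases ih2 with rfl | h2
      · exact Or.inr h1
      · exact Or.inr ⟨h1.1, h2.2⟩

noncomputable def g (ends : E → Sym2 V) (F : Finset E) (v : V) : ℤ :=
  ∑ A ∈ Finset.univ.filter (Good ends F v), (-1 : ℤ) ^ A.card

lemma g_empty (ends : E → Sym2 V) (v : V) : g ends ∅ v = 1 := by
  have : Finset.univ.filter (Good ends ∅ v) = {∅} := by
    ext A
    simp only [Finset.mem_filter, Finset.mem_univ, true_and, Finset.mem_singleton]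
    constructor
    · rintro ⟨hs, -, -⟩
      exact Finset.subset_empty.mp hs
    · rintro rfl
      exact ⟨Finset.Subset.refl _, fun e he => absurd he (Finset.notMem_empty e),
        fun f hf => absurd hf (Finset.notMem_empty f)⟩
  rw [g, this, Finset.sum_singleton, Finset.card_empty, pow_zero]

lemma g_eq (n : ℕ) (ends : E → Sym2 V) (F : Finset E) (v : V) (hn : F.card ≤ n) :
    g ends F v = if F = ∅ then 1 else 0 := by
  induction n generalizing ends F with
  | zero =>
    have hF : F = ∅ := Finset.card_eq_zero.mp (Nat.le_zero.mp hn)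
    subst hF
    rw [g_empty, if_pos rfl]
  | succ n ih =>
    by_cases hF : F = ∅
    · subst hF; rw [g_empty, if_pos rfl]
    rw [if_neg hF]
    by_cases hex : ∃ e ∈ F, v ∈ ends e
    · obtain ⟨e, heF, hv⟩ := hex
      obtain ⟨y, he⟩ := Sym2.mem_iff_exists.mp hv
      have hcard : (F.erase e).card ≤ n := by
        have h1 : (F.erase e).card + 1 = F.card := Finset.card_erase_add_one heF
        omega
      have hsplit := Finset.sum_filter_add_sum_filter_not
        (Finset.univ.filter (Good ends F v)) (fun A => e ∈ A) (fun A => (-1:ℤ)^A.card)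
      have h2 : ∑ A ∈ (Finset.univ.filter (Good ends F v)).filter (fun A => ¬ e ∈ A),
          (-1:ℤ)^A.card = g ends (F.erase e) v := by
        unfold g
        congr 1
        rw [Finset.filter_filter]
        ext A
        simp only [Finset.mem_filter, Finset.mem_univ, true_and]
        constructor
        · rintro ⟨h1, h2⟩
          exact (good_erase_iff he heF h2).mp h1
        · intro h1
          have heA : e ∉ A := fun hc => Finset.notMem_erase e F (h1.1 hc)
          exact ⟨(good_erase_iff he heF heA).mpr h1, heA⟩
      have h1 : ∑ A ∈ (Finset.univ.filter (Good ends F v)).filter (fun A => e ∈ A),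
          (-1:ℤ)^A.card = - g (cends ends v y) (F.erase e) v := by
        unfold g
        rw [← Finset.sum_neg_distrib]
        refine Finset.sum_bij' (fun A _ => A.erase e) (fun A' _ => insert e A')
          ?_ ?_ ?_ ?_ ?_
        · intro A hA
          simp only [Finset.mem_filter, Finset.mem_univ, true_and] at hA ⊢
          obtain ⟨hg, heA⟩ := hA
          have : A = insert e (A.erase e) := (Finset.insert_erase heA).symm
          rw [this] at hg
          exact (good_insert_iff he heF (Finset.notMem_erase e A)).mp hg
        · intro A' hA'
          simp only [Finset.mem_filter, Finset.mem_univ, true_and] at hA' ⊢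
          have heA' : e ∉ A' := fun hc => Finset.notMem_erase e F (hA'.1 hc)
          exact ⟨(good_insert_iff he heF heA').mpr hA', Finset.mem_insert_self e A'⟩
        · intro A hA
          simp only [Finset.mem_filter, Finset.mem_univ, true_and] at hA
          exact Finset.insert_erase hA.2
        · intro A' hA'
          simp only [Finset.mem_filter, Finset.mem_univ, true_and] at hA'
          have heA' : e ∉ A' := fun hc => Finset.notMem_erase e F (hA'.1 hc)
          exact Finset.erase_insert heA'
        · intro A hA
          simp only [Finset.mem_filter, Finset.mem_univ, true_and] at hA
          have hc : (A.erase e).card + 1 = A.card := Finset.card_erase_add_one hA.2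
          rw [← hc, pow_succ]
          ring
      have := hsplit.symm.trans rfl
      have hgF : g ends F v = - g (cends ends v y) (F.erase e) v + g ends (F.erase e) v := by
        rw [g, ← hsplit, h1, h2]
      rw [hgF, ih _ _ hcard, ih _ _ hcard]
      exact neg_add_cancel _
    · have hempty : Finset.univ.filter (Good ends F v) = ∅ := by
        rw [Finset.filter_eq_empty_iff]
        rintro A - ⟨hsub, hconn, hcov⟩
        obtain ⟨f₀, hf₀⟩ := Finset.nonempty_iff_ne_empty.mpr hF
        obtain ⟨u, hu, hcase⟩ := hcov f₀ hf₀
        rcases hcase with huv | ⟨g0, hg0, hug⟩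
        · exact hex ⟨f₀, hf₀, huv ▸ hu⟩
        · have hr := hconn g0 hg0 u hug
          rcases reach_cases hr with huv | ⟨-, g1, hg1, hv1⟩
          · exact hex ⟨g0, hsub hg0, huv ▸ hug⟩
          · exact hex ⟨g1, hsub hg1, hv1⟩
      rw [g, hempty, Finset.sum_empty]

lemma nucleus_good {ends : E → Sym2 V} {S : Finset V} {A : Finset E} {v : V}
    (hN : IsNucleus ends S A) (hv : v ∈ S) : Good ends Finset.univ v A := by
  obtain ⟨hne, hin, hconn, hcov⟩ := hN
  refine ⟨Finset.subset_univ A, ?_, ?_⟩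
  · intro e he u hu
    exact hconn u (hin e he u hu) v hv
  · intro f _
    obtain ⟨u, hu, huS⟩ := hcov f
    refine ⟨u, hu, ?_⟩
    rcases reach_cases (hconn u huS v hv) with huv | ⟨h1, -⟩
    · exact Or.inl huv
    · exact Or.inr h1

noncomputable def nucset (ends : E → Sym2 V) (A : Finset E) (v : V) : Finset V :=
  if A = ∅ then {v} else Finset.univ.filter (InVA ends A)

lemma good_nucleus {ends : E → Sym2 V} {A : Finset E} {v : V}
    (h : Good ends Finset.univ v A) :
    IsNucleus ends (nucset ends A v) A ∧ v ∈ nucset ends A v := by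
  obtain ⟨-, hconn, hcov⟩ := h
  by_cases hA : A = ∅
  · subst hA
    rw [nucset, if_pos rfl]
    refine ⟨⟨⟨v, Finset.mem_singleton_self v⟩, ?_, ?_, ?_⟩, Finset.mem_singleton_self v⟩
    · intro e he
      exact absurd he (Finset.notMem_empty e)
    · intro u hu w hw
      rw [Finset.mem_singleton] at hu hw
      rw [hu, hw]
      exact Relation.EqvGen.refl v
    · intro f
      obtain ⟨u, hu, hcase⟩ := hcov f (Finset.mem_univ f)
      rcases hcase with huv | ⟨g0, hg0, -⟩
      · exact ⟨u, hu, huv ▸ Finset.mem_singleton_self v⟩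
      · exact absurd hg0 (Finset.notMem_empty g0)
  · rw [nucset, if_neg hA]
    have hvS : InVA ends A v := by
      obtain ⟨f0, hf0⟩ := Finset.nonempty_iff_ne_empty.mpr hA
      obtain ⟨p, q, hpq⟩ := sym2_cases (ends f0)
      have hp : p ∈ ends f0 := by rw [hpq]; exact Sym2.mem_mk_left p q
      rcases reach_cases (hconn f0 hf0 p hp) with hpv | ⟨-, h2⟩
      · exact ⟨f0, hf0, hpv ▸ hp⟩
      · exact h2
    have hvS' : v ∈ Finset.univ.filter (InVA ends A) :=
      Finset.mem_filter.mpr ⟨Finset.mem_univ v, hvS⟩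
    refine ⟨⟨⟨v, hvS'⟩, ?_, ?_, ?_⟩, hvS'⟩
    · intro e he u hu
      exact Finset.mem_filter.mpr ⟨Finset.mem_univ u, ⟨e, he, hu⟩⟩
    · intro u hu w hw
      obtain ⟨gu, hgu, hu'⟩ := (Finset.mem_filter.mp hu).2
      obtain ⟨gw, hgw, hw'⟩ := (Finset.mem_filter.mp hw).2
      exact (hconn gu hgu u hu').trans _ _ _ (hconn gw hgw w hw').symm
    · intro f
      obtain ⟨u, hu, hcase⟩ := hcov f (Finset.mem_univ f)
      rcases hcase with huv | hInVA
      · exact ⟨u, hu, huv ▸ hvS'⟩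
      · exact ⟨u, hu, Finset.mem_filter.mpr ⟨Finset.mem_univ u, hInVA⟩⟩

lemma nucleus_set_eq {ends : E → Sym2 V} {S : Finset V} {A : Finset E} {v : V}
    (hN : IsNucleus ends S A) (hv : v ∈ S) : S = nucset ends A v := by
  obtain ⟨hne, hin, hconn, hcov⟩ := hN
  by_cases hA : A = ∅
  · subst hA
    rw [nucset, if_pos rfl]
    refine Finset.Subset.antisymm (fun u hu => ?_) (Finset.singleton_subset_iff.mpr hv)
    rcases reach_cases (hconn u hu v hv) with huv | ⟨⟨g0, hg0, -⟩, -⟩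
    · exact huv ▸ Finset.mem_singleton_self v
    · exact absurd hg0 (Finset.notMem_empty g0)
  · rw [nucset, if_neg hA]
    refine Finset.Subset.antisymm (fun u hu => ?_) (fun u hu => ?_)
    · obtain ⟨f0, hf0⟩ := Finset.nonempty_iff_ne_empty.mpr hA
      obtain ⟨p, q, hpq⟩ := sym2_cases (ends f0)
      have hp : p ∈ ends f0 := by rw [hpq]; exact Sym2.mem_mk_left p q
      have hpS : p ∈ S := hin f0 hf0 p hp
      rcases reach_cases (hconn u hu p hpS) with hup | ⟨h1, -⟩
      · exact Finset.mem_filter.mpr ⟨Finset.mem_univ u, ⟨f0, hf0, hup ▸ hp⟩⟩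
      · exact Finset.mem_filter.mpr ⟨Finset.mem_univ u, h1⟩
    · obtain ⟨g0, hg0, hu'⟩ := (Finset.mem_filter.mp hu).2
      exact hin g0 hg0 u hu'

/-- Elser's identity: in every graph with at least one edge, the sum over all nuclei
of `(-1)^{|E(N)|} |V(N)|` vanishes. -/
theorem elser_identity (ends : E → Sym2 V) (hE : Nonempty E) :
    ∑ p ∈ (Finset.univ : Finset (Finset V × Finset E)).filter
        (fun p => IsNucleus ends p.1 p.2),
      (-1 : ℤ) ^ p.2.card * (p.1.card : ℤ) = 0 := by
  have huniv : (Finset.univ : Finset E) ≠ ∅ := by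
    obtain ⟨e⟩ := hE
    exact Finset.ne_empty_of_mem (Finset.mem_univ e)
  have step1 : ∀ p : Finset V × Finset E, (-1:ℤ)^p.2.card * (p.1.card : ℤ)
      = ∑ v ∈ Finset.univ, if v ∈ p.1 then (-1:ℤ)^p.2.card else 0 := by
    intro p
    rw [← Finset.sum_filter, Finset.filter_univ_mem, Finset.sum_const, nsmul_eq_mul, mul_comm]
  rw [Finset.sum_congr rfl (fun p _ => step1 p), Finset.sum_comm]
  refine Finset.sum_eq_zero (fun v _ => ?_)
  rw [← Finset.sum_filter]
  have hbij : ∑ p ∈ ((Finset.univ : Finset (Finset V × Finset E)).filter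
        (fun p => IsNucleus ends p.1 p.2)).filter (fun p => v ∈ p.1),
      (-1:ℤ)^p.2.card = g ends Finset.univ v := by
    rw [g]
    refine Finset.sum_bij' (fun p _ => p.2) (fun A _ => (nucset ends A v, A)) ?_ ?_ ?_ ?_ ?_
    · intro p hp
      rw [Finset.filter_filter] at hp
      obtain ⟨-, hN, hv⟩ := Finset.mem_filter.mp hp
      exact Finset.mem_filter.mpr ⟨Finset.mem_univ _, nucleus_good hN hv⟩
    · intro A hA
      obtain ⟨-, hg⟩ := Finset.mem_filter.mp hA
      obtain ⟨hN, hv⟩ := good_nucleus hg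
      rw [Finset.filter_filter]
      exact Finset.mem_filter.mpr ⟨Finset.mem_univ _, hN, hv⟩
    · intro p hp
      rw [Finset.filter_filter] at hp
      obtain ⟨-, hN, hv⟩ := Finset.mem_filter.mp hp
      exact Prod.ext (nucleus_set_eq hN hv).symm rfl
    · intro A hA
      rfl
    · intro p hp
      rfl
  rw [hbij, g_eq (Finset.univ : Finset E).card ends Finset.univ v le_rfl, if_neg huniv]


end Stmt1
end

section
/- Let F be a function from graphs to an abelian group that is additive over connected components, i.e., F(G) = Σ_{C ∈ π₀(G)} F(C) for every graph G. Then for every finite graph G: Σ_{A ⊆ E(G)} (-1)^{|A|} F(A) = Σ_{N ∈ nuc(G)} (-1)^{|E(N)|} F(N), where on the left each edge set A is viewed as a spanning subgraph with vertex set V(G). -/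
open scoped Classical

namespace Stmt2

variable {V E : Type} [Fintype V] [Fintype E] [DecidableEq V] [DecidableEq E]

/-- Adjacency of two vertices via an edge in the edge set `A`. -/
def Adj (ends : E → Sym2 V) (A : Finset E) (u v : V) : Prop :=
  ∃ e ∈ A, ends e = s(u, v)

/-- Reachability (the equivalence relation generated by adjacency). -/
def Reach (ends : E → Sym2 V) (A : Finset E) : V → V → Prop :=
  Relation.EqvGen (Adj ends A)

/-- A subgraph: every edge of `A` has both endpoints in `S`. -/
def IsSubgraph (ends : E → Sym2 V) (S : Finset V) (A : Finset E) : Prop :=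
  ∀ e ∈ A, ∀ v ∈ ends e, v ∈ S

/-- A nucleus: a connected non-empty subgraph `(S, A)` whose vertex set `S`
is a vertex cover of the whole graph. -/
def IsNucleus (ends : E → Sym2 V) (S : Finset V) (A : Finset E) : Prop :=
  S.Nonempty ∧ IsSubgraph ends S A ∧
    (∀ u ∈ S, ∀ v ∈ S, Reach ends A u v) ∧
    (∀ e : E, ∃ v ∈ ends e, v ∈ S)

/-- The vertex set of the connected component of `v` in the subgraph `(S, A)`. -/
noncomputable def compVerts (ends : E → Sym2 V) (S : Finset V) (A : Finset E) (v : V) :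
    Finset V :=
  S.filter (fun u => Reach ends A v u)

/-- The edge set of the connected component of `v` in the subgraph with edges `A`. -/
noncomputable def compEdges (ends : E → Sym2 V) (A : Finset E) (v : V) : Finset E :=
  A.filter (fun e => ∀ u ∈ ends e, Reach ends A v u)

/-! ### Auxiliary lemmas -/

lemma ends_exists (ends : E → Sym2 V) (e : E) : ∃ a b, ends e = s(a, b) :=
  Sym2.ind (fun a b => ⟨a, b, rfl⟩) (ends e)

lemma reach_mono {ends : E → Sym2 V} {A B : Finset E} (h : A ⊆ B) {x y : V}
    (hxy : Reach ends A x y) : Reach ends B x y :=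
  Relation.EqvGen.mono (fun u v ⟨e, he, hev⟩ => ⟨e, h he, hev⟩) _ _ hxy

/-- A cluster: a connected non-empty subgraph. -/
def Cluster (ends : E → Sym2 V) (S : Finset V) (B : Finset E) : Prop :=
  S.Nonempty ∧ IsSubgraph ends S B ∧ ∀ u ∈ S, ∀ w ∈ S, Reach ends B u w

lemma reach_mem_iff {ends : E → Sym2 V} {S : Finset V} {A B : Finset E}
    (hsub : IsSubgraph ends S B)
    (haway : ∀ e ∈ A, e ∉ B → ∀ u ∈ ends e, u ∉ S)
    {x y : V} (h : Reach ends A x y) : (x ∈ S ↔ y ∈ S) := by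
  induction h with
  | rel x y hxy =>
    obtain ⟨e, heA, hev⟩ := hxy
    by_cases heB : e ∈ B
    · constructor
      · intro _; exact hsub e heB y (by rw [hev]; simp)
      · intro _; exact hsub e heB x (by rw [hev]; simp)
    · have hx := haway e heA heB x (by rw [hev]; simp)
      have hy := haway e heA heB y (by rw [hev]; simp)
      simp [hx, hy]
  | refl => exact Iff.rfl
  | symm _ _ _ ih => exact ih.symm
  | trans _ _ _ _ _ ih1 ih2 => exact ih1.trans ih2

lemma reach_compEdges {ends : E → Sym2 V} {A : Finset E} {v x y : V}
    (h : Reach ends A x y) :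
    (Reach ends A v x → Reach ends (compEdges ends A v) x y) ∧
    (Reach ends A v y → Reach ends (compEdges ends A v) y x) := by
  induction h with
  | rel x y hxy =>
    obtain ⟨e, heA, hev⟩ := hxy
    have hmem : ∀ u ∈ ends e, u = x ∨ u = y := by
      rw [hev]; intro u hu; exact Sym2.mem_iff.mp hu
    have key : Reach ends A v x → Reach ends (compEdges ends A v) x y := by
      intro hvx
      have hvy : Reach ends A v y :=
        Relation.EqvGen.trans _ _ _ hvx (Relation.EqvGen.rel _ _ ⟨e, heA, hev⟩)
      have heB : e ∈ compEdges ends A v := by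
        simp only [compEdges, Finset.mem_filter]
        exact ⟨heA, fun u hu => (hmem u hu).elim (fun h => h ▸ hvx) (fun h => h ▸ hvy)⟩
      exact Relation.EqvGen.rel _ _ ⟨e, heB, hev⟩
    have key' : Reach ends A v y → Reach ends (compEdges ends A v) y x := by
      intro hvy
      have hvx : Reach ends A v x :=
        Relation.EqvGen.trans _ _ _ hvy
          (Relation.EqvGen.symm _ _ (Relation.EqvGen.rel _ _ ⟨e, heA, hev⟩))
      exact Relation.EqvGen.symm _ _ (key hvx)
    exact ⟨key, key'⟩
  | refl x => exact ⟨fun _ => Relation.EqvGen.refl _, fun _ => Relation.EqvGen.refl _⟩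
  | symm x y _ ih => exact ⟨ih.2, ih.1⟩
  | trans x y z hxy hyz ih1 ih2 =>
    constructor
    · intro hvx
      have hvy : Reach ends A v y := Relation.EqvGen.trans _ _ _ hvx hxy
      exact Relation.EqvGen.trans _ _ _ (ih1.1 hvx) (ih2.1 hvy)
    · intro hvz
      have hvy : Reach ends A v y :=
        Relation.EqvGen.trans _ _ _ hvz (Relation.EqvGen.symm _ _ hyz)
      exact Relation.EqvGen.trans _ _ _ (ih2.2 hvz) (ih1.2 hvy)

/-- Characterization of membership in the component image. -/
lemma mem_comps_iff (ends : E → Sym2 V) (A : Finset E) (p : Finset V × Finset E) :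
    p ∈ (Finset.univ : Finset V).image
        (fun v => (compVerts ends Finset.univ A v, compEdges ends A v))
    ↔ Cluster ends p.1 p.2 ∧ p.2 ⊆ A ∧
        ∀ e ∈ A, e ∉ p.2 → ∀ u ∈ ends e, u ∉ p.1 := by
  constructor
  · rintro hp
    rw [Finset.mem_image] at hp
    obtain ⟨v, -, hv⟩ := hp
    subst hv
    have hmemS : ∀ u, u ∈ compVerts ends Finset.univ A v ↔ Reach ends A v u := by
      intro u; simp [compVerts]
    refine ⟨⟨⟨v, (hmemS v).mpr (Relation.EqvGen.refl _)⟩, ?_, ?_⟩, Finset.filter_subset _ _, ?_⟩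
    · intro e he u hu
      rw [hmemS]
      simp only [compEdges, Finset.mem_filter] at he
      exact he.2 u hu
    · intro u hu w hw
      rw [hmemS] at hu hw
      have huw : Reach ends A u w :=
        Relation.EqvGen.trans _ _ _ (Relation.EqvGen.symm _ _ hu) hw
      exact (reach_compEdges huw).1 hu
    · intro e heA heB u hu
      rw [hmemS]
      intro hvu
      apply heB
      simp only [compEdges, Finset.mem_filter]
      refine ⟨heA, fun w hw => ?_⟩
      obtain ⟨a, b, hab⟩ := ends_exists ends e
      have hadj : Reach ends A a b := Relation.EqvGen.rel _ _ ⟨e, heA, hab⟩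
      rw [hab, Sym2.mem_iff] at hu hw
      rcases hu with rfl | rfl <;> rcases hw with rfl | rfl
      · exact hvu
      · exact Relation.EqvGen.trans _ _ _ hvu hadj
      · exact Relation.EqvGen.trans _ _ _ hvu (Relation.EqvGen.symm _ _ hadj)
      · exact hvu
  · rintro ⟨⟨⟨v, hv⟩, hsub, hconn⟩, hBA, haway⟩
    rw [Finset.mem_image]
    refine ⟨v, Finset.mem_univ v, ?_⟩
    have hvert : compVerts ends Finset.univ A v = p.1 := by
      ext u
      simp only [compVerts, Finset.mem_filter, Finset.mem_univ, true_and]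
      constructor
      · intro hr
        exact (reach_mem_iff hsub haway hr).mp hv
      · intro hu
        exact reach_mono hBA (hconn v hv u hu)
    have hedge : compEdges ends A v = p.2 := by
      ext e
      simp only [compEdges, Finset.mem_filter]
      constructor
      · rintro ⟨heA, hall⟩
        by_contra heB
        obtain ⟨a, b, hab⟩ := ends_exists ends e
        have ha : a ∈ ends e := by rw [hab]; simp
        have := haway e heA heB a ha
        exact this ((reach_mem_iff hsub haway (hall a ha)).mp hv)
      · intro heB
        refine ⟨hBA heB, fun u hu => ?_⟩
        exact reach_mono hBA (hconn v hv u (hsub e heB u hu))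
    rw [Prod.ext_iff]
    exact ⟨hvert, hedge⟩

/-- If `F` (valued in an abelian group) is additive over connected components of
subgraphs, then the alternating sum of `F` over all spanning edge subsets equals the
alternating sum of `F` over all nuclei. -/
theorem alternating_sum_eq_nuclei_sum (ends : E → Sym2 V) {M : Type} [AddCommGroup M]
    (F : Finset V × Finset E → M)
    (hadd : ∀ S A, IsSubgraph ends S A →
      F (S, A) = ∑ p ∈ S.image (fun v => (compVerts ends S A v, compEdges ends A v)), F p) :
    ∑ A ∈ (Finset.univ : Finset E).powerset, (-1 : ℤ) ^ A.card • F (Finset.univ, A)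
      = ∑ p ∈ (Finset.univ : Finset (Finset V × Finset E)).filter
            (fun p => IsNucleus ends p.1 p.2),
          (-1 : ℤ) ^ p.2.card • F (p.1, p.2) := by
  classical
  -- rewrite LHS via additivity
  have step1 : ∀ A : Finset E,
      (-1 : ℤ) ^ A.card • F (Finset.univ, A)
        = ∑ p ∈ (Finset.univ : Finset (Finset V × Finset E)),
            if p ∈ (Finset.univ : Finset V).image
                (fun v => (compVerts ends Finset.univ A v, compEdges ends A v))
            then (-1 : ℤ) ^ A.card • F p else 0 := by
    intro A
    rw [Finset.sum_ite_mem, Finset.univ_inter,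
      hadd Finset.univ A (fun e _ v _ => Finset.mem_univ v), Finset.smul_sum]
  calc
    ∑ A ∈ (Finset.univ : Finset E).powerset, (-1 : ℤ) ^ A.card • F (Finset.univ, A)
        = ∑ A ∈ (Finset.univ : Finset E).powerset,
            ∑ p ∈ (Finset.univ : Finset (Finset V × Finset E)),
              if p ∈ (Finset.univ : Finset V).image
                  (fun v => (compVerts ends Finset.univ A v, compEdges ends A v))
              then (-1 : ℤ) ^ A.card • F p else 0 :=
          Finset.sum_congr rfl fun A _ => step1 A
    _ = ∑ p ∈ (Finset.univ : Finset (Finset V × Finset E)),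
          ∑ A ∈ (Finset.univ : Finset E).powerset,
            if p ∈ (Finset.univ : Finset V).image
                (fun v => (compVerts ends Finset.univ A v, compEdges ends A v))
            then (-1 : ℤ) ^ A.card • F p else 0 := Finset.sum_comm
    _ = ∑ p ∈ (Finset.univ : Finset (Finset V × Finset E)),
          if IsNucleus ends p.1 p.2 then (-1 : ℤ) ^ p.2.card • F (p.1, p.2) else 0 := by
        refine Finset.sum_congr rfl fun p _ => ?_
        obtain ⟨S, B⟩ := p
        simp only
        -- rewrite the membership condition
        have hcond : ∀ A : Finset E,
            ((S, B) ∈ (Finset.univ : Finset V).image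
                (fun v => (compVerts ends Finset.univ A v, compEdges ends A v)))
            ↔ Cluster ends S B ∧ B ⊆ A ∧
                ∀ e ∈ A, e ∉ B → ∀ u ∈ ends e, u ∉ S := fun A => mem_comps_iff ends A (S, B)
        by_cases hcl : Cluster ends S B
        · -- set of "away" edges
          set D : Finset E := Finset.univ.filter (fun e => ∀ u ∈ ends e, u ∉ S) with hD
          have hBD : Disjoint B D := by
            rw [Finset.disjoint_left]
            intro e heB heD
            obtain ⟨a, b, hab⟩ := ends_exists ends e
            have ha : a ∈ ends e := by rw [hab]; simp
            exact (Finset.mem_filter.mp heD).2 a ha (hcl.2.1 e heB a ha)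
          have hset : ((Finset.univ : Finset E).powerset.filter
              (fun A => B ⊆ A ∧ ∀ e ∈ A, e ∉ B → ∀ u ∈ ends e, u ∉ S))
              = D.powerset.image (fun C => B ∪ C) := by
            ext A
            simp only [Finset.mem_filter, Finset.mem_powerset, Finset.mem_image]
            constructor
            · rintro ⟨-, hBA, haway⟩
              refine ⟨A \ B, ?_, ?_⟩
              · intro e he
                rw [Finset.mem_sdiff] at he
                rw [hD, Finset.mem_filter]
                exact ⟨Finset.mem_univ e, haway e he.1 he.2⟩
              · rw [Finset.union_sdiff_of_subset hBA]
            · rintro ⟨C, hC, rfl⟩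
              refine ⟨Finset.subset_univ _, Finset.subset_union_left, ?_⟩
              intro e he heB u hu
              rcases Finset.mem_union.mp he with h | h
              · exact absurd h heB
              · exact (Finset.mem_filter.mp (hC h)).2 u hu
          have hsum : ∑ A ∈ (Finset.univ : Finset E).powerset,
              (if ((S, B) ∈ (Finset.univ : Finset V).image
                  (fun v => (compVerts ends Finset.univ A v, compEdges ends A v)))
               then (-1 : ℤ) ^ A.card • F (S, B) else 0)
              = ∑ C ∈ D.powerset, (-1 : ℤ) ^ (B ∪ C).card • F (S, B) := by
            rw [← Finset.sum_filter]
            have : ((Finset.univ : Finset E).powerset.filter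
                (fun A => (S, B) ∈ (Finset.univ : Finset V).image
                  (fun v => (compVerts ends Finset.univ A v, compEdges ends A v))))
                = D.powerset.image (fun C => B ∪ C) := by
              rw [← hset]
              apply Finset.filter_congr
              intro A _
              rw [hcond A]
              simp [hcl]
            rw [this]
            refine Finset.sum_image ?_
            intro C1 hC1 C2 hC2 hEq
            rw [Finset.mem_coe, Finset.mem_powerset] at hC1 hC2
            have h1 : C1 = (B ∪ C1) \ B := by
              rw [Finset.union_sdiff_left, Finset.sdiff_eq_self_of_disjoint
                (hBD.symm.mono_left hC1)]
            have h2 : C2 = (B ∪ C2) \ B := by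
              rw [Finset.union_sdiff_left, Finset.sdiff_eq_self_of_disjoint
                (hBD.symm.mono_left hC2)]
            rw [h1, h2, show B ∪ C1 = B ∪ C2 from hEq]
          rw [hsum]
          have hcard : ∀ C ∈ D.powerset, (-1 : ℤ) ^ (B ∪ C).card • F (S, B)
              = ((-1 : ℤ) ^ B.card * (-1 : ℤ) ^ C.card) • F (S, B) := by
            intro C hC
            rw [Finset.mem_powerset] at hC
            rw [Finset.card_union_of_disjoint (hBD.mono_right hC), pow_add]
          rw [Finset.sum_congr rfl hcard]
          have : ∑ C ∈ D.powerset, ((-1 : ℤ) ^ B.card * (-1 : ℤ) ^ C.card) • F (S, B)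
              = ((-1 : ℤ) ^ B.card * ∑ C ∈ D.powerset, (-1 : ℤ) ^ C.card) • F (S, B) := by
            rw [← Finset.sum_smul, ← Finset.mul_sum]
          rw [this, Finset.sum_powerset_neg_one_pow_card]
          by_cases hcover : ∀ e : E, ∃ u ∈ ends e, u ∈ S
          · have hDempty : D = ∅ := by
              rw [hD, Finset.filter_eq_empty_iff]
              intro e _
              push_neg
              exact hcover e
            have hnuc : IsNucleus ends S B := ⟨hcl.1, hcl.2.1, hcl.2.2, hcover⟩
            rw [if_pos hDempty, if_pos hnuc, mul_one]
          · have hDne : D ≠ ∅ := by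
              rw [hD, ← Finset.nonempty_iff_ne_empty]
              push_neg at hcover
              obtain ⟨e, he⟩ := hcover
              exact ⟨e, Finset.mem_filter.mpr ⟨Finset.mem_univ e, he⟩⟩
            have hnnuc : ¬ IsNucleus ends S B := fun h => hcover h.2.2.2
            rw [if_neg hDne, if_neg hnnuc, mul_zero, zero_smul]
        · have hnnuc : ¬ IsNucleus ends S B := fun h => hcl ⟨h.1, h.2.1, h.2.2.1⟩
          rw [if_neg hnnuc]
          apply Finset.sum_eq_zero
          intro A _
          rw [if_neg]
          rw [hcond A]
          tauto
    _ = ∑ p ∈ (Finset.univ : Finset (Finset V × Finset E)).filter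
            (fun p => IsNucleus ends p.1 p.2),
          (-1 : ℤ) ^ p.2.card • F (p.1, p.2) := by
        rw [Finset.sum_filter]

end Stmt2
end

section
/- For every finite graph G with at least one edge, Crapo's beta invariant satisfies β(G) = -(-1)^{rk(G)} · Σ_{N ∈ nuc(G)} (-1)^{|E(N)|}. -/
open scoped Classical

namespace Stmt3

variable {V E : Type} [Fintype V] [Fintype E] [DecidableEq V] [DecidableEq E]

/-- Adjacency of two vertices via an edge in the edge set `A`. -/
def Adj (ends : E → Sym2 V) (A : Finset E) (u v : V) : Prop :=
  ∃ e ∈ A, ends e = s(u, v)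

/-- Reachability (the equivalence relation generated by adjacency). -/
def Reach (ends : E → Sym2 V) (A : Finset E) : V → V → Prop :=
  Relation.EqvGen (Adj ends A)

/-- The number of connected components of the spanning subgraph `(V, A)`. -/
noncomputable def ncomp (ends : E → Sym2 V) (A : Finset E) : ℕ :=
  Nat.card (Quotient (Relation.EqvGen.setoid (Adj ends A)))

/-- The rank of the spanning subgraph `(V, A)`: `|V| - |π₀(A)|`. -/
noncomputable def rk (ends : E → Sym2 V) (A : Finset E) : ℕ :=
  Fintype.card V - ncomp ends A

/-- Crapo's beta invariant of the spanning subgraph `(V, A)`: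
`β(A) = (-1)^{rk(A)} Σ_{B ⊆ A} (-1)^{|B|} rk(B)`. -/
noncomputable def beta (ends : E → Sym2 V) (A : Finset E) : ℤ :=
  (-1) ^ rk ends A * ∑ B ∈ A.powerset, (-1 : ℤ) ^ B.card * (rk ends B : ℤ)

/-- A nucleus: a connected non-empty subgraph `(S, A)` whose vertex set `S`
is a vertex cover of the whole graph. -/
def IsNucleus (ends : E → Sym2 V) (S : Finset V) (A : Finset E) : Prop :=
  S.Nonempty ∧ (∀ e ∈ A, ∀ v ∈ ends e, v ∈ S) ∧
    (∀ u ∈ S, ∀ v ∈ S, Reach ends A u v) ∧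
    (∀ e : E, ∃ v ∈ ends e, v ∈ S)

set_option linter.unusedSectionVars false
set_option maxHeartbeats 1000000

open Finset

variable (ends : E → Sym2 V)

lemma reach_refl (A : Finset E) (v : V) : Reach ends A v v := Relation.EqvGen.refl v
lemma reach_symm {A : Finset E} {u v : V} (h : Reach ends A u v) : Reach ends A v u :=
  Relation.EqvGen.symm _ _ h
lemma reach_trans {A : Finset E} {u v w : V} (h : Reach ends A u v) (h' : Reach ends A v w) :
    Reach ends A u w := Relation.EqvGen.trans _ _ _ h h'

lemma reach_mono {A A' : Finset E} (h : A ⊆ A') {u v : V} (hr : Reach ends A u v) :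
    Reach ends A' u v :=
  Relation.EqvGen.mono (fun a b (⟨e, he, hh⟩ : Adj ends A a b) => (⟨e, h he, hh⟩ : Adj ends A' a b)) _ _ hr

noncomputable def cls (A : Finset E) (v : V) : Finset V :=
  univ.filter (Reach ends A v)

def IsClass (S : Finset V) (A : Finset E) : Prop := ∃ v, S = cls ends A v

lemma mem_cls {A : Finset E} {v u : V} : u ∈ cls ends A v ↔ Reach ends A v u := by
  simp [cls]

lemma cls_eq_iff {A : Finset E} {v w : V} :
    cls ends A v = cls ends A w ↔ Reach ends A v w := by
  constructor
  · intro h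
    have : v ∈ cls ends A w := h ▸ (mem_cls ends).2 (reach_refl ends A v)
    exact reach_symm ends ((mem_cls ends).1 this)
  · intro h
    ext u
    simp only [mem_cls]
    exact ⟨fun h' => reach_trans ends (reach_symm ends h) h',
      fun h' => reach_trans ends h h'⟩

lemma ncomp_eq_card (A : Finset E) :
    ncomp ends A = ((univ : Finset (Finset V)).filter (fun S => IsClass ends S A)).card := by
  classical
  set s := Relation.EqvGen.setoid (Adj ends A) with hs
  have hF : ∀ (a b : V), s.r a b → cls ends A a = cls ends A b :=
    fun a b h => (cls_eq_iff ends).2 h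
  let F : Quotient s → Finset V := Quotient.lift (cls ends A) hF
  have Finj : Function.Injective F := by
    intro q q'
    induction q using Quotient.ind
    induction q' using Quotient.ind
    intro h
    exact Quotient.sound ((cls_eq_iff ends).1 h)
  have himg : (univ : Finset (Quotient s)).image F
      = (univ : Finset (Finset V)).filter (fun S => IsClass ends S A) := by
    ext S
    simp only [Finset.mem_image, Finset.mem_filter, Finset.mem_univ, true_and]
    constructor
    · rintro ⟨q, rfl⟩
      induction q using Quotient.ind with
      | _ v => exact ⟨v, rfl⟩
    · rintro ⟨v, rfl⟩
      exact ⟨⟦v⟧, rfl⟩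
  have : ncomp ends A = Fintype.card (Quotient s) := by
    rw [ncomp, Nat.card_eq_fintype_card]
  rw [this, ← himg, Finset.card_image_of_injective _ Finj, Finset.card_univ]

def inS (S : Finset V) (e : E) : Prop := ∀ v ∈ ends e, v ∈ S
def awayS (S : Finset V) (e : E) : Prop := ∀ v ∈ ends e, v ∉ S

noncomputable def TS (S : Finset V) : Finset E := univ.filter (inS ends S)
noncomputable def WS (S : Finset V) : Finset E := univ.filter (awayS ends S)

def ConnOn (S : Finset V) (A : Finset E) : Prop := ∀ u ∈ S, ∀ v ∈ S, Reach ends A u v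

lemma sym2_rep (z : Sym2 V) : ∃ a b, z = s(a, b) := by
  induction z using Sym2.ind with
  | _ a b => exact ⟨a, b, rfl⟩

lemma reach_confined {S : Finset V} {A : Finset E}
    (hcf : ∀ e ∈ A, (∃ v ∈ ends e, v ∈ S) → inS ends S e) :
    ∀ u v : V, Reach ends A u v →
      ((u ∈ S → v ∈ S ∧ Reach ends (A.filter (inS ends S)) u v) ∧
       (v ∈ S → u ∈ S ∧ Reach ends (A.filter (inS ends S)) v u)) := by
  intro u v h
  induction h with
  | rel x y hxy =>
      obtain ⟨e, he, hee⟩ := hxy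
      have hx : x ∈ ends e := by rw [hee]; exact Sym2.mem_mk_left x y
      have hy : y ∈ ends e := by rw [hee]; exact Sym2.mem_mk_right x y
      constructor
      · intro hxS
        have hall : inS ends S e := hcf e he ⟨x, hx, hxS⟩
        exact ⟨hall y hy,
          Relation.EqvGen.rel _ _ ⟨e, Finset.mem_filter.2 ⟨he, hall⟩, hee⟩⟩
      · intro hyS
        have hall : inS ends S e := hcf e he ⟨y, hy, hyS⟩
        exact ⟨hall x hx, Relation.EqvGen.symm _ _
          (Relation.EqvGen.rel _ _ ⟨e, Finset.mem_filter.2 ⟨he, hall⟩, hee⟩)⟩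
  | refl x =>
      exact ⟨fun h => ⟨h, Relation.EqvGen.refl x⟩, fun h => ⟨h, Relation.EqvGen.refl x⟩⟩
  | symm x y _ ih => exact ⟨ih.2, ih.1⟩
  | trans x y z _ _ ih1 ih2 =>
      constructor
      · intro hx
        obtain ⟨hyS, r1⟩ := ih1.1 hx
        obtain ⟨hzS, r2⟩ := ih2.1 hyS
        exact ⟨hzS, reach_trans ends r1 r2⟩
      · intro hz
        obtain ⟨hyS, r2⟩ := ih2.2 hz
        obtain ⟨hxS, r1⟩ := ih1.2 hyS
        exact ⟨hxS, reach_trans ends r2 r1⟩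

lemma hcf_of_subset {S : Finset V} {A : Finset E}
    (hsub : A ⊆ TS ends S ∪ WS ends S) :
    ∀ e ∈ A, (∃ v ∈ ends e, v ∈ S) → inS ends S e := by
  intro e he ⟨x, hx, hxS⟩
  rcases Finset.mem_union.1 (hsub he) with h | h
  · exact (Finset.mem_filter.1 h).2
  · exact absurd hxS ((Finset.mem_filter.1 h).2 x hx)

lemma isClass_iff {S : Finset V} {A : Finset E} (hS : S.Nonempty) :
    IsClass ends S A ↔
      (A ⊆ TS ends S ∪ WS ends S ∧ ConnOn ends S (A.filter (inS ends S))) := by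
  constructor
  · rintro ⟨v, rfl⟩
    set S := cls ends A v with hSdef
    have hcf : ∀ e ∈ A, (∃ x ∈ ends e, x ∈ S) → inS ends S e := by
      rintro e he ⟨x, hx, hxS⟩
      obtain ⟨a, b, hab⟩ := sym2_rep (ends e)
      have hAB : Reach ends A a b := Relation.EqvGen.rel _ _ ⟨e, he, hab⟩
      have hmem : ∀ w, w ∈ ends e → w = a ∨ w = b := by
        intro w hw; rw [hab] at hw; exact Sym2.mem_iff.1 hw
      have ha : a ∈ S ∨ b ∈ S := by
        rcases hmem x hx with rfl | rfl
        · exact Or.inl hxS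
        · exact Or.inr hxS
      have haS : a ∈ S ∧ b ∈ S := by
        rcases ha with h | h
        · exact ⟨h, (mem_cls ends).2 (reach_trans ends ((mem_cls ends).1 h) hAB)⟩
        · exact ⟨(mem_cls ends).2
            (reach_trans ends ((mem_cls ends).1 h) (reach_symm ends hAB)), h⟩
      intro w hw
      rcases hmem w hw with rfl | rfl
      · exact haS.1
      · exact haS.2
    constructor
    · intro e he
      by_cases hx : ∃ x ∈ ends e, x ∈ S
      · exact Finset.mem_union_left _ (Finset.mem_filter.2 ⟨Finset.mem_univ _, hcf e he hx⟩)
      · push_neg at hx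
        exact Finset.mem_union_right _ (Finset.mem_filter.2 ⟨Finset.mem_univ _, hx⟩)
    · intro x hxS y hyS
      have hxy : Reach ends A x y :=
        reach_trans ends (reach_symm ends ((mem_cls ends).1 hxS)) ((mem_cls ends).1 hyS)
      exact ((reach_confined ends hcf x y hxy).1 hxS).2
  · rintro ⟨hsub, hconn⟩
    have hcf := hcf_of_subset ends hsub
    obtain ⟨v, hv⟩ := hS
    refine ⟨v, ?_⟩
    ext u
    rw [mem_cls]
    constructor
    · intro hu
      exact reach_mono ends (Finset.filter_subset _ _) (hconn v hv u hu)
    · intro h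
      exact ((reach_confined ends hcf v u h).1 hv).1

lemma isNucleus_iff {S : Finset V} {A : Finset E} :
    IsNucleus ends S A ↔
      (S.Nonempty ∧ A ⊆ TS ends S ∧ ConnOn ends S A ∧ WS ends S = ∅) := by
  have h2 : (∀ e ∈ A, ∀ v ∈ ends e, v ∈ S) ↔ A ⊆ TS ends S := by
    constructor
    · intro h e he
      exact Finset.mem_filter.2 ⟨Finset.mem_univ _, h e he⟩
    · intro h e he
      exact (Finset.mem_filter.1 (h he)).2
  have h4 : (∀ e : E, ∃ v ∈ ends e, v ∈ S) ↔ WS ends S = ∅ := by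
    rw [Finset.eq_empty_iff_forall_notMem]
    constructor
    · intro h e he
      obtain ⟨v, hv, hvS⟩ := h e
      exact (Finset.mem_filter.1 he).2 v hv hvS
    · intro h e
      by_contra hc
      push_neg at hc
      exact h e (Finset.mem_filter.2 ⟨Finset.mem_univ _, hc⟩)
  rw [IsNucleus]
  constructor
  · rintro ⟨a, b, c, d⟩
    exact ⟨a, h2.1 b, c, h4.1 d⟩
  · rintro ⟨a, b, c, d⟩
    exact ⟨a, h2.2 b, c, h4.2 d⟩

lemma TS_disj_WS (S : Finset V) : Disjoint (TS ends S) (WS ends S) := by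
  rw [Finset.disjoint_left]
  intro e heT heW
  obtain ⟨a, b, hab⟩ := sym2_rep (ends e)
  have haa : a ∈ ends e := by rw [hab]; exact Sym2.mem_mk_left a b
  exact (Finset.mem_filter.1 heW).2 a haa ((Finset.mem_filter.1 heT).2 a haa)

lemma filter_inS_eq_inter (S : Finset V) (A : Finset E) :
    A.filter (inS ends S) = A ∩ TS ends S := by
  ext e
  simp [TS, Finset.mem_filter, Finset.mem_inter]

lemma key (S : Finset V) :
    ∑ A ∈ (univ : Finset (Finset E)), (if IsClass ends S A then (-1 : ℤ) ^ A.card else 0)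
      = ∑ A ∈ (univ : Finset (Finset E)),
          (if IsNucleus ends S A then (-1 : ℤ) ^ A.card else 0) := by
  by_cases hS : S.Nonempty
  · have hTW := TS_disj_WS ends S
    have lhs_eq : ∑ A ∈ (univ : Finset (Finset E)),
        (if IsClass ends S A then (-1 : ℤ) ^ A.card else 0)
        = (∑ B ∈ (TS ends S).powerset.filter (fun B => ConnOn ends S B),
            (-1 : ℤ) ^ B.card) * ∑ C ∈ (WS ends S).powerset, (-1 : ℤ) ^ C.card := by
      rw [← Finset.sum_filter]
      have step1 : ∑ A ∈ (univ : Finset (Finset E)).filter (fun A => IsClass ends S A),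
          (-1 : ℤ) ^ A.card
          = ∑ q ∈ ((TS ends S).powerset.filter (fun B => ConnOn ends S B)) ×ˢ
              (WS ends S).powerset, ((-1 : ℤ) ^ q.1.card * (-1 : ℤ) ^ q.2.card) := by
        refine Finset.sum_nbij' (fun A => (A ∩ TS ends S, A ∩ WS ends S))
          (fun q => q.1 ∪ q.2) ?_ ?_ ?_ ?_ ?_
        · intro A hA
          obtain ⟨hsub, hconn⟩ := (isClass_iff ends hS).1 (Finset.mem_filter.1 hA).2
          rw [filter_inS_eq_inter] at hconn
          exact Finset.mem_product.2 ⟨Finset.mem_filter.2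
            ⟨Finset.mem_powerset.2 Finset.inter_subset_right, hconn⟩,
            Finset.mem_powerset.2 Finset.inter_subset_right⟩
        · rintro ⟨B, C⟩ hq
          simp only [Finset.mem_product] at hq
          obtain ⟨hB, hC⟩ := hq
          have hBsub := Finset.mem_powerset.1 (Finset.mem_filter.1 hB).1
          have hconn := (Finset.mem_filter.1 hB).2
          have hCsub := Finset.mem_powerset.1 hC
          have hBC : (B ∪ C) ∩ TS ends S = B := by
            rw [Finset.union_inter_distrib_right, Finset.inter_eq_left.2 hBsub,
              Finset.disjoint_iff_inter_eq_empty.1 (hTW.symm.mono_left hCsub), Finset.union_empty]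
          refine Finset.mem_filter.2 ⟨Finset.mem_univ _, (isClass_iff ends hS).2
            ⟨Finset.union_subset_union hBsub hCsub, ?_⟩⟩
          rw [filter_inS_eq_inter, hBC]
          exact hconn
        · intro A hA
          obtain ⟨hsub, -⟩ := (isClass_iff ends hS).1 (Finset.mem_filter.1 hA).2
          show (A ∩ TS ends S) ∪ (A ∩ WS ends S) = A
          rw [← Finset.inter_union_distrib_left, Finset.inter_eq_left.2 hsub]
        · rintro ⟨B, C⟩ hq
          simp only [Finset.mem_product] at hq
          obtain ⟨hB, hC⟩ := hq
          have hBsub := Finset.mem_powerset.1 (Finset.mem_filter.1 hB).1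
          have hCsub := Finset.mem_powerset.1 hC
          have hBC : (B ∪ C) ∩ TS ends S = B := by
            rw [Finset.union_inter_distrib_right, Finset.inter_eq_left.2 hBsub,
              Finset.disjoint_iff_inter_eq_empty.1 (hTW.symm.mono_left hCsub), Finset.union_empty]
          have hBC' : (B ∪ C) ∩ WS ends S = C := by
            rw [Finset.union_inter_distrib_right, Finset.inter_eq_left.2 hCsub,
              Finset.disjoint_iff_inter_eq_empty.1 (hTW.mono_left hBsub), Finset.empty_union]
          show ((B ∪ C) ∩ TS ends S, (B ∪ C) ∩ WS ends S) = (B, C)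
          rw [hBC, hBC']
        · intro A hA
          obtain ⟨hsub, -⟩ := (isClass_iff ends hS).1 (Finset.mem_filter.1 hA).2
          have hdecomp : (A ∩ TS ends S) ∪ (A ∩ WS ends S) = A := by
            rw [← Finset.inter_union_distrib_left, Finset.inter_eq_left.2 hsub]
          have hd : Disjoint (A ∩ TS ends S) (A ∩ WS ends S) :=
            hTW.mono Finset.inter_subset_right Finset.inter_subset_right
          rw [← pow_add, ← Finset.card_union_of_disjoint hd, hdecomp]
      rw [step1, Finset.sum_product]
      dsimp only
      exact (Finset.sum_mul_sum _ _ _ _).symm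
    rw [lhs_eq]
    by_cases hW : WS ends S = ∅
    · have h1 : ∑ C ∈ (WS ends S).powerset, (-1 : ℤ) ^ C.card = 1 := by
        rw [hW]
        simp
      rw [h1, mul_one, ← Finset.sum_filter]
      apply Finset.sum_congr
      · ext A
        simp only [Finset.mem_filter, Finset.mem_univ, true_and, Finset.mem_powerset,
          isNucleus_iff ends, hS, hW, true_and, and_true]
      · intros; rfl
    · have h1 : ∑ C ∈ (WS ends S).powerset, (-1 : ℤ) ^ C.card = 0 :=
        Finset.sum_powerset_neg_one_pow_card_of_nonempty
          (Finset.nonempty_iff_ne_empty.2 hW)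
      have h2 : ∀ A : Finset E, ¬ IsNucleus ends S A := by
        intro A hA
        exact hW ((isNucleus_iff ends).1 hA).2.2.2
      simp only [h1, mul_zero, h2, if_false, Finset.sum_const_zero]
  · have h0 : ∀ A : Finset E, ¬ IsClass ends S A := by
      rintro A ⟨v, rfl⟩
      exact hS ⟨v, (mem_cls ends).2 (reach_refl ends A v)⟩
    have h1 : ∀ A : Finset E, ¬ IsNucleus ends S A := fun A h => hS h.1
    simp only [h0, h1, if_false]

lemma ncomp_le (A : Finset E) : ncomp ends A ≤ Fintype.card V := by
  rw [ncomp, ← Nat.card_eq_fintype_card]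
  refine Nat.card_le_card_of_surjective (Quotient.mk _) ?_
  intro q
  induction q using Quotient.ind with
  | _ v => exact ⟨v, rfl⟩

/-- For every graph with at least one edge, Crapo's beta invariant equals
`-(-1)^{rk(G)}` times the sum over all nuclei of `(-1)^{|E(N)|}`. -/
theorem beta_eq_nuclei_sum (ends : E → Sym2 V) (hE : Nonempty E) :
    beta ends Finset.univ
      = -(-1 : ℤ) ^ rk ends Finset.univ *
          ∑ p ∈ (Finset.univ : Finset (Finset V × Finset E)).filter
              (fun p => IsNucleus ends p.1 p.2),
            (-1 : ℤ) ^ p.2.card := by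
  classical
  have hrk : ∀ B : Finset E, (rk ends B : ℤ) = (Fintype.card V : ℤ) - (ncomp ends B : ℤ) := by
    intro B
    rw [rk, Nat.cast_sub (ncomp_le ends B)]
  have h0 : ∑ B ∈ (Finset.univ : Finset E).powerset, (-1 : ℤ) ^ B.card = 0 :=
    Finset.sum_powerset_neg_one_pow_card_of_nonempty Finset.univ_nonempty
  have hnc : ∀ B : Finset E, (ncomp ends B : ℤ)
      = ∑ S ∈ (Finset.univ : Finset (Finset V)), (if IsClass ends S B then (1 : ℤ) else 0) := by
    intro B
    rw [ncomp_eq_card ends B, Finset.sum_boole]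
  have hsum : ∑ B ∈ (Finset.univ : Finset E).powerset, (-1 : ℤ) ^ B.card * (rk ends B : ℤ)
      = - ∑ p ∈ (Finset.univ : Finset (Finset V × Finset E)).filter
            (fun p => IsNucleus ends p.1 p.2), (-1 : ℤ) ^ p.2.card := by
    calc ∑ B ∈ (Finset.univ : Finset E).powerset, (-1 : ℤ) ^ B.card * (rk ends B : ℤ)
        = ∑ B ∈ (Finset.univ : Finset E).powerset,
            ((-1 : ℤ) ^ B.card * (Fintype.card V : ℤ)
              - (-1 : ℤ) ^ B.card * (ncomp ends B : ℤ)) :=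
          Finset.sum_congr rfl (fun B _ => by rw [hrk B]; ring)
      _ = (∑ B ∈ (Finset.univ : Finset E).powerset, (-1 : ℤ) ^ B.card) * (Fintype.card V : ℤ)
            - ∑ B ∈ (Finset.univ : Finset E).powerset,
                (-1 : ℤ) ^ B.card * (ncomp ends B : ℤ) := by
          rw [Finset.sum_sub_distrib, Finset.sum_mul]
      _ = - ∑ B ∈ (Finset.univ : Finset E).powerset,
            (-1 : ℤ) ^ B.card * (ncomp ends B : ℤ) := by
          rw [h0]; ring
      _ = - ∑ B ∈ (Finset.univ : Finset (Finset E)),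
            (-1 : ℤ) ^ B.card * (ncomp ends B : ℤ) := by
          rw [Finset.powerset_univ]
      _ = - ∑ B ∈ (Finset.univ : Finset (Finset E)), ∑ S ∈ (Finset.univ : Finset (Finset V)),
            (if IsClass ends S B then (-1 : ℤ) ^ B.card else 0) := by
          congr 1
          refine Finset.sum_congr rfl fun B _ => ?_
          rw [hnc B, Finset.mul_sum]
          exact Finset.sum_congr rfl fun S _ => by rw [mul_ite, mul_one, mul_zero]
      _ = - ∑ S ∈ (Finset.univ : Finset (Finset V)), ∑ B ∈ (Finset.univ : Finset (Finset E)),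
            (if IsClass ends S B then (-1 : ℤ) ^ B.card else 0) := by
          rw [Finset.sum_comm]
      _ = - ∑ S ∈ (Finset.univ : Finset (Finset V)), ∑ B ∈ (Finset.univ : Finset (Finset E)),
            (if IsNucleus ends S B then (-1 : ℤ) ^ B.card else 0) := by
          congr 1
          exact Finset.sum_congr rfl fun S _ => key ends S
      _ = - ∑ p ∈ (Finset.univ : Finset (Finset V × Finset E)).filter
            (fun p => IsNucleus ends p.1 p.2), (-1 : ℤ) ^ p.2.card := by
          rw [Finset.sum_filter, ← Finset.univ_product_univ, Finset.sum_product]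
  rw [beta, hsum]
  ring

end Stmt3
end

section
/- If a finite graph G has a self-loop e and at least two edges, then Σ_{A ⊆ E(G)} (-1)^{|A|} c(A) = 0, where c(A) denotes the number of non-trivial blocks of the spanning subgraph (V(G), A), with each self-loop counting as a block. -/
open scoped Classical

namespace Stmt5

variable {V E : Type} [Fintype V] [Fintype E] [DecidableEq V] [DecidableEq E]

/-- Adjacency of two vertices via an edge in the edge set `A`. -/
def Adj (ends : E → Sym2 V) (A : Finset E) (u v : V) : Prop :=
  ∃ e ∈ A, ends e = s(u, v)

/-- The number of connected components of the spanning subgraph `(V, A)`. -/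
noncomputable def ncomp (ends : E → Sym2 V) (A : Finset E) : ℕ :=
  Nat.card (Quotient (Relation.EqvGen.setoid (Adj ends A)))

/-- The rank of the spanning subgraph `(V, A)`: `|V| - |π₀(A)|`. -/
noncomputable def rk (ends : E → Sym2 V) (A : Finset E) : ℕ :=
  Fintype.card V - ncomp ends A

/-- A circuit of the cycle matroid: a minimal dependent edge set. -/
def IsCircuit (ends : E → Sym2 V) (C : Finset E) : Prop :=
  C.Nonempty ∧ C.card = rk ends C + 1 ∧
    ∀ e ∈ C, rk ends (C.erase e) = (C.erase e).card

/-- The number of non-trivial blocks of the spanning subgraph `(V, A)` (each self-loop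
is a block by itself): the number of equivalence classes of edges of `A` under the
relation generated by "lying on a common circuit". -/
noncomputable def nblocks (ends : E → Sym2 V) (A : Finset E) : ℕ :=
  Nat.card (Quotient (Relation.EqvGen.setoid
    (fun e f : {x : E // x ∈ A} =>
      ∃ C ⊆ A, IsCircuit ends C ∧ e.1 ∈ C ∧ f.1 ∈ C)))

/-! ### Auxiliary lemmas -/

lemma ncomp_congr (ends : E → Sym2 V) {A B : Finset E}
    (h1 : ∀ u v, Adj ends A u v → Relation.EqvGen (Adj ends B) u v)
    (h2 : ∀ u v, Adj ends B u v → Relation.EqvGen (Adj ends A) u v) :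
    ncomp ends A = ncomp ends B := by
  have hset : Relation.EqvGen.setoid (Adj ends A) = Relation.EqvGen.setoid (Adj ends B) :=
    le_antisymm (Setoid.eqvGen_le h1) (Setoid.eqvGen_le h2)
  unfold ncomp
  rw [hset]

lemma ncomp_empty (ends : E → Sym2 V) : ncomp ends (∅ : Finset E) = Fintype.card V := by
  have h : ∀ u v : V, Relation.EqvGen (Adj ends ∅) u v → u = v := by
    intro u v h
    induction h with
    | rel _ _ h => obtain ⟨g, hg, -⟩ := h; exact absurd hg (Finset.notMem_empty g)
    | refl => rfl
    | symm _ _ _ ih => exact ih.symm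
    | trans _ _ _ _ _ ih1 ih2 => exact ih1.trans ih2
  have hbij : Function.Bijective
      (Quotient.lift id (fun a b hab => h a b hab) :
        Quotient (Relation.EqvGen.setoid (Adj ends (∅ : Finset E))) → V) := by
    constructor
    · rintro ⟨x⟩ ⟨y⟩ hxy
      have hxy' : x = y := hxy
      rw [hxy']
    · exact fun v => ⟨⟦v⟧, rfl⟩
  rw [ncomp, Nat.card_congr (Equiv.ofBijective _ hbij), Nat.card_eq_fintype_card]

/-- Adding one relation pair decreases the number of equivalence classes by at most one. -/
lemma card_quotient_le_of_rel {α : Type} [Finite α] (r r' : α → α → Prop) (a b : α)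
    (hle : ∀ u v, r' u v → r u v)
    (h : ∀ u v, r u v → r' u v ∨ (u = a ∧ v = b) ∨ (u = b ∧ v = a)) :
    Nat.card (Quotient (Relation.EqvGen.setoid r')) ≤
      Nat.card (Quotient (Relation.EqvGen.setoid r)) + 1 := by
  classical
  have key : ∀ u v, Relation.EqvGen r u v →
      Relation.EqvGen r' u v ∨
        (Relation.EqvGen r' u a ∧ Relation.EqvGen r' b v) ∨
        (Relation.EqvGen r' u b ∧ Relation.EqvGen r' a v) := by
    intro u v h0
    induction h0 with
    | rel x y hxy =>
      rcases h x y hxy with h' | ⟨rfl, rfl⟩ | ⟨rfl, rfl⟩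
      · exact Or.inl (Relation.EqvGen.rel _ _ h')
      · exact Or.inr (Or.inl ⟨Relation.EqvGen.refl _, Relation.EqvGen.refl _⟩)
      · exact Or.inr (Or.inr ⟨Relation.EqvGen.refl _, Relation.EqvGen.refl _⟩)
    | refl x => exact Or.inl (Relation.EqvGen.refl x)
    | symm x y _ ih =>
      rcases ih with h' | ⟨h1, h2⟩ | ⟨h1, h2⟩
      · exact Or.inl (Relation.EqvGen.symm _ _ h')
      · exact Or.inr (Or.inr ⟨Relation.EqvGen.symm _ _ h2, Relation.EqvGen.symm _ _ h1⟩)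
      · exact Or.inr (Or.inl ⟨Relation.EqvGen.symm _ _ h2, Relation.EqvGen.symm _ _ h1⟩)
    | trans x y z _ _ ih1 ih2 =>
      rcases ih1 with h1 | ⟨h1, h2⟩ | ⟨h1, h2⟩ <;>
        rcases ih2 with h3 | ⟨h3, h4⟩ | ⟨h3, h4⟩
      · exact Or.inl (Relation.EqvGen.trans _ _ _ h1 h3)
      · exact Or.inr (Or.inl ⟨Relation.EqvGen.trans _ _ _ h1 h3, h4⟩)
      · exact Or.inr (Or.inr ⟨Relation.EqvGen.trans _ _ _ h1 h3, h4⟩)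
      · exact Or.inr (Or.inl ⟨h1, Relation.EqvGen.trans _ _ _ h2 h3⟩)
      · exact Or.inr (Or.inl ⟨h1, h4⟩)
      · exact Or.inl (Relation.EqvGen.trans _ _ _ h1 h4)
      · exact Or.inr (Or.inr ⟨h1, Relation.EqvGen.trans _ _ _ h2 h3⟩)
      · exact Or.inl (Relation.EqvGen.trans _ _ _ h1 h4)
      · exact Or.inr (Or.inr ⟨h1, h4⟩)
  -- the natural surjection from the finer quotient to the coarser one
  let φ : Quotient (Relation.EqvGen.setoid r') → Quotient (Relation.EqvGen.setoid r) :=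
    Quotient.map' id (fun u v huv => Setoid.eqvGen_mono hle huv)
  have hinj : ∀ x y : Quotient (Relation.EqvGen.setoid r'),
      x ≠ Quotient.mk _ b → y ≠ Quotient.mk _ b → φ x = φ y → x = y := by
    rintro ⟨u⟩ ⟨v⟩ hxb hyb hxy
    have huv : Relation.EqvGen r u v := Quotient.exact' hxy
    rcases key u v huv with h' | ⟨h1, h2⟩ | ⟨h1, h2⟩
    · exact Quotient.sound h'
    · exact absurd (Quotient.sound (Relation.EqvGen.symm _ _ h2)) hyb
    · exact absurd (Quotient.sound h1) hxb
  -- count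
  haveI : Finite (Quotient (Relation.EqvGen.setoid r')) := Quotient.finite _
  haveI : Finite (Quotient (Relation.EqvGen.setoid r)) := Quotient.finite _
  have h2 : Nat.card {x : Quotient (Relation.EqvGen.setoid r') // x ≠ Quotient.mk _ b} ≤
      Nat.card (Quotient (Relation.EqvGen.setoid r)) := by
    apply Nat.card_le_card_of_injective (fun x => φ x.1)
    rintro ⟨x, hx⟩ ⟨y, hy⟩ hxy
    exact Subtype.ext (hinj x y hx hy hxy)
  calc Nat.card (Quotient (Relation.EqvGen.setoid r'))
      = Nat.card (Option {x : Quotient (Relation.EqvGen.setoid r') // x ≠ Quotient.mk _ b}) :=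
        (Nat.card_congr (Equiv.optionSubtypeNe (Quotient.mk _ b))).symm
    _ = Nat.card {x : Quotient (Relation.EqvGen.setoid r') // x ≠ Quotient.mk _ b} + 1 := by
        haveI := Fintype.ofFinite
          {x : Quotient (Relation.EqvGen.setoid r') // x ≠ Quotient.mk _ b}
        simp [Nat.card_eq_fintype_card]
    _ ≤ Nat.card (Quotient (Relation.EqvGen.setoid r)) + 1 := by omega

lemma le_ncomp_add_card (ends : E → Sym2 V) (A : Finset E) :
    Fintype.card V ≤ ncomp ends A + A.card := by
  induction A using Finset.induction_on with
  | empty => simp [ncomp_empty]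
  | insert f A hfA ih =>
    obtain ⟨a, b, hab⟩ : ∃ a b : V, ends f = s(a, b) :=
      Sym2.inductionOn (ends f) (fun a b => ⟨a, b, rfl⟩)
    have hstep : ncomp ends A ≤ ncomp ends (insert f A) + 1 := by
      apply card_quotient_le_of_rel (Adj ends (insert f A)) (Adj ends A) a b
      · rintro u v ⟨g, hg, hge⟩
        exact ⟨g, Finset.mem_insert_of_mem hg, hge⟩
      · rintro u v ⟨g, hg, hge⟩
        rcases Finset.mem_insert.1 hg with rfl | hg'
        · rw [hab] at hge
          rcases Sym2.eq_iff.1 hge with ⟨rfl, rfl⟩ | ⟨rfl, rfl⟩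
          · exact Or.inr (Or.inl ⟨rfl, rfl⟩)
          · exact Or.inr (Or.inr ⟨rfl, rfl⟩)
        · exact Or.inl ⟨g, hg', hge⟩
    rw [Finset.card_insert_of_notMem hfA]
    omega

lemma rk_le_card (ends : E → Sym2 V) (A : Finset E) : rk ends A ≤ A.card := by
  have := le_ncomp_add_card ends A
  rw [rk]
  omega

lemma ncomp_insert_loop (ends : E → Sym2 V) {f : E} (hf : (ends f).IsDiag) (A : Finset E) :
    ncomp ends (insert f A) = ncomp ends A := by
  apply ncomp_congr
  · rintro u v ⟨g, hg, hge⟩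
    rcases Finset.mem_insert.1 hg with rfl | hg'
    · obtain ⟨a, b, hab⟩ : ∃ a b : V, ends g = s(a, b) :=
        Sym2.inductionOn (ends g) (fun a b => ⟨a, b, rfl⟩)
      have hba : a = b := Sym2.mk_isDiag_iff.1 (hab ▸ hf)
      have huv : u = v := by
        rw [hab] at hge
        rcases Sym2.eq_iff.1 hge with ⟨rfl, rfl⟩ | ⟨rfl, rfl⟩
        · exact hba
        · exact hba.symm
      exact huv ▸ Relation.EqvGen.refl u
    · exact Relation.EqvGen.rel _ _ ⟨g, hg', hge⟩
  · rintro u v ⟨g, hg, hge⟩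
    exact Relation.EqvGen.rel _ _ ⟨g, Finset.mem_insert_of_mem hg, hge⟩

lemma rk_erase_loop (ends : E → Sym2 V) {f : E} (hf : (ends f).IsDiag) {S : Finset E}
    (hfS : f ∈ S) : rk ends S = rk ends (S.erase f) := by
  have h : ncomp ends S = ncomp ends (S.erase f) := by
    conv_lhs => rw [← Finset.insert_erase hfS]
    exact ncomp_insert_loop ends hf _
  rw [rk, rk, h]

lemma isCircuit_singleton_loop (ends : E → Sym2 V) {f : E} (hf : (ends f).IsDiag) :
    IsCircuit ends {f} := by
  have h0 : rk ends (∅ : Finset E) = 0 := by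
    rw [rk, ncomp_empty, Nat.sub_self]
  refine ⟨Finset.singleton_nonempty f, ?_, ?_⟩
  · have : rk ends {f} = 0 := by
      rw [rk_erase_loop ends hf (Finset.mem_singleton_self f), Finset.erase_singleton, h0]
    simp [this]
  · intro g hg
    rw [Finset.mem_singleton] at hg
    subst hg
    simp [Finset.erase_singleton, h0]

lemma circuit_eq_singleton_of_loop (ends : E → Sym2 V) {f : E} (hf : (ends f).IsDiag)
    {C : Finset E} (hC : IsCircuit ends C) (hfC : f ∈ C) : C = {f} := by
  by_contra hne
  obtain ⟨g, hgC, hgf⟩ : ∃ g ∈ C, g ≠ f := by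
    by_contra hcon
    push_neg at hcon
    exact hne (Finset.eq_singleton_iff_unique_mem.2 ⟨hfC, hcon⟩)
  have h1 : rk ends (C.erase g) = (C.erase g).card := hC.2.2 g hgC
  have hfCg : f ∈ C.erase g := Finset.mem_erase.2 ⟨Ne.symm hgf, hfC⟩
  have h2 : rk ends (C.erase g) = rk ends ((C.erase g).erase f) :=
    rk_erase_loop ends hf hfCg
  have h3 : rk ends ((C.erase g).erase f) ≤ ((C.erase g).erase f).card :=
    rk_le_card ends _
  have h4 : ((C.erase g).erase f).card = (C.erase g).card - 1 :=
    Finset.card_erase_of_mem hfCg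
  have h5 : 1 ≤ (C.erase g).card := Finset.card_pos.2 ⟨f, hfCg⟩
  omega

lemma nat_card_option (α : Type) [Finite α] : Nat.card (Option α) = Nat.card α + 1 := by
  haveI := Fintype.ofFinite α
  simp [Nat.card_eq_fintype_card]

lemma nblocks_insert_loop (ends : E → Sym2 V) {e : E} (he : (ends e).IsDiag) {A : Finset E}
    (heA : e ∉ A) : nblocks ends (insert e A) = nblocks ends A + 1 := by
  set T := {x : E // x ∈ insert e A}
  set S := {x : E // x ∈ A}
  set R' : T → T → Prop := fun x y =>
    ∃ C ⊆ insert e A, IsCircuit ends C ∧ x.1 ∈ C ∧ y.1 ∈ C with hR'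
  set R : S → S → Prop := fun x y =>
    ∃ C ⊆ A, IsCircuit ends C ∧ x.1 ∈ C ∧ y.1 ∈ C with hR
  have memA : ∀ (x : T), x.1 ≠ e → x.1 ∈ A := by
    intro x hx
    rcases Finset.mem_insert.1 x.2 with h | h
    · exact absurd h hx
    · exact h
  have key : ∀ x y : T, Relation.EqvGen R' x y →
      (x.1 = e ∧ y.1 = e) ∨ ∃ (hx : x.1 ∈ A) (hy : y.1 ∈ A),
        Relation.EqvGen R ⟨x.1, hx⟩ ⟨y.1, hy⟩ := by
    intro x y h0
    induction h0 with
    | rel x y hxy =>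
      obtain ⟨C, hCsub, hCir, hxC, hyC⟩ := hxy
      by_cases heC : e ∈ C
      · have hC : C = {e} := circuit_eq_singleton_of_loop ends he hCir heC
        subst hC
        exact Or.inl ⟨Finset.mem_singleton.1 hxC, Finset.mem_singleton.1 hyC⟩
      · have hCA : C ⊆ A := by
          intro c hc
          rcases Finset.mem_insert.1 (hCsub hc) with rfl | h
          · exact absurd hc heC
          · exact h
        exact Or.inr ⟨hCA hxC, hCA hyC, Relation.EqvGen.rel _ _ ⟨C, hCA, hCir, hxC, hyC⟩⟩
    | refl x =>
      by_cases hx : x.1 = e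
      · exact Or.inl ⟨hx, hx⟩
      · exact Or.inr ⟨memA x hx, memA x hx, Relation.EqvGen.refl _⟩
    | symm x y _ ih =>
      rcases ih with ⟨h1, h2⟩ | ⟨hx, hy, h⟩
      · exact Or.inl ⟨h2, h1⟩
      · exact Or.inr ⟨hy, hx, Relation.EqvGen.symm _ _ h⟩
    | trans x y z _ _ ih1 ih2 =>
      rcases ih1 with ⟨h1, h2⟩ | ⟨hx, hy, h⟩
      · rcases ih2 with ⟨h3, h4⟩ | ⟨hy', hz, h'⟩
        · exact Or.inl ⟨h1, h4⟩
        · exact absurd (h2 ▸ hy') heA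
      · rcases ih2 with ⟨h3, h4⟩ | ⟨hy', hz, h'⟩
        · exact absurd (h3 ▸ hy) heA
        · exact Or.inr ⟨hx, hz, Relation.EqvGen.trans _ _ _ h h'⟩
  have conv : ∀ x y : S, Relation.EqvGen R x y →
      Relation.EqvGen R' ⟨x.1, Finset.mem_insert_of_mem x.2⟩
        ⟨y.1, Finset.mem_insert_of_mem y.2⟩ := by
    intro x y h0
    induction h0 with
    | rel x y hxy =>
      obtain ⟨C, hCsub, hCir, hxC, hyC⟩ := hxy
      exact Relation.EqvGen.rel _ _
        ⟨C, hCsub.trans (Finset.subset_insert e A), hCir, hxC, hyC⟩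
    | refl x => exact Relation.EqvGen.refl _
    | symm _ _ _ ih => exact Relation.EqvGen.symm _ _ ih
    | trans _ _ _ _ _ ih1 ih2 => exact Relation.EqvGen.trans _ _ _ ih1 ih2
  -- the equivalence between the quotients
  let F : Quotient (Relation.EqvGen.setoid R') → Option (Quotient (Relation.EqvGen.setoid R)) :=
    Quotient.lift
      (fun x : T => if h : x.1 = e then none else some (Quotient.mk _ ⟨x.1, memA x h⟩))
      (by
        intro x y hxy
        rcases key x y hxy with ⟨h1, h2⟩ | ⟨hx, hy, h⟩
        · rw [dif_pos h1, dif_pos h2]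
        · rw [dif_neg (show x.1 ≠ e from fun hc => heA (by rw [← hc]; exact hx)),
            dif_neg (show y.1 ≠ e from fun hc => heA (by rw [← hc]; exact hy))]
          exact congrArg some (Quotient.sound h))
  let G : Option (Quotient (Relation.EqvGen.setoid R)) → Quotient (Relation.EqvGen.setoid R') :=
    fun o => o.elim (Quotient.mk _ ⟨e, Finset.mem_insert_self e A⟩)
      (Quotient.lift (fun x : S => Quotient.mk _ ⟨x.1, Finset.mem_insert_of_mem x.2⟩)
        (fun x y hxy => Quotient.sound (conv x y hxy)))
  have hFe : ∀ (t : T), t.1 = e → F (Quotient.mk _ t) = none := fun t h => dif_pos h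
  have hFmk : ∀ (t : T) (h : t.1 ≠ e),
      F (Quotient.mk _ t) = some (Quotient.mk _ (⟨t.1, memA t h⟩ : S)) := fun t h => dif_neg h
  have hFG : ∀ o, F (G o) = o := by
    intro o
    match o with
    | none => exact hFe ⟨e, Finset.mem_insert_self e A⟩ rfl
    | some q =>
      induction q using Quotient.ind with
      | _ x =>
        have hne : (⟨x.1, Finset.mem_insert_of_mem x.2⟩ : T).1 ≠ e :=
          fun hc => heA (by rw [← hc]; exact x.2)
        exact (hFmk _ hne).trans (congrArg some (congrArg _ (Subtype.ext rfl)))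
  have hGF : ∀ q, G (F q) = q := by
    intro q
    induction q using Quotient.ind with
    | _ t =>
      by_cases ht : t.1 = e
      · rw [hFe t ht]
        exact congrArg _ (Subtype.ext ht.symm)
      · rw [hFmk t ht]
        exact congrArg _ (Subtype.ext rfl)
  have hcard : nblocks ends (insert e A) =
      Nat.card (Option (Quotient (Relation.EqvGen.setoid R))) :=
    Nat.card_congr ⟨F, G, hGF, hFG⟩
  rw [hcard, nat_card_option]
  rfl

/-- If a graph with at least two edges has a self-loop, then the alternating sum of the
number of non-trivial blocks over all spanning subgraphs vanishes. -/
theorem blocks_sum_eq_zero_of_loop (ends : E → Sym2 V) (e : E) (he : (ends e).IsDiag)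
    (hE : 2 ≤ Fintype.card E) :
    ∑ A ∈ (Finset.univ : Finset E).powerset,
      (-1 : ℤ) ^ A.card * (nblocks ends A : ℤ) = 0 := by
  have huniv : (Finset.univ : Finset E) = insert e (Finset.univ.erase e) :=
    (Finset.insert_erase (Finset.mem_univ e)).symm
  rw [huniv, Finset.sum_powerset_insert (Finset.notMem_erase e _)]
  have hstep : ∀ A ∈ (Finset.univ.erase e : Finset E).powerset,
      (-1 : ℤ) ^ (insert e A).card * (nblocks ends (insert e A) : ℤ) =
        -((-1 : ℤ) ^ A.card * (nblocks ends A : ℤ)) - (-1 : ℤ) ^ A.card := by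
    intro A hA
    have heA : e ∉ A := fun h =>
      Finset.notMem_erase e Finset.univ (Finset.mem_powerset.1 hA h)
    rw [Finset.card_insert_of_notMem heA, nblocks_insert_loop ends he heA]
    push_cast
    ring
  rw [Finset.sum_congr rfl hstep, Finset.sum_sub_distrib, Finset.sum_neg_distrib]
  have hne : (Finset.univ.erase e : Finset E).Nonempty := by
    rw [← Finset.card_pos, Finset.card_erase_of_mem (Finset.mem_univ e), Finset.card_univ]
    omega
  rw [Finset.sum_powerset_neg_one_pow_card_of_nonempty hne]
  ring

end Stmt5
end

section
/- For a matroid M on ground set E, with ℓ(A) = |A| - rk(A) and β(B) = (-1)^{rk(B)} Σ_{A ⊆ B} (-1)^{|A|} rk(A), we have -Σ_{A ⊆ B ⊆ E} (-1)^{|B|-|A|} ℓ(A) rk(B) = Σ_{B ⊆ E, |B| ≠ 1} (-1)^{|B|} (-1)^{rk(B)} β(B) rk(B). -/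
namespace Stmt6

private lemma neg_one_pow_sub' {a b : ℕ} (h : a ≤ b) :
    (-1:ℤ)^(b-a) = (-1)^b * (-1)^a := by
  have h1 : (-1:ℤ)^b * (-1)^a = (-1)^(b+a) := by rw [← pow_add]
  have h2 : b + a = (b - a) + 2*a := by omega
  rw [h1, h2, pow_add, pow_mul]
  norm_num

private lemma sum_T {α : Type} [DecidableEq α] (B : Finset α) :
    ∑ A ∈ B.powerset, (-1:ℤ)^A.card * A.card = if B.card = 1 then -1 else 0 := by
  induction B using Finset.induction_on with
  | empty => simp
  | @insert x B hx ih =>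
    rw [Finset.sum_powerset_insert hx]
    have h2 : ∑ A ∈ B.powerset, (-1:ℤ)^(insert x A).card * ((insert x A).card : ℤ)
        = ∑ A ∈ B.powerset, (-((-1:ℤ)^A.card * A.card) - (-1:ℤ)^A.card) := by
      refine Finset.sum_congr rfl (fun A hA => ?_)
      rw [Finset.card_insert_of_notMem (fun hxA => hx (Finset.mem_powerset.mp hA hxA))]
      push_cast
      ring
    rw [h2, Finset.sum_sub_distrib, Finset.sum_neg_distrib, ih,
        Finset.sum_powerset_neg_one_pow_card,
        Finset.card_insert_of_notMem hx]
    rcases Finset.eq_empty_or_nonempty B with rfl | hB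
    · simp
    · have h4 : B ≠ ∅ := Finset.nonempty_iff_ne_empty.mp hB
      have h3 : B.card + 1 ≠ 1 := by
        have := Finset.card_ne_zero.mpr hB; omega
      simp only [if_neg h4, if_neg h3]
      ring

/-- For a finite matroid (given by its rank function `rk` satisfying the rank axioms)
on ground set `α`, the alternating double sum of `ℓ(A)·rk(B)` over nested pairs
`A ⊆ B` equals, up to sign, the sum of `(-1)^{|B|+rk(B)} β(B) rk(B)` over all subsets
`B` with `|B| ≠ 1`, where `β(B) = (-1)^{rk B} Σ_{A ⊆ B} (-1)^{|A|} rk(A)`. -/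
theorem neg_double_sum_eq_beta_sum {α : Type} [Fintype α] [DecidableEq α]
    (rk : Finset α → ℕ)
    (hle : ∀ A, rk A ≤ A.card)
    (hmono : ∀ A B : Finset α, A ⊆ B → rk A ≤ rk B)
    (hsubmod : ∀ A B : Finset α, rk (A ∪ B) + rk (A ∩ B) ≤ rk A + rk B) :
    -∑ B ∈ (Finset.univ : Finset α).powerset, ∑ A ∈ B.powerset,
        (-1 : ℤ) ^ (B.card - A.card) * ((A.card : ℤ) - (rk A : ℤ)) * (rk B : ℤ)
      = ∑ B ∈ ((Finset.univ : Finset α).powerset.filter (fun B => B.card ≠ 1)),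
          (-1 : ℤ) ^ B.card * (-1 : ℤ) ^ rk B *
            ((-1 : ℤ) ^ rk B * ∑ A ∈ B.powerset, (-1 : ℤ) ^ A.card * (rk A : ℤ)) *
            (rk B : ℤ) := by
  have h0 : rk ∅ = 0 := Nat.le_zero.mp (by simpa using hle ∅)
  set g : Finset α → ℤ :=
    fun B => (-1:ℤ)^B.card * (∑ A ∈ B.powerset, (-1:ℤ)^A.card * (rk A : ℤ)) * (rk B : ℤ)
    with hg
  -- inner sum decomposition
  have inner : ∀ B : Finset α,
      ∑ A ∈ B.powerset, (-1:ℤ)^(B.card - A.card) * ((A.card:ℤ) - (rk A : ℤ)) * (rk B : ℤ)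
      = (if B.card = 1 then (rk B : ℤ) else 0) - g B := by
    intro B
    have step : ∀ A ∈ B.powerset,
        (-1:ℤ)^(B.card - A.card) * ((A.card:ℤ) - (rk A : ℤ)) * (rk B : ℤ)
        = (-1:ℤ)^B.card * ((-1:ℤ)^A.card * A.card) * (rk B : ℤ)
          - (-1:ℤ)^B.card * ((-1:ℤ)^A.card * (rk A : ℤ)) * (rk B : ℤ) := by
      intro A hA
      rw [neg_one_pow_sub' (Finset.card_le_card (Finset.mem_powerset.mp hA))]
      ring
    rw [Finset.sum_congr rfl step, Finset.sum_sub_distrib]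
    have e1 : ∑ A ∈ B.powerset, (-1:ℤ)^B.card * ((-1:ℤ)^A.card * A.card) * (rk B : ℤ)
        = (-1:ℤ)^B.card * (∑ A ∈ B.powerset, (-1:ℤ)^A.card * A.card) * (rk B : ℤ) := by
      rw [Finset.mul_sum, Finset.sum_mul]
    have e2 : ∑ A ∈ B.powerset, (-1:ℤ)^B.card * ((-1:ℤ)^A.card * (rk A : ℤ)) * (rk B : ℤ)
        = g B := by
      simp only [hg]
      rw [Finset.mul_sum, Finset.sum_mul]
    rw [e1, e2, sum_T]
    rcases eq_or_ne B.card 1 with h5 | h5 <;> simp [h5]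
  -- singleton computation
  have single : ∀ B : Finset α, B.card = 1 → g B = (rk B : ℤ) := by
    intro B hB
    obtain ⟨x, rfl⟩ := Finset.card_eq_one.mp hB
    simp only [hg]
    have hps : ({x} : Finset α).powerset = {∅, {x}} := by
      rw [show ({x} : Finset α) = insert x ∅ from rfl, Finset.powerset_insert]
      ext A; simp
    rw [hps, Finset.sum_pair (Ne.symm (Finset.singleton_ne_empty x))]
    have hr : rk {x} ≤ 1 := by simpa using hle {x}
    interval_cases h : rk {x} <;> simp [h0, h, hB]
  -- rewrite RHS summand
  have rhs_term : ∀ B : Finset α,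
      (-1 : ℤ) ^ B.card * (-1 : ℤ) ^ rk B *
        ((-1 : ℤ) ^ rk B * ∑ A ∈ B.powerset, (-1 : ℤ) ^ A.card * (rk A : ℤ)) *
        (rk B : ℤ) = g B := by
    intro B
    have hsq : (-1:ℤ)^(rk B) * (-1)^(rk B) = 1 := by
      rw [← pow_add]; exact Even.neg_one_pow ⟨rk B, rfl⟩
    rw [hg]
    calc (-1 : ℤ) ^ B.card * (-1 : ℤ) ^ rk B *
        ((-1 : ℤ) ^ rk B * ∑ A ∈ B.powerset, (-1 : ℤ) ^ A.card * (rk A : ℤ)) * (rk B : ℤ)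
        = ((-1:ℤ)^(rk B) * (-1)^(rk B)) *
          ((-1 : ℤ) ^ B.card * (∑ A ∈ B.powerset, (-1 : ℤ) ^ A.card * (rk A : ℤ)) * (rk B : ℤ)) := by
          ring
      _ = _ := by rw [hsq, one_mul]
  rw [Finset.sum_congr rfl (fun B _ => inner B),
      Finset.sum_congr rfl (fun B _ => rhs_term B),
      Finset.sum_sub_distrib]
  have split : ∑ B ∈ (Finset.univ : Finset α).powerset, g B
      = ∑ B ∈ ((Finset.univ : Finset α).powerset.filter (fun B => B.card = 1)), g B
        + ∑ B ∈ ((Finset.univ : Finset α).powerset.filter (fun B => B.card ≠ 1)), g B := by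
    exact (Finset.sum_filter_add_sum_filter_not _ (fun B => B.card = 1) g).symm
  have ifs : ∑ B ∈ (Finset.univ : Finset α).powerset, (if B.card = 1 then (rk B : ℤ) else 0)
      = ∑ B ∈ ((Finset.univ : Finset α).powerset.filter (fun B => B.card = 1)), (rk B : ℤ) :=
    (Finset.sum_filter _ _).symm
  have ones : ∑ B ∈ ((Finset.univ : Finset α).powerset.filter (fun B => B.card = 1)), g B
      = ∑ B ∈ ((Finset.univ : Finset α).powerset.filter (fun B => B.card = 1)), (rk B : ℤ) := by
    refine Finset.sum_congr rfl (fun B hB => ?_)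
    exact single B (Finset.mem_filter.mp hB).2
  rw [ifs, split, ones]
  ring

end Stmt6
end

section
/- For a finite matroid M on ground set E, if the identity |E| - c(M) = Σ_{A ⊆ B ⊆ E} (-1)^{|B|-|A|} ℓ(A) rk(B) holds for M, then it also holds for the dual matroid M*, where c(M) = c(M*) denotes the number of connected components of the matroid. -/
set_option linter.unusedSectionVars false
set_option linter.unusedVariables false
set_option linter.unnecessarySeqFocus false


open scoped Classical

namespace Stmt7

variable {α : Type} [Fintype α] [DecidableEq α]

/-- A circuit of the matroid with rank function `rk`: a minimal dependent set. -/
def IsCircuit (rk : Finset α → ℕ) (C : Finset α) : Prop :=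
  C.Nonempty ∧ C.card = rk C + 1 ∧ ∀ e ∈ C, rk (C.erase e) = (C.erase e).card

/-- The number of connected components of the matroid with rank function `rk`:
the number of equivalence classes of ground set elements under the equivalence
relation generated by "lying on a common circuit" (elements in no circuit, i.e.
loops excluded coloops, each form their own component). -/
noncomputable def ncompM (rk : Finset α → ℕ) : ℕ :=
  Nat.card (Quotient (Relation.EqvGen.setoid
    (fun e f : α => ∃ C : Finset α, IsCircuit rk C ∧ e ∈ C ∧ f ∈ C)))

/-- The alternating double sum `Σ_{A ⊆ B ⊆ E} (-1)^{|B|-|A|} ℓ(A) rk(B)`. -/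
def doubleSum (rk : Finset α → ℕ) : ℤ :=
  ∑ B ∈ (Finset.univ : Finset α).powerset, ∑ A ∈ B.powerset,
    (-1 : ℤ) ^ (B.card - A.card) * ((A.card : ℤ) - (rk A : ℤ)) * (rk B : ℤ)

/-- The rank function of the dual matroid:
`rk*(A) = |A| - rk(E) + rk(E \ A)`. -/
def dualRk (rk : Finset α → ℕ) (A : Finset α) : ℕ :=
  A.card + rk (Finset.univ \ A) - rk Finset.univ


section Lemmas

variable (rk : Finset α → ℕ)

lemma rk_empty (hle : ∀ A : Finset α, rk A ≤ A.card) : rk ∅ = 0 :=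
  Nat.le_zero.mp (by simpa using hle ∅)

lemma rk_union_le (hsubmod : ∀ A B : Finset α, rk (A ∪ B) + rk (A ∩ B) ≤ rk A + rk B)
    (A B : Finset α) : rk (A ∪ B) ≤ rk A + rk B :=
  le_trans (Nat.le_add_right _ _) (hsubmod A B)

lemma indep_subset (hle : ∀ A : Finset α, rk A ≤ A.card)
    (hsubmod : ∀ A B : Finset α, rk (A ∪ B) + rk (A ∩ B) ≤ rk A + rk B)
    {S T : Finset α} (hS : rk S = S.card) (hTS : T ⊆ S) : rk T = T.card := by
  have h1 := hsubmod T (S \ T)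
  have hu : T ∪ (S \ T) = S := Finset.union_sdiff_of_subset hTS
  have hi : T ∩ (S \ T) = ∅ := Finset.inter_sdiff_self T S
  rw [hu, hi, rk_empty rk hle] at h1
  have hcard : (S \ T).card = S.card - T.card := Finset.card_sdiff_of_subset hTS
  have h2 := hle T
  have h3 := hle (S \ T)
  have h4 := Finset.card_le_card hTS
  omega

lemma exists_erase (hmono : ∀ A B : Finset α, A ⊆ B → rk A ≤ rk B)
    (hsubmod : ∀ A B : Finset α, rk (A ∪ B) + rk (A ∩ B) ≤ rk A + rk B)
    (hle : ∀ A : Finset α, rk A ≤ A.card)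
    {A : Finset α} (hA : rk A < A.card) : ∃ e ∈ A, rk (A.erase e) = rk A := by
  by_contra hc
  push_neg at hc
  have key : ∀ e ∈ A, rk (A.erase e) + 1 ≤ rk A := fun e he =>
    Nat.lt_of_le_of_ne (hmono _ _ (Finset.erase_subset _ _)) (hc e he)
  have main : ∀ S : Finset α, S ⊆ A → rk (A \ S) + S.card ≤ rk A := by
    intro S
    induction S using Finset.induction_on with
    | empty => simp
    | @insert e S he ih =>
      intro hins
      have heA : e ∈ A := hins (Finset.mem_insert_self e S)
      have hSA : S ⊆ A := fun x hx => hins (Finset.mem_insert_of_mem hx)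
      have h1 := ih hSA
      have h2 := key e heA
      have hsub := hsubmod (A \ S) (A.erase e)
      have hu : (A \ S) ∪ (A.erase e) = A := by
        ext x
        by_cases hx : x = e <;> simp [Finset.mem_erase, Finset.mem_sdiff, hx, he] <;> tauto
      have hi : (A \ S) ∩ (A.erase e) = A \ insert e S := by
        ext x
        by_cases hx : x = e <;> simp [Finset.mem_erase, Finset.mem_sdiff, hx] <;> tauto
      rw [hu, hi] at hsub
      have hcard : (insert e S).card = S.card + 1 := Finset.card_insert_of_notMem he
      omega
  have hfin := main A (subset_refl A)
  rw [Finset.sdiff_self, rk_empty rk hle] at hfin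
  omega

lemma exists_basis (hle : ∀ A : Finset α, rk A ≤ A.card)
    (hmono : ∀ A B : Finset α, A ⊆ B → rk A ≤ rk B)
    (hsubmod : ∀ A B : Finset α, rk (A ∪ B) + rk (A ∩ B) ≤ rk A + rk B)
    (A : Finset α) : ∃ I, I ⊆ A ∧ rk I = I.card ∧ rk I = rk A := by
  suffices h : ∀ n (A : Finset α), A.card ≤ n → ∃ I, I ⊆ A ∧ rk I = I.card ∧ rk I = rk A from
    h A.card A le_rfl
  intro n
  induction n with
  | zero =>
    intro A hA
    have : A = ∅ := Finset.card_eq_zero.mp (Nat.le_zero.mp hA)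
    exact ⟨A, subset_refl A, by simp [this, rk_empty rk hle], rfl⟩
  | succ n ih =>
    intro A hA
    rcases Nat.lt_or_ge (rk A) A.card with hlt | hge
    · obtain ⟨e, heA, he⟩ := exists_erase rk hmono hsubmod hle hlt
      have hcard : (A.erase e).card ≤ n := by
        have := Finset.card_erase_of_mem heA
        have := Finset.card_pos.mpr ⟨e, heA⟩
        omega
      obtain ⟨I, hIsub, hI1, hI2⟩ := ih (A.erase e) hcard
      exact ⟨I, hIsub.trans (Finset.erase_subset _ _), hI1, by rw [hI2, he]⟩
    · exact ⟨A, subset_refl A, le_antisymm (hle A) hge, rfl⟩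

lemma dep_has_circuit (hle : ∀ A : Finset α, rk A ≤ A.card)
    (hmono : ∀ A B : Finset α, A ⊆ B → rk A ≤ rk B)
    (A : Finset α) (hdep : rk A < A.card) : ∃ C, C ⊆ A ∧ IsCircuit rk C := by
  suffices h : ∀ n (A : Finset α), A.card ≤ n → rk A < A.card → ∃ C, C ⊆ A ∧ IsCircuit rk C from
    h A.card A le_rfl hdep
  clear hdep A
  intro n
  induction n with
  | zero => intro A hA hdep; omega
  | succ n ih =>
  intro A hA hdep
  by_cases hex : ∃ e ∈ A, rk (A.erase e) < (A.erase e).card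
  · obtain ⟨e, heA, he⟩ := hex
    have hcard : (A.erase e).card < A.card := by
      have := Finset.card_erase_of_mem heA
      have := Finset.card_pos.mpr ⟨e, heA⟩
      omega
    obtain ⟨C, hCsub, hC⟩ := ih _ (by omega) he
    exact ⟨C, hCsub.trans (Finset.erase_subset _ _), hC⟩
  · push_neg at hex
    have hall : ∀ e ∈ A, rk (A.erase e) = (A.erase e).card := fun e he =>
      le_antisymm (hle _) (hex e he)
    have hne : A.Nonempty := Finset.card_pos.mp (by omega)
    obtain ⟨e, heA⟩ := hne
    have h1 : rk (A.erase e) ≤ rk A := hmono _ _ (Finset.erase_subset _ _)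
    have h2 := hall e heA
    have h3 := Finset.card_erase_of_mem heA
    refine ⟨A, subset_refl A, ⟨e, heA⟩, by omega, hall⟩

end Lemmas
section Sep

variable (rk : Finset α → ℕ)

lemma separator_of_circuit_closed (hle : ∀ A : Finset α, rk A ≤ A.card)
    (hmono : ∀ A B : Finset α, A ⊆ B → rk A ≤ rk B)
    (hsubmod : ∀ A B : Finset α, rk (A ∪ B) + rk (A ∩ B) ≤ rk A + rk B)
    {X : Finset α}
    (hX : ∀ C : Finset α, IsCircuit rk C → (C ∩ X).Nonempty → C ⊆ X) :
    rk X + rk (Finset.univ \ X) = rk Finset.univ := by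
  obtain ⟨I, hIX, hIind, hIrk⟩ := exists_basis rk hle hmono hsubmod X
  obtain ⟨J, hJY, hJind, hJrk⟩ := exists_basis rk hle hmono hsubmod (Finset.univ \ X)
  have hdisj : Disjoint I J := by
    rw [Finset.disjoint_left]
    intro x hxI hxJ
    exact (Finset.mem_sdiff.mp (hJY hxJ)).2 (hIX hxI)
  have hcard : (I ∪ J).card = I.card + J.card := Finset.card_union_of_disjoint hdisj
  have hind : rk (I ∪ J) = (I ∪ J).card := by
    rcases Nat.lt_or_ge (rk (I ∪ J)) ((I ∪ J).card) with hlt | hge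
    · exfalso
      obtain ⟨C, hCsub, hC⟩ := dep_has_circuit rk hle hmono _ hlt
      have hCindep : rk C = C.card := by
        by_cases hmeet : (C ∩ X).Nonempty
        · have hCX : C ⊆ X := hX C hC hmeet
          have hCI : C ⊆ I := by
            intro x hx
            rcases Finset.mem_union.mp (hCsub hx) with h | h
            · exact h
            · exact absurd (hCX hx) (Finset.mem_sdiff.mp (hJY h)).2
          exact indep_subset rk hle hsubmod hIind hCI
        · have hCJ : C ⊆ J := by
            intro x hx
            rcases Finset.mem_union.mp (hCsub hx) with h | h
            · exact absurd ⟨x, Finset.mem_inter.mpr ⟨hx, hIX h⟩⟩ hmeet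
            · exact h
          exact indep_subset rk hle hsubmod hJind hCJ
      obtain ⟨_, hCcard, _⟩ := hC
      omega
    · exact le_antisymm (hle _) hge
  have h1 : rk (I ∪ J) ≤ rk Finset.univ := hmono _ _ (Finset.subset_univ _)
  have h2 : rk Finset.univ ≤ rk X + rk (Finset.univ \ X) := by
    have := rk_union_le rk hsubmod X (Finset.univ \ X)
    rwa [Finset.union_sdiff_of_subset (Finset.subset_univ X)] at this
  omega

lemma rank_add_of_separator
    (hmono : ∀ A B : Finset α, A ⊆ B → rk A ≤ rk B)
    (hsubmod : ∀ A B : Finset α, rk (A ∪ B) + rk (A ∩ B) ≤ rk A + rk B)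
    {X A B : Finset α} (hsep : rk X + rk (Finset.univ \ X) = rk Finset.univ)
    (hA : A ⊆ X) (hB : B ⊆ Finset.univ \ X) : rk (A ∪ B) = rk A + rk B := by
  have hBX : ∀ x ∈ B, x ∉ X := fun x hx => (Finset.mem_sdiff.mp (hB hx)).2
  -- step 1 : rk X + rk B ≤ rk (X ∪ B)
  have hstep1 : rk X + rk B ≤ rk (X ∪ B) := by
    have hsub := hsubmod (X ∪ B) (Finset.univ \ X)
    have hu : (X ∪ B) ∪ (Finset.univ \ X) = Finset.univ := by
      ext x; by_cases hx : x ∈ X <;> simp [Finset.mem_sdiff, hx]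
    have hi : (X ∪ B) ∩ (Finset.univ \ X) = B := by
      ext x
      constructor
      · rintro hm
        rcases Finset.mem_inter.mp hm with ⟨hm1, hm2⟩
        rcases Finset.mem_union.mp hm1 with h | h
        · exact absurd h (Finset.mem_sdiff.mp hm2).2
        · exact h
      · intro hx; exact Finset.mem_inter.mpr ⟨Finset.mem_union_right _ hx, hB hx⟩
    rw [hu, hi] at hsub
    omega
  -- step 2
  have hsub2 := hsubmod (A ∪ B) X
  have hu2 : (A ∪ B) ∪ X = X ∪ B := by
    ext x; constructor
    · intro hx
      rcases Finset.mem_union.mp hx with h | h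
      · rcases Finset.mem_union.mp h with h' | h'
        · exact Finset.mem_union_left _ (hA h')
        · exact Finset.mem_union_right _ h'
      · exact Finset.mem_union_left _ h
    · intro hx
      rcases Finset.mem_union.mp hx with h | h
      · exact Finset.mem_union_right _ h
      · exact Finset.mem_union_left _ (Finset.mem_union_right _ h)
  have hi2 : (A ∪ B) ∩ X = A := by
    ext x; constructor
    · intro hx
      rcases Finset.mem_inter.mp hx with ⟨h1, h2⟩
      rcases Finset.mem_union.mp h1 with h | h
      · exact h
      · exact absurd h2 (hBX x h)
    · intro hx; exact Finset.mem_inter.mpr ⟨Finset.mem_union_left _ hx, hA hx⟩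
  rw [hu2, hi2] at hsub2
  have hstep3 := rk_union_le rk hsubmod A B
  have hAB : rk (X ∪ B) + rk A ≤ rk (A ∪ B) + rk X := hsub2
  omega

lemma circuit_subset_separator (hle : ∀ A : Finset α, rk A ≤ A.card)
    (hmono : ∀ A B : Finset α, A ⊆ B → rk A ≤ rk B)
    (hsubmod : ∀ A B : Finset α, rk (A ∪ B) + rk (A ∩ B) ≤ rk A + rk B)
    {X C : Finset α} (hsep : rk X + rk (Finset.univ \ X) = rk Finset.univ)
    (hC : IsCircuit rk C) (hmeet : (C ∩ X).Nonempty) : C ⊆ X := by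
  by_contra hnot
  obtain ⟨f, hfC, hfX⟩ : ∃ f ∈ C, f ∉ X := by
    by_contra h; push_neg at h; exact hnot h
  obtain ⟨e, he⟩ := hmeet
  obtain ⟨heC, heX⟩ := Finset.mem_inter.mp he
  obtain ⟨hCne, hCcard, hCerase⟩ := hC
  set A := C ∩ X with hAdef
  set B := C \ X with hBdef
  have hAX : A ⊆ X := Finset.inter_subset_right
  have hBY : B ⊆ Finset.univ \ X := by
    intro x hx
    exact Finset.mem_sdiff.mpr ⟨Finset.mem_univ x, (Finset.mem_sdiff.mp hx).2⟩
  have hunion : A ∪ B = C := by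
    ext x; by_cases hx : x ∈ X <;> simp [hAdef, hBdef, hx]
  have hradd : rk C = rk A + rk B := by
    rw [← hunion]; exact rank_add_of_separator rk hmono hsubmod hsep hAX hBY
  have hAind : rk A = A.card := by
    have hsubA : A ⊆ C.erase f := by
      intro x hx
      obtain ⟨hx1, hx2⟩ := Finset.mem_inter.mp hx
      exact Finset.mem_erase.mpr ⟨fun hh => hfX (hh ▸ hx2), hx1⟩
    exact indep_subset rk hle hsubmod (hCerase f hfC) hsubA
  have hBind : rk B = B.card := by
    have hsubB : B ⊆ C.erase e := by
      intro x hx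
      obtain ⟨hx1, hx2⟩ := Finset.mem_sdiff.mp hx
      exact Finset.mem_erase.mpr ⟨fun hh => hx2 (hh ▸ heX), hx1⟩
    exact indep_subset rk hle hsubmod (hCerase e heC) hsubB
  have hcards : B.card + A.card = C.card := Finset.card_sdiff_add_card_inter C X
  omega

end Sep

section Dual

variable (rk : Finset α → ℕ)

lemma dual_key (hle : ∀ A : Finset α, rk A ≤ A.card)
    (hsubmod : ∀ A B : Finset α, rk (A ∪ B) + rk (A ∩ B) ≤ rk A + rk B)
    (A : Finset α) : rk Finset.univ ≤ A.card + rk (Finset.univ \ A) := by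
  have h1 := rk_union_le rk hsubmod A (Finset.univ \ A)
  rw [Finset.union_sdiff_of_subset (Finset.subset_univ A)] at h1
  have := hle A
  omega

lemma sdiff_sdiff_univ (A : Finset α) : Finset.univ \ (Finset.univ \ A) = A := by
  ext x; simp

lemma dualRk_spec (hle : ∀ A : Finset α, rk A ≤ A.card)
    (hsubmod : ∀ A B : Finset α, rk (A ∪ B) + rk (A ∩ B) ≤ rk A + rk B)
    (A : Finset α) :
    dualRk rk A + rk Finset.univ = A.card + rk (Finset.univ \ A) := by
  have := dual_key rk hle hsubmod A
  unfold dualRk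
  omega

lemma dualRk_le (hle : ∀ A : Finset α, rk A ≤ A.card)
    (hmono : ∀ A B : Finset α, A ⊆ B → rk A ≤ rk B)
    (hsubmod : ∀ A B : Finset α, rk (A ∪ B) + rk (A ∩ B) ≤ rk A + rk B)
    (A : Finset α) : dualRk rk A ≤ A.card := by
  have h0 := dualRk_spec rk hle hsubmod A
  have := hmono (Finset.univ \ A) Finset.univ (Finset.subset_univ _)
  omega

lemma dualRk_mono (hle : ∀ A : Finset α, rk A ≤ A.card)
    (hmono : ∀ A B : Finset α, A ⊆ B → rk A ≤ rk B)
    (hsubmod : ∀ A B : Finset α, rk (A ∪ B) + rk (A ∩ B) ≤ rk A + rk B)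
    (A B : Finset α) (hAB : A ⊆ B) : dualRk rk A ≤ dualRk rk B := by
  have hu : (Finset.univ \ B) ∪ (B \ A) = Finset.univ \ A := by
    ext x
    simp only [Finset.mem_union, Finset.mem_sdiff, Finset.mem_univ, true_and]
    constructor
    · rintro (h | ⟨h1, h2⟩)
      · exact fun hA => h (hAB hA)
      · exact h2
    · intro h
      by_cases hx : x ∈ B
      · exact Or.inr ⟨hx, h⟩
      · exact Or.inl hx
  have h1 := rk_union_le rk hsubmod (Finset.univ \ B) (B \ A)
  rw [hu] at h1
  have h2 := hle (B \ A)
  have h3 : (B \ A).card = B.card - A.card := Finset.card_sdiff_of_subset hAB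
  have h4 := Finset.card_le_card hAB
  have h5 := dualRk_spec rk hle hsubmod A
  have h6 := dualRk_spec rk hle hsubmod B
  omega

lemma dualRk_submod (hle : ∀ A : Finset α, rk A ≤ A.card)
    (hsubmod : ∀ A B : Finset α, rk (A ∪ B) + rk (A ∩ B) ≤ rk A + rk B)
    (A B : Finset α) :
    dualRk rk (A ∪ B) + dualRk rk (A ∩ B) ≤ dualRk rk A + dualRk rk B := by
  have hu : Finset.univ \ (A ∪ B) = (Finset.univ \ A) ∩ (Finset.univ \ B) := by
    ext x
    simp only [Finset.mem_sdiff, Finset.mem_univ, true_and, Finset.mem_inter,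
      Finset.mem_union]
    tauto
  have hi : Finset.univ \ (A ∩ B) = (Finset.univ \ A) ∪ (Finset.univ \ B) := by
    ext x
    simp only [Finset.mem_sdiff, Finset.mem_univ, true_and, Finset.mem_inter,
      Finset.mem_union]
    tauto
  have hsub := hsubmod (Finset.univ \ A) (Finset.univ \ B)
  have hc : (A ∪ B).card + (A ∩ B).card = A.card + B.card :=
    Finset.card_union_add_card_inter A B
  have k1 := dualRk_spec rk hle hsubmod (A ∪ B)
  have k2 := dualRk_spec rk hle hsubmod (A ∩ B)
  have k3 := dualRk_spec rk hle hsubmod A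
  have k4 := dualRk_spec rk hle hsubmod B
  rw [hu] at k1
  rw [hi] at k2
  omega

lemma dualRk_dualRk (hle : ∀ A : Finset α, rk A ≤ A.card)
    (hmono : ∀ A B : Finset α, A ⊆ B → rk A ≤ rk B)
    (hsubmod : ∀ A B : Finset α, rk (A ∪ B) + rk (A ∩ B) ≤ rk A + rk B)
    (A : Finset α) : dualRk (dualRk rk) A = rk A := by
  have h0 := dualRk_spec rk hle hsubmod A
  have h1 := dualRk_spec rk hle hsubmod (Finset.univ \ A)
  rw [sdiff_sdiff_univ] at h1
  have h2 := dualRk_spec rk hle hsubmod Finset.univ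
  rw [Finset.sdiff_self, rk_empty rk hle] at h2
  have hc : (Finset.univ \ A).card = Finset.univ.card - A.card :=
    Finset.card_sdiff_of_subset (Finset.subset_univ A)
  have h3 := Finset.card_le_card (Finset.subset_univ A)
  have h4 := hmono A Finset.univ (Finset.subset_univ A)
  show A.card + dualRk rk (Finset.univ \ A) - dualRk rk Finset.univ = rk A
  omega

lemma dualRk_sep (hle : ∀ A : Finset α, rk A ≤ A.card)
    (hmono : ∀ A B : Finset α, A ⊆ B → rk A ≤ rk B)
    (hsubmod : ∀ A B : Finset α, rk (A ∪ B) + rk (A ∩ B) ≤ rk A + rk B)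
    {X : Finset α} (hsep : rk X + rk (Finset.univ \ X) = rk Finset.univ) :
    dualRk rk X + dualRk rk (Finset.univ \ X) = dualRk rk Finset.univ := by
  have h0 := dualRk_spec rk hle hsubmod X
  have h1 := dualRk_spec rk hle hsubmod (Finset.univ \ X)
  rw [sdiff_sdiff_univ] at h1
  have h2 := dualRk_spec rk hle hsubmod Finset.univ
  rw [Finset.sdiff_self, rk_empty rk hle] at h2
  have hc : (Finset.univ \ X).card = Finset.univ.card - X.card :=
    Finset.card_sdiff_of_subset (Finset.subset_univ X)
  have h3 := Finset.card_le_card (Finset.subset_univ X)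
  have h5 := hmono X Finset.univ (Finset.subset_univ X)
  omega

end Dual

section Comp

def circRel (rk : Finset α → ℕ) : α → α → Prop :=
  fun e f => ∃ C : Finset α, IsCircuit rk C ∧ e ∈ C ∧ f ∈ C

lemma eqvGen_mono' {r s : α → α → Prop}
    (h : ∀ a b, r a b → Relation.EqvGen s a b) :
    ∀ a b, Relation.EqvGen r a b → Relation.EqvGen s a b := by
  intro a b hab
  induction hab with
  | rel x y hxy => exact h x y hxy
  | refl x => exact Relation.EqvGen.refl x
  | symm x y _ ih => exact Relation.EqvGen.symm x y ih
  | trans x y z _ _ ih1 ih2 => exact Relation.EqvGen.trans x y z ih1 ih2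

lemma dual_circRel_le (rk : Finset α → ℕ)
    (hle : ∀ A : Finset α, rk A ≤ A.card)
    (hmono : ∀ A B : Finset α, A ⊆ B → rk A ≤ rk B)
    (hsubmod : ∀ A B : Finset α, rk (A ∪ B) + rk (A ∩ B) ≤ rk A + rk B)
    (e f : α) (hef : circRel (dualRk rk) e f) :
    Relation.EqvGen (circRel rk) e f := by
  obtain ⟨C, hC, heC, hfC⟩ := hef
  set R := circRel rk with hR
  set X : Finset α := Finset.univ.filter (fun g => Relation.EqvGen R e g) with hXdef
  have hmemX : ∀ g, g ∈ X ↔ Relation.EqvGen R e g := by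
    intro g; simp [hXdef]
  have heX : e ∈ X := (hmemX e).mpr (Relation.EqvGen.refl e)
  have hXcirc : ∀ C' : Finset α, IsCircuit rk C' → (C' ∩ X).Nonempty → C' ⊆ X := by
    rintro C' hC' ⟨a, ha⟩ b hb
    obtain ⟨haC, haX⟩ := Finset.mem_inter.mp ha
    have h1 : Relation.EqvGen R e a := (hmemX a).mp haX
    have h2 : R a b := ⟨C', hC', haC, hb⟩
    exact (hmemX b).mpr (Relation.EqvGen.trans _ _ _ h1 (Relation.EqvGen.rel _ _ h2))
  have hsepX : rk X + rk (Finset.univ \ X) = rk Finset.univ :=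
    separator_of_circuit_closed rk hle hmono hsubmod hXcirc
  have hsepX' : dualRk rk X + dualRk rk (Finset.univ \ X) = dualRk rk Finset.univ :=
    dualRk_sep rk hle hmono hsubmod hsepX
  have hCX : C ⊆ X :=
    circuit_subset_separator (dualRk rk) (dualRk_le rk hle hmono hsubmod)
      (dualRk_mono rk hle hmono hsubmod) (dualRk_submod rk hle hsubmod)
      hsepX' hC ⟨e, Finset.mem_inter.mpr ⟨heC, heX⟩⟩
  exact (hmemX f).mp (hCX hfC)

lemma ncompM_dual (rk : Finset α → ℕ)
    (hle : ∀ A : Finset α, rk A ≤ A.card)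
    (hmono : ∀ A B : Finset α, A ⊆ B → rk A ≤ rk B)
    (hsubmod : ∀ A B : Finset α, rk (A ∪ B) + rk (A ∩ B) ≤ rk A + rk B) :
    ncompM (dualRk rk) = ncompM rk := by
  have hdir1 : ∀ a b, Relation.EqvGen (circRel (dualRk rk)) a b →
      Relation.EqvGen (circRel rk) a b :=
    eqvGen_mono' (dual_circRel_le rk hle hmono hsubmod)
  have hdd : dualRk (dualRk rk) = rk := funext (dualRk_dualRk rk hle hmono hsubmod)
  have hdir2 : ∀ a b, Relation.EqvGen (circRel rk) a b →
      Relation.EqvGen (circRel (dualRk rk)) a b := by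
    have := eqvGen_mono' (dual_circRel_le (dualRk rk)
      (dualRk_le rk hle hmono hsubmod) (dualRk_mono rk hle hmono hsubmod)
      (dualRk_submod rk hle hsubmod))
    rwa [hdd] at this
  have hset : Relation.EqvGen.setoid (circRel (dualRk rk)) =
      Relation.EqvGen.setoid (circRel rk) :=
    Setoid.ext fun a b => ⟨hdir1 a b, hdir2 a b⟩
  unfold ncompM
  have : circRel (dualRk rk) = fun e f : α => ∃ C : Finset α,
      IsCircuit (dualRk rk) C ∧ e ∈ C ∧ f ∈ C := rfl
  rw [show (fun e f : α => ∃ C : Finset α, IsCircuit (dualRk rk) C ∧ e ∈ C ∧ f ∈ C) =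
    circRel (dualRk rk) from rfl,
    show (fun e f : α => ∃ C : Finset α, IsCircuit rk C ∧ e ∈ C ∧ f ∈ C) =
    circRel rk from rfl, hset]

end Comp

section Sum

def PS (f : Finset α → Finset α → ℤ) : ℤ :=
  ∑ B ∈ (Finset.univ : Finset α).powerset, ∑ A ∈ B.powerset, f A B

lemma PS_congr {f g : Finset α → Finset α → ℤ}
    (h : ∀ A B : Finset α, A ⊆ B → f A B = g A B) : PS f = PS g := by
  unfold PS
  refine Finset.sum_congr rfl fun B _ => Finset.sum_congr rfl fun A hA => ?_
  exact h A B (Finset.mem_powerset.mp hA)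

lemma PS_add (f g : Finset α → Finset α → ℤ) :
    PS (fun A B => f A B + g A B) = PS f + PS g := by
  unfold PS
  simp [Finset.sum_add_distrib]

lemma PS_sub (f g : Finset α → Finset α → ℤ) :
    PS (fun A B => f A B - g A B) = PS f - PS g := by
  unfold PS
  simp [Finset.sum_sub_distrib]

lemma PS_cmul (c : ℤ) (f : Finset α → Finset α → ℤ) :
    PS (fun A B => c * f A B) = c * PS f := by
  unfold PS
  simp [Finset.mul_sum]

lemma PS_reindex (f : Finset α → Finset α → ℤ) :
    PS f = PS (fun A B => f (Finset.univ \ B) (Finset.univ \ A)) := by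
  unfold PS
  rw [Finset.sum_sigma', Finset.sum_sigma']
  refine Finset.sum_nbij'
    (i := fun p => ⟨Finset.univ \ p.2, Finset.univ \ p.1⟩)
    (j := fun p => ⟨Finset.univ \ p.2, Finset.univ \ p.1⟩) ?_ ?_ ?_ ?_ ?_
  · rintro ⟨B, A⟩ hp
    rw [Finset.mem_sigma] at hp ⊢
    exact ⟨Finset.mem_powerset.mpr (Finset.subset_univ _),
      Finset.mem_powerset.mpr
        (Finset.sdiff_subset_sdiff (subset_refl _) (Finset.mem_powerset.mp hp.2))⟩
  · rintro ⟨B, A⟩ hp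
    rw [Finset.mem_sigma] at hp ⊢
    exact ⟨Finset.mem_powerset.mpr (Finset.subset_univ _),
      Finset.mem_powerset.mpr
        (Finset.sdiff_subset_sdiff (subset_refl _) (Finset.mem_powerset.mp hp.2))⟩
  · rintro ⟨B, A⟩ _
    simp [sdiff_sdiff_univ]
  · rintro ⟨B, A⟩ _
    simp [sdiff_sdiff_univ]
  · rintro ⟨B, A⟩ _
    simp [sdiff_sdiff_univ]

lemma inner_sign (B : Finset α) :
    ∑ A ∈ B.powerset, (-1 : ℤ) ^ (B.card - A.card) = if B = ∅ then 1 else 0 := by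
  have h : ∀ A ∈ B.powerset, (-1 : ℤ) ^ (B.card - A.card) =
      (-1) ^ B.card * (-1) ^ A.card := by
    intro A hA
    have hsub : A.card ≤ B.card := Finset.card_le_card (Finset.mem_powerset.mp hA)
    have h1 : (-1 : ℤ) ^ (B.card - A.card) * (-1) ^ A.card = (-1) ^ B.card := by
      rw [← pow_add]; congr 1; omega
    have h2 : (-1 : ℤ) ^ A.card * (-1) ^ A.card = 1 := by
      rw [← pow_add]; exact Even.neg_one_pow ⟨A.card, rfl⟩
    calc (-1 : ℤ) ^ (B.card - A.card)
        = (-1) ^ (B.card - A.card) * ((-1) ^ A.card * (-1) ^ A.card) := by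
          rw [h2, mul_one]
      _ = ((-1) ^ (B.card - A.card) * (-1) ^ A.card) * (-1) ^ A.card := by ring
      _ = (-1) ^ B.card * (-1) ^ A.card := by rw [h1]
  rw [Finset.sum_congr rfl h, ← Finset.mul_sum, Finset.sum_powerset_neg_one_pow_card]
  split_ifs with hB
  · subst hB; simp
  · simp

lemma PS_signB (g : Finset α → ℤ) :
    PS (fun A B => (-1 : ℤ) ^ (B.card - A.card) * g B) = g ∅ := by
  unfold PS
  have h : ∀ B ∈ (Finset.univ : Finset α).powerset,
      ∑ A ∈ B.powerset, (-1 : ℤ) ^ (B.card - A.card) * g B =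
      (if B = ∅ then 1 else 0) * g B := by
    intro B _
    rw [← Finset.sum_mul, inner_sign]
  rw [Finset.sum_congr rfl h]
  rw [Finset.sum_eq_single_of_mem ∅ (Finset.mem_powerset.mpr (Finset.empty_subset _))]
  · simp
  · intro B _ hB
    simp [hB]

lemma PS_signA (g : Finset α → ℤ) :
    PS (fun A B => (-1 : ℤ) ^ (B.card - A.card) * g A) = g Finset.univ := by
  rw [PS_reindex]
  have h1 : PS (fun A B => (-1 : ℤ) ^ ((Finset.univ \ A).card - (Finset.univ \ B).card) *
      g (Finset.univ \ B)) =
      PS (fun A B => (-1 : ℤ) ^ (B.card - A.card) * g (Finset.univ \ B)) := by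
    apply PS_congr
    intro A B hAB
    have hBu := Finset.card_le_card (Finset.subset_univ B)
    have hA := Finset.card_le_card hAB
    have c1 : (Finset.univ \ A).card = Finset.univ.card - A.card :=
      Finset.card_sdiff_of_subset (Finset.subset_univ A)
    have c2 : (Finset.univ \ B).card = Finset.univ.card - B.card :=
      Finset.card_sdiff_of_subset (Finset.subset_univ B)
    congr 2
    omega
  rw [h1, PS_signB]
  rw [Finset.sdiff_empty]

end Sum

section Main

lemma doubleSum_eq_PS (rk : Finset α → ℕ) :
    doubleSum rk = PS (fun A B =>
      (-1 : ℤ) ^ (B.card - A.card) * ((A.card : ℤ) - (rk A : ℤ)) * (rk B : ℤ)) := rfl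

lemma doubleSum_dual (rk : Finset α → ℕ)
    (hle : ∀ A : Finset α, rk A ≤ A.card)
    (hmono : ∀ A B : Finset α, A ⊆ B → rk A ≤ rk B)
    (hsubmod : ∀ A B : Finset α, rk (A ∪ B) + rk (A ∩ B) ≤ rk A + rk B) :
    doubleSum (dualRk rk) = doubleSum rk := by
  have step1 : doubleSum (dualRk rk) = PS (fun A B =>
      (-1 : ℤ) ^ (B.card - A.card) *
        ((rk Finset.univ : ℤ) - (rk (Finset.univ \ A) : ℤ)) *
        ((B.card : ℤ) + (rk (Finset.univ \ B) : ℤ) - (rk Finset.univ : ℤ))) := by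
    rw [doubleSum_eq_PS]
    apply PS_congr
    intro A B _
    have hA := dualRk_spec rk hle hsubmod A
    have hB := dualRk_spec rk hle hsubmod B
    have e1 : (A.card : ℤ) - (dualRk rk A : ℤ) =
        (rk Finset.univ : ℤ) - (rk (Finset.univ \ A) : ℤ) := by omega
    have e2 : (dualRk rk B : ℤ) =
        (B.card : ℤ) + (rk (Finset.univ \ B) : ℤ) - (rk Finset.univ : ℤ) := by omega
    rw [e1, e2]
  have step2 : doubleSum (dualRk rk) = PS (fun A B =>
      (-1 : ℤ) ^ (B.card - A.card) *
        ((rk Finset.univ : ℤ) - (rk B : ℤ)) *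
        (((Finset.univ : Finset α).card : ℤ) - (A.card : ℤ) + (rk A : ℤ) -
          (rk Finset.univ : ℤ))) := by
    rw [step1, PS_reindex]
    apply PS_congr
    intro A B hAB
    rw [sdiff_sdiff_univ, sdiff_sdiff_univ]
    have c1 : (Finset.univ \ A).card = Finset.univ.card - A.card :=
      Finset.card_sdiff_of_subset (Finset.subset_univ A)
    have c2 : (Finset.univ \ B).card = Finset.univ.card - B.card :=
      Finset.card_sdiff_of_subset (Finset.subset_univ B)
    have hA := Finset.card_le_card hAB
    have hB := Finset.card_le_card (Finset.subset_univ B)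
    have eexp : (Finset.univ \ A).card - (Finset.univ \ B).card = B.card - A.card := by
      omega
    have ecard : ((Finset.univ \ A).card : ℤ) =
        ((Finset.univ : Finset α).card : ℤ) - (A.card : ℤ) := by omega
    rw [eexp, ecard]
  have expand : PS (fun A B =>
      (-1 : ℤ) ^ (B.card - A.card) *
        ((rk Finset.univ : ℤ) - (rk B : ℤ)) *
        (((Finset.univ : Finset α).card : ℤ) - (A.card : ℤ) + (rk A : ℤ) -
          (rk Finset.univ : ℤ))) =
      ((rk Finset.univ : ℤ) * (((Finset.univ : Finset α).card : ℤ) - (rk Finset.univ : ℤ))) *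
        PS (fun A B : Finset α => (-1 : ℤ) ^ (B.card - A.card) * (1 : ℤ))
      - (rk Finset.univ : ℤ) *
        PS (fun A B : Finset α => (-1 : ℤ) ^ (B.card - A.card) * ((A.card : ℤ) - (rk A : ℤ)))
      - (((Finset.univ : Finset α).card : ℤ) - (rk Finset.univ : ℤ)) *
        PS (fun A B : Finset α => (-1 : ℤ) ^ (B.card - A.card) * (rk B : ℤ))
      + PS (fun A B : Finset α =>
          (-1 : ℤ) ^ (B.card - A.card) * ((A.card : ℤ) - (rk A : ℤ)) * (rk B : ℤ)) := by
    unfold PS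
    simp only [Finset.mul_sum, ← Finset.sum_sub_distrib, ← Finset.sum_add_distrib]
    refine Finset.sum_congr rfl fun B _ => Finset.sum_congr rfl fun A _ => ?_
    ring
  have v1 : PS (fun A B : Finset α => (-1 : ℤ) ^ (B.card - A.card) * (1 : ℤ)) = 1 := by
    simpa using PS_signB (fun _ : Finset α => (1 : ℤ))
  have v2 : PS (fun A B : Finset α =>
      (-1 : ℤ) ^ (B.card - A.card) * ((A.card : ℤ) - (rk A : ℤ))) =
      ((Finset.univ : Finset α).card : ℤ) - (rk Finset.univ : ℤ) := by
    simpa using PS_signA (fun A : Finset α => (A.card : ℤ) - (rk A : ℤ))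
  have v3 : PS (fun A B : Finset α => (-1 : ℤ) ^ (B.card - A.card) * (rk B : ℤ)) = 0 := by
    have := PS_signB (fun B : Finset α => (rk B : ℤ))
    simp only [this, rk_empty rk hle, Nat.cast_zero]
  rw [step2, expand, v1, v2, v3, doubleSum_eq_PS]
  ring

end Main


/-- If the identity `|E| - c(M) = Σ_{A ⊆ B ⊆ E} (-1)^{|B|-|A|} ℓ(A) rk(B)` holds for
a matroid `M` (given by a rank function `rk` satisfying the rank axioms), then it also
holds for the dual matroid `M*`. -/
theorem dual_identity (rk : Finset α → ℕ)
    (hle : ∀ A, rk A ≤ A.card)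
    (hmono : ∀ A B : Finset α, A ⊆ B → rk A ≤ rk B)
    (hsubmod : ∀ A B : Finset α, rk (A ∪ B) + rk (A ∩ B) ≤ rk A + rk B)
    (h : (Fintype.card α : ℤ) - (ncompM rk : ℤ) = doubleSum rk) :
    (Fintype.card α : ℤ) - (ncompM (dualRk rk) : ℤ) = doubleSum (dualRk rk) := by
  rw [ncompM_dual rk hle hmono hsubmod, doubleSum_dual rk hle hmono hsubmod]
  exact h

end Stmt7
end

section
/- Let G be a k-connected finite graph without self-loops, where k ≥ 1. Define c_i(G) = (-1)^{i-1} Σ_{A ⊆ E(G)} (-1)^{ℓ(A)} β(A) binom(rk(A), i) for positive integers i. Then c₁(G) = c₂(G) = … = c_{k-1}(G) = 1, and c_k(G) = 1 + Σ_{S ⊂ V(G), |S| = k} (|π₀(G \ S)| - 1). -/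
open scoped Classical

namespace Stmt10

variable {V E : Type} [Fintype V] [Fintype E] [DecidableEq V] [DecidableEq E]

/-- Adjacency of two vertices via an edge in the edge set `A`. -/
def Adj (ends : E → Sym2 V) (A : Finset E) (u v : V) : Prop :=
  ∃ e ∈ A, ends e = s(u, v)

/-- The number of connected components of the spanning subgraph `(V, A)`. -/
noncomputable def ncomp (ends : E → Sym2 V) (A : Finset E) : ℕ :=
  Nat.card (Quotient (Relation.EqvGen.setoid (Adj ends A)))

/-- The rank of the spanning subgraph `(V, A)`: `|V| - |π₀(A)|`. -/
noncomputable def rk (ends : E → Sym2 V) (A : Finset E) : ℕ :=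
  Fintype.card V - ncomp ends A

/-- Crapo's beta invariant of the spanning subgraph `(V, A)`. -/
noncomputable def beta (ends : E → Sym2 V) (A : Finset E) : ℤ :=
  (-1) ^ rk ends A * ∑ B ∈ A.powerset, (-1 : ℤ) ^ B.card * (rk ends B : ℤ)

/-- Adjacency in the graph obtained by deleting the vertex set `S`
(and all incident edges). -/
def AdjDel (ends : E → Sym2 V) (S : Finset V) (u v : V) : Prop :=
  ∃ e : E, (∀ w ∈ ends e, w ∉ S) ∧ ends e = s(u, v)

/-- The number of connected components `|π₀(G \ S)|` of the graph obtained by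
deleting the vertex set `S`. -/
noncomputable def ncompDel (ends : E → Sym2 V) (S : Finset V) : ℕ :=
  Nat.card (Quotient (Relation.EqvGen.setoid
    (fun u v : {x : V // x ∉ S} => AdjDel ends S u.1 v.1)))

/-- The graph is `k`-connected: it has more than `k` vertices and deleting any
fewer than `k` vertices leaves a connected graph. -/
def KConnected (ends : E → Sym2 V) (k : ℕ) : Prop :=
  k < Fintype.card V ∧ ∀ S : Finset V, S.card < k → ncompDel ends S = 1

/-- The invariant `c_i(G) = (-1)^{i-1} Σ_{A ⊆ E(G)} (-1)^{ℓ(A)} β(A) C(rk(A), i)`. -/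
noncomputable def cInv (ends : E → Sym2 V) (i : ℕ) : ℤ :=
  (-1 : ℤ) ^ (i - 1) *
    ∑ A ∈ (Finset.univ : Finset E).powerset,
      (-1 : ℤ) ^ (A.card - rk ends A) * beta ends A * ((rk ends A).choose i : ℤ)

set_option linter.unusedSectionVars false
set_option maxHeartbeats 1000000

open Finset

/-- generic: EqvGen of a relation with one extra pair -/
lemma eqvGen_sup_pair {α : Type} {r : α → α → Prop} {u₀ v₀ : α} {x y : α}
    (h : Relation.EqvGen (fun a b => r a b ∨ (a = u₀ ∧ b = v₀) ∨ (a = v₀ ∧ b = u₀)) x y) :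
    Relation.EqvGen r x y ∨
      (Relation.EqvGen r x u₀ ∧ Relation.EqvGen r v₀ y) ∨
      (Relation.EqvGen r x v₀ ∧ Relation.EqvGen r u₀ y) := by
  induction h with
  | rel a b hab =>
    rcases hab with hab | ⟨rfl, rfl⟩ | ⟨rfl, rfl⟩
    · exact Or.inl (Relation.EqvGen.rel _ _ hab)
    · exact Or.inr (Or.inl ⟨Relation.EqvGen.refl _, Relation.EqvGen.refl _⟩)
    · exact Or.inr (Or.inr ⟨Relation.EqvGen.refl _, Relation.EqvGen.refl _⟩)
  | refl a => exact Or.inl (Relation.EqvGen.refl _)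
  | symm a b _ ih =>
    rcases ih with h1 | ⟨h1, h2⟩ | ⟨h1, h2⟩
    · exact Or.inl h1.symm
    · exact Or.inr (Or.inr ⟨h2.symm, h1.symm⟩)
    · exact Or.inr (Or.inl ⟨h2.symm, h1.symm⟩)
  | trans a b c _ _ ih1 ih2 =>
    have T : ∀ {x y z : α}, Relation.EqvGen r x y → Relation.EqvGen r y z → Relation.EqvGen r x z :=
      fun h1 h2 => Relation.EqvGen.trans _ _ _ h1 h2
    have Sy : ∀ {x y : α}, Relation.EqvGen r x y → Relation.EqvGen r y x :=
      fun h => Relation.EqvGen.symm _ _ h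
    rcases ih1 with h1 | ⟨h1, h2⟩ | ⟨h1, h2⟩
    · rcases ih2 with h3 | ⟨h3, h4⟩ | ⟨h3, h4⟩
      · exact Or.inl (T h1 h3)
      · exact Or.inr (Or.inl ⟨T h1 h3, h4⟩)
      · exact Or.inr (Or.inr ⟨T h1 h3, h4⟩)
    · rcases ih2 with h3 | ⟨h3, h4⟩ | ⟨h3, h4⟩
      · exact Or.inr (Or.inl ⟨h1, T h2 h3⟩)
      · exact Or.inl (T h1 (T (Sy (T h2 h3)) h4))
      · exact Or.inl (T h1 h4)
    · rcases ih2 with h3 | ⟨h3, h4⟩ | ⟨h3, h4⟩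
      · exact Or.inr (Or.inr ⟨h1, T h2 h3⟩)
      · exact Or.inl (T h1 h4)
      · exact Or.inl (T h1 (T (Sy (T h2 h3)) h4))



noncomputable def stA (ends : E → Sym2 V) (A : Finset E) : Setoid V :=
  Relation.EqvGen.setoid (Adj ends A)

lemma ncomp_def (ends : E → Sym2 V) (A : Finset E) :
    ncomp ends A = Fintype.card (Quotient (stA ends A)) := by
  rw [ncomp, Nat.card_eq_fintype_card]; rfl

lemma ncomp_le_cardV (ends : E → Sym2 V) (A : Finset E) :
    ncomp ends A ≤ Fintype.card V := by
  rw [ncomp_def]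
  exact Fintype.card_quotient_le _

lemma eqvGen_empty {ends : E → Sym2 V} {x y : V}
    (h : Relation.EqvGen (Adj ends (∅ : Finset E)) x y) : x = y := by
  induction h with
  | rel a b hab => obtain ⟨e, he, -⟩ := hab; exact absurd he (Finset.notMem_empty e)
  | refl a => rfl
  | symm a b _ ih => exact ih.symm
  | trans a b c _ _ ih1 ih2 => exact ih1.trans ih2

lemma ncomp_empty (ends : E → Sym2 V) : ncomp ends (∅ : Finset E) = Fintype.card V := by
  rw [ncomp_def]
  refine (Fintype.card_congr (Equiv.ofBijective (fun v => (⟦v⟧ : Quotient (stA ends ∅))) ⟨?_, ?_⟩)).symm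
  · intro a b hab
    exact eqvGen_empty (Quotient.exact hab)
  · intro x
    exact Quotient.exists_rep x

lemma ncomp_le_of_subset (ends : E → Sym2 V) {A B : Finset E} (hAB : A ⊆ B) :
    ncomp ends B ≤ ncomp ends A := by
  rw [ncomp_def, ncomp_def]
  have resp : ∀ a b : V, (stA ends A).r a b → ((⟦a⟧ : Quotient (stA ends B)) = ⟦b⟧) := by
    intro a b hab
    exact Quotient.sound (Relation.EqvGen.mono (fun x y ⟨e, he, hx⟩ => ⟨e, hAB he, hx⟩) _ _ hab)
  exact Fintype.card_le_of_surjective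
    (Quotient.lift (fun v => (⟦v⟧ : Quotient (stA ends B))) resp)
    (fun x => by obtain ⟨v, rfl⟩ := Quotient.exists_rep x; exact ⟨⟦v⟧, rfl⟩)

lemma ncomp_insert_ge (ends : E → Sym2 V) (A : Finset E) (e : E) :
    ncomp ends A ≤ ncomp ends (insert e A) + 1 := by
  obtain ⟨⟨u₀, v₀⟩, he⟩ := Quot.exists_rep (ends e)
  have he' : ends e = s(u₀, v₀) := he.symm
  have hiff : ∀ a b : V, Adj ends (insert e A) a b ↔
      (Adj ends A a b ∨ (a = u₀ ∧ b = v₀) ∨ (a = v₀ ∧ b = u₀)) := by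
    intro a b
    constructor
    · rintro ⟨e', he'', hx⟩
      rcases Finset.mem_insert.mp he'' with rfl | hmem
      · rw [he'] at hx
        rcases Sym2.eq_iff.mp hx with ⟨rfl, rfl⟩ | ⟨rfl, rfl⟩
        · exact Or.inr (Or.inl ⟨rfl, rfl⟩)
        · exact Or.inr (Or.inr ⟨rfl, rfl⟩)
      · exact Or.inl ⟨e', hmem, hx⟩
    · rintro (⟨e', hmem, hx⟩ | ⟨rfl, rfl⟩ | ⟨rfl, rfl⟩)
      · exact ⟨e', Finset.mem_insert_of_mem hmem, hx⟩
      · exact ⟨e, Finset.mem_insert_self _ _, he'⟩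
      · exact ⟨e, Finset.mem_insert_self _ _, by rw [he', Sym2.eq_swap]⟩
  have resp : ∀ a b : V, (stA ends A).r a b →
      ((⟦a⟧ : Quotient (stA ends (insert e A))) = ⟦b⟧) := by
    intro a b hab
    exact Quotient.sound (Relation.EqvGen.mono
      (fun x y ⟨e', h1, h2⟩ => ⟨e', Finset.mem_insert_of_mem h1, h2⟩) _ _ hab)
  let φ : Quotient (stA ends A) → Quotient (stA ends (insert e A)) :=
    Quotient.lift (fun v => (⟦v⟧ : Quotient (stA ends (insert e A)))) resp
  have key : ∀ x y : Quotient (stA ends A), φ x = φ y →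
      x = y ∨ (x = ⟦u₀⟧ ∧ y = ⟦v₀⟧) ∨ (x = ⟦v₀⟧ ∧ y = ⟦u₀⟧) := by
    intro x y
    obtain ⟨a, rfl⟩ := Quotient.exists_rep x
    obtain ⟨b, rfl⟩ := Quotient.exists_rep y
    intro hab
    have h1 : Relation.EqvGen (Adj ends (insert e A)) a b := Quotient.exact hab
    have h2 := Relation.EqvGen.mono (fun x y h => (hiff x y).mp h) _ _ h1
    rcases eqvGen_sup_pair h2 with h3 | ⟨h3, h4⟩ | ⟨h3, h4⟩
    · exact Or.inl (Quotient.sound h3)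
    · exact Or.inr (Or.inl ⟨Quotient.sound h3, (Quotient.sound h4).symm⟩)
    · exact Or.inr (Or.inr ⟨Quotient.sound h3, (Quotient.sound h4).symm⟩)
  have hinj : Set.InjOn φ
      ((Finset.univ.erase (⟦u₀⟧ : Quotient (stA ends A))) : Finset (Quotient (stA ends A))) := by
    intro x hx y hy hxy
    rcases key x y hxy with h | ⟨h1, h2⟩ | ⟨h1, h2⟩
    · exact h
    · exact absurd h1 (by simpa using hx)
    · exact absurd h2 (by simpa using hy)
  have hcard := Finset.card_le_card_of_injOn φ (fun x _ => Finset.mem_univ (φ x)) hinj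
  rw [Finset.card_erase_of_mem (Finset.mem_univ _), Finset.card_univ, Finset.card_univ] at hcard
  rw [ncomp_def, ncomp_def]
  omega

lemma rk_le_card (ends : E → Sym2 V) (A : Finset E) : rk ends A ≤ A.card := by
  classical
  induction A using Finset.induction_on with
  | empty => simp [rk, ncomp_empty]
  | @insert e s hes ih =>
    have h1 := ncomp_insert_ge ends s e
    have h2 := ncomp_le_cardV ends s
    rw [Finset.card_insert_of_notMem hes]
    rw [rk] at ih ⊢
    omega


section color
variable {q : ℕ} (ends : E → Sym2 V)

noncomputable def Kf (f : V → Fin q) : Finset E :=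
  Finset.univ.filter (fun e => ∀ w ∈ ends e, ∀ w' ∈ ends e, f w = f w')

lemma mem_Kf {f : V → Fin q} {e : E} :
    e ∈ Kf ends f ↔ ∀ w ∈ ends e, ∀ w' ∈ ends e, f w = f w' := by
  simp [Kf]

lemma colorConst {f : V → Fin q} {x y : V}
    (h : Relation.EqvGen (Adj ends (Kf ends f)) x y) : f x = f y := by
  induction h with
  | rel a b hab =>
    obtain ⟨e, he, hx⟩ := hab
    exact (mem_Kf ends).mp he a (by rw [hx]; exact Sym2.mem_mk_left a b)
      b (by rw [hx]; exact Sym2.mem_mk_right a b)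
  | refl a => rfl
  | symm a b _ ih => exact ih.symm
  | trans a b c _ _ ih1 ih2 => exact ih1.trans ih2

lemma colorConst' {f : V → Fin q} {A : Finset E} (hf : A ⊆ Kf ends f) {x y : V}
    (h : Relation.EqvGen (Adj ends A) x y) : f x = f y :=
  colorConst ends (Relation.EqvGen.mono (fun u v ⟨e, he, hx⟩ => ⟨e, hf he, hx⟩) _ _ h)

noncomputable def colorEquiv (A : Finset E) :
    {f : V → Fin q // A ⊆ Kf ends f} ≃ (Quotient (stA ends A) → Fin q) where
  toFun := fun ⟨f, hf⟩ => Quotient.lift f (fun a b hab => colorConst' ends hf hab)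
  invFun := fun g => ⟨fun v => g ⟦v⟧, by
    intro e he
    rw [mem_Kf]
    intro w hw w' hw'
    rcases eq_or_ne w w' with rfl | hne
    · rfl
    · have : ends e = s(w, w') := (Sym2.mem_and_mem_iff hne).mp ⟨hw, hw'⟩
      exact congrArg g (Quotient.sound (Relation.EqvGen.rel _ _ ⟨e, he, this⟩))⟩
  left_inv := fun ⟨f, hf⟩ => Subtype.ext (funext fun v => rfl)
  right_inv := fun g => funext fun x => by
    obtain ⟨v, rfl⟩ := Quotient.exists_rep x; rfl

lemma countA (A : Finset E) :
    ((Finset.univ : Finset (V → Fin q)).filter (fun f => A ⊆ Kf ends f)).card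
      = q ^ ncomp ends A := by
  rw [← Fintype.card_subtype]
  rw [Fintype.card_congr (colorEquiv ends A)]
  rw [Fintype.card_fun, Fintype.card_fin, ncomp_def]

noncomputable def Sf (f : V → Fin q) (c : Fin q) : Finset V :=
  Finset.univ.filter (fun v => f v ≠ c)

lemma not_mem_Sf {f : V → Fin q} {c : Fin q} {v : V} : v ∉ Sf f c ↔ f v = c := by
  simp [Sf]

noncomputable def colorEquivS (S : Finset V) (c : Fin q) :
    {f : V → Fin q // Sf f c = S} ≃ (S → {d : Fin q // d ≠ c}) where
  toFun := fun ⟨f, hf⟩ v => ⟨f v.1, by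
    have : (v : V) ∈ Sf f c := hf ▸ v.2
    simpa [Sf] using this⟩
  invFun := fun g => ⟨fun v => if h : v ∈ S then (g ⟨v, h⟩).1 else c, by
    ext v
    by_cases h : v ∈ S
    · simp [Sf, h, (g ⟨v, h⟩).2]
    · simp [Sf, h]⟩
  left_inv := fun ⟨f, hf⟩ => Subtype.ext (funext fun v => by
    by_cases h : v ∈ S
    · simp [h]
    · simp only [dif_neg h]
      have : v ∉ Sf f c := fun hv => h (hf ▸ hv)
      exact (not_mem_Sf.mp this).symm)
  right_inv := fun g => funext fun v => Subtype.ext (by simp [v.2])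

lemma countS (hq : 1 ≤ q) (S : Finset V) (c : Fin q) :
    ((Finset.univ : Finset (V → Fin q)).filter (fun f => Sf f c = S)).card
      = (q - 1) ^ S.card := by
  rw [← Fintype.card_subtype]
  rw [Fintype.card_congr (colorEquivS S c)]
  rw [Fintype.card_fun (α := S) (β := {d : Fin q // d ≠ c})]
  have hbase : Fintype.card {d : Fin q // d ≠ c} = q - 1 := by
    have h1 : Fintype.card {d : Fin q // d ≠ c}
        = Fintype.card (Fin q) - Fintype.card {d : Fin q // d = c} :=
      Fintype.card_subtype_compl _
    rw [h1, Fintype.card_subtype_eq, Fintype.card_fin]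
  rw [hbase]
  congr 1
  simp

end color


noncomputable def delSt (ends : E → Sym2 V) (S : Finset V) : Setoid {x : V // x ∉ S} :=
  Relation.EqvGen.setoid (fun u v : {x : V // x ∉ S} => AdjDel ends S u.1 v.1)

lemma ncompDel_def (ends : E → Sym2 V) (S : Finset V) :
    ncompDel ends S = Fintype.card (Quotient (delSt ends S)) := by
  rw [ncompDel, Nat.card_eq_fintype_card]; rfl

lemma eqvGen_map {α β : Type} {r : α → α → Prop} {r' : β → β → Prop} (φ : α → β)
    (h : ∀ a b, r a b → Relation.EqvGen r' (φ a) (φ b)) {x y : α}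
    (hxy : Relation.EqvGen r x y) : Relation.EqvGen r' (φ x) (φ y) := by
  induction hxy with
  | rel a b hab => exact h a b hab
  | refl a => exact Relation.EqvGen.refl _
  | symm a b _ ih => exact Relation.EqvGen.symm _ _ ih
  | trans a b c _ _ ih1 ih2 => exact Relation.EqvGen.trans _ _ _ ih1 ih2

variable {q : ℕ} (ends : E → Sym2 V) (f : V → Fin q)

lemma keylift {x y : V}
    (h : Relation.EqvGen (Adj ends (Kf ends f)) x y) :
    ∀ (c : Fin q) (hx : x ∉ Sf f c) (hy : y ∉ Sf f c),
      Relation.EqvGen (fun u v : {z : V // z ∉ Sf f c} => AdjDel ends (Sf f c) u.1 v.1)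
        ⟨x, hx⟩ ⟨y, hy⟩ := by
  induction h with
  | rel a b hab =>
    intro c hx hy
    obtain ⟨e, heK, hse⟩ := hab
    refine Relation.EqvGen.rel _ _ ⟨e, ?_, hse⟩
    intro w hw
    have hfa : f w = f a := (mem_Kf ends).mp heK w hw a (by rw [hse]; exact Sym2.mem_mk_left a b)
    rw [not_mem_Sf] at hx ⊢
    rw [hfa, hx]
  | refl a => intro c hx hy; exact Relation.EqvGen.refl _
  | symm a b hab ih => intro c hx hy; exact Relation.EqvGen.symm _ _ (ih c hy hx)
  | trans a b c' hab hbc ih1 ih2 =>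
    intro c hx hy
    have hb : b ∉ Sf f c := by
      rw [not_mem_Sf] at hx ⊢
      rw [← colorConst ends hab, hx]
    exact Relation.EqvGen.trans _ _ _ (ih1 c hx hb) (ih2 c hb hy)

lemma sig_eq (c c' : Fin q) (hcc : c = c') (x x' : V) (hxx : x = x')
    (h1 : x ∉ Sf f c) (h2 : x' ∉ Sf f c') :
    (⟨c, ⟦⟨x, h1⟩⟧⟩ : Σ c : Fin q, Quotient (delSt ends (Sf f c)))
      = ⟨c', ⟦⟨x', h2⟩⟧⟩ := by
  subst hcc; subst hxx; rfl

noncomputable def sigmaEquiv :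
    (Σ c : Fin q, Quotient (delSt ends (Sf f c))) ≃ Quotient (stA ends (Kf ends f)) where
  toFun := fun p => Quotient.lift
    (fun u : {z : V // z ∉ Sf f p.1} => (⟦u.1⟧ : Quotient (stA ends (Kf ends f))))
    (fun u v huv => Quotient.sound (eqvGen_map Subtype.val
      (fun a b ⟨e, hins, hse⟩ => Relation.EqvGen.rel _ _
        ⟨e, (mem_Kf ends).mpr (fun w hw w' hw' => by
          have h1 : f w = p.1 := not_mem_Sf.mp (hins w hw)
          have h2 : f w' = p.1 := not_mem_Sf.mp (hins w' hw')
          rw [h1, h2]), hse⟩) huv)) p.2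
  invFun := Quotient.lift
    (fun v => (⟨f v, ⟦⟨v, not_mem_Sf.mpr rfl⟩⟧⟩ : Σ c : Fin q, Quotient (delSt ends (Sf f c))))
    (by
      intro v w hvw
      have hvw' : Relation.EqvGen (Adj ends (Kf ends f)) v w := hvw
      have hc : f w = f v := (colorConst ends hvw').symm
      have hw' : w ∉ Sf f (f v) := not_mem_Sf.mpr hc
      have e1 : (⟨f v, ⟦⟨v, not_mem_Sf.mpr rfl⟩⟧⟩ : Σ c : Fin q, Quotient (delSt ends (Sf f c)))
          = ⟨f v, ⟦⟨w, hw'⟩⟧⟩ :=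
        congrArg (Sigma.mk (f v)) (Quotient.sound (keylift ends f hvw' (f v) _ hw'))
      have e2 : (⟨f w, ⟦⟨w, not_mem_Sf.mpr rfl⟩⟧⟩ : Σ c : Fin q, Quotient (delSt ends (Sf f c)))
          = ⟨f v, ⟦⟨w, hw'⟩⟧⟩ := sig_eq ends f _ _ hc w w rfl _ _
      exact e1.trans e2.symm)
  left_inv := by
    rintro ⟨c, xq⟩
    obtain ⟨u, rfl⟩ := Quotient.exists_rep xq
    exact sig_eq ends f _ _ (not_mem_Sf.mp u.2) _ _ rfl _ _
  right_inv := by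
    intro x
    obtain ⟨v, rfl⟩ := Quotient.exists_rep x
    rfl

lemma C1 : ncomp ends (Kf ends f) = ∑ c : Fin q, ncompDel ends (Sf f c) := by
  rw [ncomp_def, ← Fintype.card_congr (sigmaEquiv ends f), Fintype.card_sigma]
  exact Finset.sum_congr rfl (fun c _ => (ncompDel_def ends (Sf f c)).symm)


lemma filter_powerset_subset {α : Type} [DecidableEq α] (D K : Finset α) :
    (D.powerset.filter (fun C => C ⊆ K)) = (D ∩ K).powerset := by
  ext C
  simp only [Finset.mem_filter, Finset.mem_powerset, Finset.subset_inter_iff]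

lemma inner_I {α : Type} [DecidableEq α] [Fintype α] (K B : Finset α) :
    ∑ A ∈ ((Finset.univ : Finset α).powerset.filter (fun A => B ⊆ A)),
        (-1 : ℤ)^A.card * (if A ⊆ K then 1 else 0)
      = (-1 : ℤ)^B.card * (if K = B then 1 else 0) := by
  have hre : ∑ A ∈ ((Finset.univ : Finset α).powerset.filter (fun A => B ⊆ A)),
        (-1 : ℤ)^A.card * (if A ⊆ K then 1 else 0)
      = ∑ C ∈ (Finset.univ \ B).powerset, (-1 : ℤ)^(B ∪ C).card * (if B ∪ C ⊆ K then 1 else 0) := by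
    refine Finset.sum_nbij' (fun A => A \ B) (fun C => B ∪ C) ?_ ?_ ?_ ?_ ?_
    · intro A hA
      exact Finset.mem_powerset.mpr (Finset.sdiff_subset_sdiff (Finset.subset_univ _) (Finset.Subset.refl _))
    · intro C hC
      exact Finset.mem_filter.mpr ⟨Finset.mem_powerset.mpr (Finset.subset_univ _), Finset.subset_union_left⟩
    · intro A hA
      simp only [Finset.mem_filter, Finset.mem_powerset] at hA
      exact Finset.union_sdiff_of_subset hA.2
    · intro C hC
      simp only [Finset.mem_powerset] at hC
      have hd : Disjoint B C := Finset.disjoint_left.mpr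
        (fun a haB haC => (Finset.mem_sdiff.mp (hC haC)).2 haB)
      exact Finset.union_sdiff_cancel_left hd
    · intro A hA
      simp only [Finset.mem_filter, Finset.mem_powerset] at hA
      rw [Finset.union_sdiff_of_subset hA.2]
  rw [hre]
  by_cases hBK : B ⊆ K
  · have step : ∀ C ∈ (Finset.univ \ B).powerset,
        (-1 : ℤ)^(B ∪ C).card * (if B ∪ C ⊆ K then 1 else 0)
          = (-1 : ℤ)^B.card * (if C ⊆ K then (-1 : ℤ)^C.card else 0) := by
      intro C hC
      simp only [Finset.mem_powerset] at hC
      have hd : Disjoint B C := Finset.disjoint_left.mpr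
        (fun a haB haC => (Finset.mem_sdiff.mp (hC haC)).2 haB)
      rw [Finset.card_union_of_disjoint hd, pow_add]
      have hiff : (B ∪ C ⊆ K) ↔ (C ⊆ K) := by
        rw [Finset.union_subset_iff]
        exact ⟨fun h => h.2, fun h => ⟨hBK, h⟩⟩
      simp only [hiff]
      by_cases h : C ⊆ K <;> simp [h, mul_comm, mul_assoc]
    rw [Finset.sum_congr rfl step, ← Finset.mul_sum]
    congr 1
    rw [← Finset.sum_filter, filter_powerset_subset, Finset.sum_powerset_neg_one_pow_card]
    have hiff2 : ((Finset.univ \ B) ∩ K = ∅) ↔ (K = B) := by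
      have h1 : (Finset.univ \ B) ∩ K = K \ B := by
        ext a; simp [Finset.mem_sdiff, Finset.mem_inter, and_comm]
      rw [h1, Finset.sdiff_eq_empty_iff_subset]
      exact ⟨fun h => Finset.Subset.antisymm h hBK, fun h => h ▸ Finset.Subset.refl _⟩
    simp only [hiff2]
  · have step : ∀ C ∈ (Finset.univ \ B).powerset,
        (-1 : ℤ)^(B ∪ C).card * (if B ∪ C ⊆ K then 1 else 0) = 0 := by
      intro C hC
      have : ¬ (B ∪ C ⊆ K) := fun h => hBK (Finset.union_subset_iff.mp h).1
      simp [this]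
    rw [Finset.sum_congr rfl step, Finset.sum_const_zero]
    have : ¬ (K = B) := fun h => hBK (h ▸ Finset.Subset.refl _)
    simp [this]


lemma sumf_rk (ends : E → Sym2 V) (q : ℕ) :
    ∑ A ∈ (Finset.univ : Finset E).powerset,
        (-1 : ℤ)^(A.card - rk ends A) * beta ends A * (q : ℤ)^(ncomp ends A)
      = ∑ f : V → Fin q, (rk ends (Kf ends f) : ℤ) := by
  have hA : ∀ A ∈ (Finset.univ : Finset E).powerset,
      (-1:ℤ)^(A.card - rk ends A) * beta ends A * (q:ℤ)^(ncomp ends A)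
        = ∑ B ∈ A.powerset, ∑ f : V → Fin q,
            ((-1:ℤ)^A.card * ((-1:ℤ)^B.card * (rk ends B : ℤ)))
              * (if A ⊆ Kf ends f then 1 else 0) := by
    intro A _
    have h1 : (-1:ℤ)^(A.card - rk ends A) * beta ends A
        = ∑ B ∈ A.powerset, (-1:ℤ)^A.card * ((-1:ℤ)^B.card * (rk ends B : ℤ)) := by
      rw [beta, ← mul_assoc, ← pow_add, Nat.sub_add_cancel (rk_le_card ends A), Finset.mul_sum]
    have h2 : ((q:ℤ))^(ncomp ends A) = ∑ f : V → Fin q, (if A ⊆ Kf ends f then (1:ℤ) else 0) := by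
      rw [Finset.sum_boole, countA ends A]
      push_cast
      ring
    rw [h1, h2, Finset.sum_mul_sum]
  rw [Finset.sum_congr rfl hA]
  rw [Finset.sum_congr rfl (fun A _ => Finset.sum_comm)]
  rw [Finset.sum_comm]
  refine Finset.sum_congr rfl (fun f _ => ?_)
  have hswap : ∑ A ∈ (Finset.univ : Finset E).powerset, ∑ B ∈ A.powerset,
      ((-1:ℤ)^A.card * ((-1:ℤ)^B.card * (rk ends B : ℤ))) * (if A ⊆ Kf ends f then 1 else 0)
    = ∑ B ∈ (Finset.univ : Finset E).powerset,
        ∑ A ∈ (Finset.univ : Finset E).powerset.filter (fun A => B ⊆ A),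
          ((-1:ℤ)^A.card * ((-1:ℤ)^B.card * (rk ends B : ℤ))) * (if A ⊆ Kf ends f then 1 else 0) := by
    refine Finset.sum_comm' ?_
    intro A B
    simp only [Finset.mem_powerset, Finset.mem_filter]
    constructor
    · rintro ⟨h1, h2⟩; exact ⟨⟨h1, h2⟩, h2.trans h1⟩
    · rintro ⟨⟨h1, h2⟩, _⟩; exact ⟨h1, h2⟩
  rw [hswap]
  have hinner : ∀ B ∈ (Finset.univ : Finset E).powerset,
      (∑ A ∈ (Finset.univ : Finset E).powerset.filter (fun A => B ⊆ A),
        ((-1:ℤ)^A.card * ((-1:ℤ)^B.card * (rk ends B : ℤ))) * (if A ⊆ Kf ends f then 1 else 0))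
      = (rk ends B : ℤ) * (if B = Kf ends f then 1 else 0) := by
    intro B _
    have : ∀ A ∈ (Finset.univ : Finset E).powerset.filter (fun A => B ⊆ A),
        ((-1:ℤ)^A.card * ((-1:ℤ)^B.card * (rk ends B : ℤ))) * (if A ⊆ Kf ends f then 1 else 0)
        = ((-1:ℤ)^B.card * (rk ends B : ℤ)) * ((-1:ℤ)^A.card * (if A ⊆ Kf ends f then 1 else 0)) := by
      intro A _; ring
    rw [Finset.sum_congr rfl this, ← Finset.mul_sum, inner_I (Kf ends f) B]
    have hsq : ((-1:ℤ)^B.card) * ((-1:ℤ)^B.card) = 1 := by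
      rw [← mul_pow]; norm_num
    have hite : (if Kf ends f = B then (1:ℤ) else 0) = (if B = Kf ends f then (1:ℤ) else 0) := by
      by_cases h : B = Kf ends f
      · simp [h]
      · have h' : ¬ (Kf ends f = B) := fun hh => h hh.symm
        simp [h, h']
    rw [hite]
    calc ((-1:ℤ)^B.card * (rk ends B : ℤ)) * ((-1:ℤ)^B.card * (if B = Kf ends f then (1:ℤ) else 0))
        = (((-1:ℤ)^B.card) * ((-1:ℤ)^B.card)) * ((rk ends B : ℤ) * (if B = Kf ends f then (1:ℤ) else 0)) := by
          ring
      _ = (rk ends B : ℤ) * (if B = Kf ends f then (1:ℤ) else 0) := by rw [hsq, one_mul]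
  rw [Finset.sum_congr rfl hinner]
  have : ∑ B ∈ (Finset.univ : Finset E).powerset, (rk ends B : ℤ) * (if B = Kf ends f then 1 else 0)
      = ∑ B ∈ (Finset.univ : Finset E).powerset, (if B = Kf ends f then (rk ends B : ℤ) else 0) := by
    refine Finset.sum_congr rfl (fun B _ => ?_)
    by_cases h : B = Kf ends f <;> simp [h]
  rw [this, Finset.sum_ite_eq' _ (Kf ends f) (fun B => (rk ends B : ℤ)),
    if_pos (Finset.mem_powerset.mpr (Finset.subset_univ _))]

lemma sumf_ncomp (ends : E → Sym2 V) (q : ℕ) (hq : 1 ≤ q) :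
    ∑ f : V → Fin q, (ncomp ends (Kf ends f) : ℤ)
      = (q : ℤ) * ∑ S ∈ (Finset.univ : Finset V).powerset,
          (ncompDel ends S : ℤ) * ((q : ℤ) - 1)^S.card := by
  have h1 : ∀ f : V → Fin q, (ncomp ends (Kf ends f) : ℤ)
      = ∑ c : Fin q, (ncompDel ends (Sf f c) : ℤ) := by
    intro f
    rw [C1 ends f]
    push_cast
    rfl
  rw [Finset.sum_congr rfl (fun f _ => h1 f), Finset.sum_comm]
  have h2 : ∀ c : Fin q,
      ∑ f : V → Fin q, (ncompDel ends (Sf f c) : ℤ)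
        = ∑ S ∈ (Finset.univ : Finset V).powerset,
            (ncompDel ends S : ℤ) * ((q : ℤ) - 1)^S.card := by
    intro c
    rw [← Finset.sum_fiberwise_of_maps_to
      (g := fun f : V → Fin q => Sf f c)
      (t := (Finset.univ : Finset V).powerset)
      (fun f _ => Finset.mem_powerset.mpr (Finset.subset_univ _))
      (fun f => (ncompDel ends (Sf f c) : ℤ))]
    refine Finset.sum_congr rfl (fun S _ => ?_)
    have h3 : ∀ f ∈ (Finset.univ : Finset (V → Fin q)).filter (fun f => Sf f c = S),
        (ncompDel ends (Sf f c) : ℤ) = (ncompDel ends S : ℤ) := by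
      intro f hf
      rw [(Finset.mem_filter.mp hf).2]
    rw [Finset.sum_congr rfl h3, Finset.sum_const, countS hq S c, nsmul_eq_mul]
    push_cast [Nat.cast_sub hq]
    ring
  rw [Finset.sum_congr rfl (fun c _ => h2 c), Finset.sum_const]
  simp only [Finset.card_univ, Fintype.card_fin, nsmul_eq_mul]

lemma keyCount (ends : E → Sym2 V) (q : ℕ) (hq : 1 ≤ q) :
    ∑ A ∈ (Finset.univ : Finset E).powerset,
        (-1 : ℤ)^(A.card - rk ends A) * beta ends A * (q : ℤ)^(ncomp ends A)
      = (Fintype.card V : ℤ) * (q : ℤ)^(Fintype.card V)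
        - (q : ℤ) * ∑ S ∈ (Finset.univ : Finset V).powerset,
            (ncompDel ends S : ℤ) * ((q : ℤ) - 1)^S.card := by
  rw [sumf_rk ends q]
  have h1 : ∀ f : V → Fin q, (rk ends (Kf ends f) : ℤ)
      = (Fintype.card V : ℤ) - (ncomp ends (Kf ends f) : ℤ) := by
    intro f
    rw [rk, Nat.cast_sub (ncomp_le_cardV ends _)]
  rw [Finset.sum_congr rfl (fun f _ => h1 f), Finset.sum_sub_distrib,
    Finset.sum_const, sumf_ncomp ends q hq]
  simp only [Finset.card_univ, Fintype.card_fun, Fintype.card_fin, nsmul_eq_mul]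
  push_cast
  ring

lemma bin1 (i : ℕ) : ∀ (s : ℕ) (N : ℕ), s ≤ N →
    (∑ t ∈ Finset.range (s+1), (-1:ℤ)^t * (s.choose t : ℤ) * (((N - t).choose i : ℕ) : ℤ))
      = if s ≤ i then (((N - s).choose (i - s) : ℕ) : ℤ) else 0 := by
  intro s
  induction s with
  | zero =>
    intro N _
    simp
  | succ s ih =>
    intro N hsN
    have hsN' : s ≤ N - 1 := by omega
    have hrec : (∑ t ∈ Finset.range (s+2), (-1:ℤ)^t * ((s+1).choose t : ℤ) * (((N - t).choose i : ℕ) : ℤ))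
        = (∑ t ∈ Finset.range (s+1), (-1:ℤ)^t * (s.choose t : ℤ) * (((N - t).choose i : ℕ) : ℤ))
          - (∑ t ∈ Finset.range (s+1), (-1:ℤ)^t * (s.choose t : ℤ) * ((((N-1) - t).choose i : ℕ) : ℤ)) := by
      rw [Finset.sum_range_succ' (fun t => (-1:ℤ)^t * ((s+1).choose t : ℤ) * (((N - t).choose i : ℕ) : ℤ)) (s+1)]
      have hterm : ∀ t, (-1:ℤ)^(t+1) * ((s+1).choose (t+1) : ℤ) * (((N - (t+1)).choose i : ℕ) : ℤ)
          = -((-1:ℤ)^t * (s.choose t : ℤ) * ((((N-1) - t).choose i : ℕ) : ℤ))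
            + (-1:ℤ)^(t+1) * (s.choose (t+1) : ℤ) * (((N - (t+1)).choose i : ℕ) : ℤ) := by
        intro t
        have h1 : (s+1).choose (t+1) = s.choose t + s.choose (t+1) := Nat.choose_succ_succ s t
        have h2 : N - (t+1) = (N-1) - t := by omega
        rw [h1, h2]
        push_cast
        ring
      rw [Finset.sum_congr rfl (fun t _ => hterm t)]
      rw [Finset.sum_add_distrib]
      have h3 : (∑ t ∈ Finset.range (s+1),
          -((-1:ℤ)^t * (s.choose t : ℤ) * ((((N-1) - t).choose i : ℕ) : ℤ)))
          = - ∑ t ∈ Finset.range (s+1), (-1:ℤ)^t * (s.choose t : ℤ) * ((((N-1) - t).choose i : ℕ) : ℤ) := by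
        rw [← Finset.sum_neg_distrib]
      have h4 : (∑ t ∈ Finset.range (s+1), (-1:ℤ)^(t+1) * (s.choose (t+1) : ℤ) * (((N - (t+1)).choose i : ℕ) : ℤ))
            + (-1:ℤ)^0 * ((s+1).choose 0 : ℤ) * (((N - 0).choose i : ℕ) : ℤ)
          = ∑ t ∈ Finset.range (s+1), (-1:ℤ)^t * (s.choose t : ℤ) * (((N - t).choose i : ℕ) : ℤ) := by
        have h5 := Finset.sum_range_succ' (fun t => (-1:ℤ)^t * (s.choose t : ℤ) * (((N - t).choose i : ℕ) : ℤ)) (s+1)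
        rw [Finset.sum_range_succ (fun t => (-1:ℤ)^t * (s.choose t : ℤ) * (((N - t).choose i : ℕ) : ℤ)) (s+1)] at h5
        have h6 : s.choose (s+1) = 0 := Nat.choose_succ_self s
        rw [h6] at h5
        simp only [Nat.choose_zero_right, Nat.cast_one, Nat.cast_zero, pow_zero, one_mul, mul_zero, zero_mul,
          add_zero, Nat.sub_zero, mul_one, neg_mul] at h5 ⊢
        linarith [h5]
      linarith [h3, h4]
    rw [hrec, ih N (by omega), ih (N-1) hsN']
    by_cases h1 : s + 1 ≤ i
    · rw [if_pos (by omega : s ≤ i), if_pos (by omega : s ≤ i), if_pos h1]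
      have hp : (N - s).choose (i - s) = ((N-s-1).choose (i-s-1)) + ((N-s-1).choose (i-s)) := by
        rw [show N - s = (N-s-1)+1 by omega, show i - s = (i-s-1)+1 by omega]
        exact Nat.choose_succ_succ _ _
      have e1 : N - 1 - s = N - s - 1 := by omega
      have e2 : N - (s+1) = N - s - 1 := by omega
      have e3 : i - (s+1) = i - s - 1 := by omega
      rw [e1, e2, e3, hp]
      push_cast
      ring
    · by_cases h2 : s ≤ i
      · have h3 : s = i := by omega
        rw [if_pos h2, if_pos h2, if_neg h1]
        subst h3
        simp
      · rw [if_neg h2, if_neg h2, if_neg (by omega : ¬ s + 1 ≤ i)]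
        ring

open Polynomial in
lemma coeff_one_sub_pow (m j : ℕ) :
    ((1 - Polynomial.X : Polynomial ℤ)^m).coeff j = (-1:ℤ)^j * (m.choose j : ℤ) := by
  have h : ((1 - Polynomial.X : Polynomial ℤ))^m
      = ∑ t ∈ Finset.range (m+1), Polynomial.C ((-1:ℤ)^t * (m.choose t : ℤ)) * Polynomial.X^t := by
    have hadd := add_pow (-Polynomial.X : Polynomial ℤ) 1 m
    have h1 : (1 - Polynomial.X : Polynomial ℤ) = -Polynomial.X + 1 := by ring
    rw [h1, hadd]
    refine Finset.sum_congr rfl (fun t _ => ?_)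
    have : ((m.choose t : ℕ) : Polynomial ℤ) = Polynomial.C ((m.choose t : ℤ)) := by
      simp
    rw [this]
    rw [neg_pow, one_pow, map_mul]
    have : Polynomial.C ((-1:ℤ)^t) = (-1 : Polynomial ℤ)^t := by
      rw [map_pow, map_neg, map_one]
    rw [this]
    ring
  rw [h, Polynomial.finset_sum_coeff]
  have hterm : ∀ t ∈ Finset.range (m+1),
      (Polynomial.C ((-1:ℤ)^t * (m.choose t : ℤ)) * Polynomial.X^t).coeff j
        = if j = t then (-1:ℤ)^t * (m.choose t : ℤ) else 0 := by
    intro t _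
    rw [Polynomial.coeff_C_mul, Polynomial.coeff_X_pow]
    by_cases h : j = t <;> simp [h]
  rw [Finset.sum_congr rfl hterm, Finset.sum_ite_eq (Finset.range (m+1)) j]
  by_cases h : j ∈ Finset.range (m+1)
  · rw [if_pos h]
  · rw [if_neg h]
    have : m < j := by simpa [Finset.mem_range, Nat.lt_succ_iff, not_le] using h
    rw [Nat.choose_eq_zero_of_lt this]
    simp

open Polynomial in
lemma bin2 (n i : ℕ) (h0 : 1 ≤ n) (hi : i ≤ n - 1) :
    ∑ s ∈ Finset.range (i+1), (-1:ℤ)^(i-s) * (((n-1-s).choose (i-s) : ℕ) : ℤ) * ((n.choose s : ℕ) : ℤ) = 1 := by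
  set Q : Polynomial ℤ := ∑ s ∈ Finset.range n,
    Polynomial.C ((n.choose s : ℤ)) * (Polynomial.X^s * (1 - Polynomial.X)^(n-1-s)) with hQdef
  have hQ : (1 - Polynomial.X) * Q = 1 - Polynomial.X^n := by
    rw [hQdef, Finset.mul_sum]
    have hterm : ∀ s ∈ Finset.range n,
        (1 - Polynomial.X) * (Polynomial.C ((n.choose s : ℤ)) * (Polynomial.X^s * (1 - Polynomial.X)^(n-1-s)))
          = Polynomial.C ((n.choose s : ℤ)) * (Polynomial.X^s * (1 - Polynomial.X)^(n-s)) := by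
      intro s hs
      have : n - s = (n - 1 - s) + 1 := by
        have := Finset.mem_range.mp hs; omega
      rw [this, pow_succ]
      ring
    rw [Finset.sum_congr rfl hterm]
    have hbig : ∑ s ∈ Finset.range (n+1),
        Polynomial.C ((n.choose s : ℤ)) * (Polynomial.X^s * (1 - Polynomial.X)^(n-s)) = 1 := by
      have hadd := add_pow (Polynomial.X : Polynomial ℤ) (1 - Polynomial.X) n
      have h1 : (Polynomial.X + (1 - Polynomial.X) : Polynomial ℤ) = 1 := by ring
      rw [h1, one_pow] at hadd
      have hterm2 : ∀ s ∈ Finset.range (n+1),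
          Polynomial.C ((n.choose s : ℤ)) * (Polynomial.X^s * (1 - Polynomial.X)^(n-s))
            = Polynomial.X^s * (1 - Polynomial.X)^(n-s) * ((n.choose s : ℕ) : Polynomial ℤ) := by
        intro s _
        have hc : ((n.choose s : ℕ) : Polynomial ℤ) = Polynomial.C ((n.choose s : ℤ)) := by simp
        rw [hc]; ring
      rw [Finset.sum_congr rfl hterm2, ← hadd]
    have hsplit := Finset.sum_range_succ
      (fun s => Polynomial.C ((n.choose s : ℤ)) * (Polynomial.X^s * (1 - Polynomial.X)^(n-s))) n
    rw [hbig] at hsplit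
    have hn : Polynomial.C ((n.choose n : ℤ)) * (Polynomial.X^n * (1 - Polynomial.X)^(n-n)) = Polynomial.X^n := by
      simp [Nat.choose_self]
    rw [hn] at hsplit
    linear_combination -hsplit
  have hcoeff : ∀ j, j ≤ n - 1 → Q.coeff j
      = ∑ s ∈ Finset.range (j+1), (-1:ℤ)^(j-s) * (((n-1-s).choose (j-s) : ℕ) : ℤ) * ((n.choose s : ℕ) : ℤ) := by
    intro j hj
    rw [hQdef, Polynomial.finset_sum_coeff]
    have hterm : ∀ s ∈ Finset.range n,
        (Polynomial.C ((n.choose s : ℤ)) * (Polynomial.X^s * (1 - Polynomial.X)^(n-1-s))).coeff j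
          = if s ≤ j then ((n.choose s : ℤ)) * ((-1:ℤ)^(j-s) * (((n-1-s).choose (j-s) : ℕ) : ℤ)) else 0 := by
      intro s _
      rw [Polynomial.coeff_C_mul, Polynomial.X_pow_mul, Polynomial.coeff_mul_X_pow']
      by_cases h : s ≤ j
      · rw [if_pos h, if_pos h, coeff_one_sub_pow]
      · rw [if_neg h, if_neg h, mul_zero]
    rw [Finset.sum_congr rfl hterm]
    rw [← Finset.sum_filter]
    have hfil : (Finset.range n).filter (fun s => s ≤ j) = Finset.range (j+1) := by
      ext s
      simp only [Finset.mem_filter, Finset.mem_range, Nat.lt_succ_iff]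
      constructor
      · rintro ⟨_, h⟩; exact h
      · intro h; exact ⟨by omega, h⟩
    rw [hfil]
    exact Finset.sum_congr rfl (fun s _ => by ring)
  -- Q.coeff 0 = 1
  have hc0 : Q.coeff 0 = 1 := by
    have h := congrArg (fun p => Polynomial.coeff p 0) hQ
    have hn0 : ¬ ((0:ℕ) = n) := by omega
    simp only [Polynomial.mul_coeff_zero, Polynomial.coeff_sub, Polynomial.coeff_one_zero,
      Polynomial.coeff_X_zero, Polynomial.coeff_X_pow, if_neg hn0] at h
    -- h : (1 - 0) * Q.coeff 0 = 1 - 0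
    simpa using h
  -- Q.coeff j = Q.coeff (j-1) for 1 ≤ j ≤ n-1
  have hstep : ∀ j, 1 ≤ j → j ≤ n - 1 → Q.coeff j = Q.coeff (j - 1) := by
    intro j h1 h2
    obtain ⟨m, rfl⟩ : ∃ m, j = m + 1 := ⟨j - 1, by omega⟩
    have hthis := congrArg (fun p => Polynomial.coeff p (m+1)) hQ
    have hexp : ((1 - Polynomial.X) * Q) = Q - Polynomial.X * Q := by ring
    rw [hexp] at hthis
    simp only [Polynomial.coeff_sub, Polynomial.coeff_one, Polynomial.coeff_X_pow,
      Polynomial.coeff_X_mul] at hthis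
    have hj0 : ¬ (m + 1 = 0) := by omega
    have hjn : ¬ (m + 1 = n) := by omega
    simp only [if_neg hj0, if_neg hjn, Nat.add_sub_cancel] at hthis ⊢
    linarith [hthis]
  have hall : ∀ j, j ≤ n - 1 → Q.coeff j = 1 := by
    intro j
    induction j with
    | zero => intro _; exact hc0
    | succ m ih =>
      intro hm
      rw [hstep (m+1) (by omega) hm]
      simp only [Nat.add_sub_cancel]
      exact ih (by omega)
  rw [← hcoeff i hi, hall i hi]


lemma ncompDel_univ (ends : E → Sym2 V) : ncompDel ends (Finset.univ : Finset V) = 0 := by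
  have hem : IsEmpty {x : V // x ∉ (Finset.univ : Finset V)} :=
    ⟨fun x => x.2 (Finset.mem_univ x.1)⟩
  have : IsEmpty (Quotient (Relation.EqvGen.setoid
      (fun u v : {x : V // x ∉ (Finset.univ : Finset V)} =>
        AdjDel ends (Finset.univ : Finset V) u.1 v.1))) :=
    ⟨fun q => Quotient.inductionOn q (fun a => (hem.false a).elim)⟩
  rw [ncompDel]
  exact Nat.card_of_isEmpty

lemma polyEq (ends : E → Sym2 V) :
    (∑ A ∈ (Finset.univ : Finset E).powerset,
        Polynomial.C ((-1:ℤ)^(A.card - rk ends A) * beta ends A) * Polynomial.X ^ (ncomp ends A))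
      = Polynomial.C ((Fintype.card V : ℤ)) * Polynomial.X ^ (Fintype.card V)
        - Polynomial.X * ∑ S ∈ (Finset.univ : Finset V).powerset,
            Polynomial.C ((ncompDel ends S : ℤ)) * (Polynomial.X - 1) ^ S.card := by
  apply Polynomial.eq_of_infinite_eval_eq
  apply Set.infinite_of_injective_forall_mem (f := fun m : ℕ => (m + 1 : ℤ))
  · intro a b hab
    have : (a:ℤ) = b := by dsimp at hab; linarith
    exact_mod_cast this
  · intro m
    have hk := keyCount ends (m+1) (by omega)
    push_cast at hk
    simp only [Set.mem_setOf_eq, Polynomial.eval_finset_sum, Polynomial.eval_sub,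
      Polynomial.eval_mul, Polynomial.eval_pow, Polynomial.eval_C, Polynomial.eval_X,
      Polynomial.eval_one]
    convert hk using 2 <;> push_cast <;> ring

noncomputable def Psi (n i : ℕ) (P : Polynomial ℤ) : ℤ :=
  ∑ j ∈ Finset.range (n+1), P.coeff j * (((n - j).choose i : ℕ) : ℤ)

lemma Psi_sum {ι : Type} (n i : ℕ) (s : Finset ι) (f : ι → Polynomial ℤ) :
    Psi n i (∑ x ∈ s, f x) = ∑ x ∈ s, Psi n i (f x) := by
  unfold Psi
  rw [Finset.sum_comm]
  refine Finset.sum_congr rfl (fun j _ => ?_)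
  rw [Polynomial.finset_sum_coeff, Finset.sum_mul]

lemma Psi_sub (n i : ℕ) (P Q : Polynomial ℤ) : Psi n i (P - Q) = Psi n i P - Psi n i Q := by
  unfold Psi
  rw [← Finset.sum_sub_distrib]
  refine Finset.sum_congr rfl (fun j _ => ?_)
  rw [Polynomial.coeff_sub, sub_mul]

lemma Psi_monomial (n i m : ℕ) (a : ℤ) (hm : m ≤ n) :
    Psi n i (Polynomial.C a * Polynomial.X ^ m) = a * (((n - m).choose i : ℕ) : ℤ) := by
  unfold Psi
  have hterm : ∀ j ∈ Finset.range (n+1),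
      (Polynomial.C a * Polynomial.X ^ m).coeff j * (((n - j).choose i : ℕ) : ℤ)
        = if j = m then a * (((n - j).choose i : ℕ) : ℤ) else 0 := by
    intro j _
    rw [Polynomial.coeff_C_mul, Polynomial.coeff_X_pow]
    by_cases h : j = m <;> simp [h]
  rw [Finset.sum_congr rfl hterm, Finset.sum_ite_eq' (Finset.range (n+1)) m]
  rw [if_pos (Finset.mem_range.mpr (by omega))]

lemma Psi_PL (ends : E → Sym2 V) (i : ℕ) :
    Psi (Fintype.card V) i (∑ A ∈ (Finset.univ : Finset E).powerset,
        Polynomial.C ((-1:ℤ)^(A.card - rk ends A) * beta ends A) * Polynomial.X ^ (ncomp ends A))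
      = ∑ A ∈ (Finset.univ : Finset E).powerset,
          (-1:ℤ)^(A.card - rk ends A) * beta ends A * (((rk ends A).choose i : ℕ) : ℤ) := by
  rw [Psi_sum]
  refine Finset.sum_congr rfl (fun A _ => ?_)
  rw [Psi_monomial _ _ _ _ (ncomp_le_cardV ends A)]
  rfl

lemma sumPow_expand (a : ℤ) (s : ℕ) :
    Polynomial.X * (Polynomial.C a * (Polynomial.X - 1) ^ s)
      = ∑ t ∈ Finset.range (s+1),
          Polynomial.C (a * ((-1:ℤ)^(s-t) * ((s.choose t : ℕ) : ℤ))) * Polynomial.X ^ (t+1) := by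
  have hadd := add_pow (Polynomial.X : Polynomial ℤ) (-1) s
  have h1 : (Polynomial.X + (-1) : Polynomial ℤ) = Polynomial.X - 1 := by ring
  rw [h1] at hadd
  rw [hadd, Finset.mul_sum, Finset.mul_sum]
  refine Finset.sum_congr rfl (fun t _ => ?_)
  have hc1 : ((s.choose t : ℕ) : Polynomial ℤ) = Polynomial.C ((s.choose t : ℤ)) := by simp
  have hc2 : ((-1 : Polynomial ℤ))^(s-t) = Polynomial.C ((-1:ℤ)^(s-t)) := by
    rw [map_pow, map_neg, map_one]
  rw [hc1, hc2, map_mul, map_mul]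
  ring

lemma Psi_PR (ends : E → Sym2 V) (i : ℕ) (hi : 1 ≤ i) (hn : 1 ≤ Fintype.card V) :
    Psi (Fintype.card V) i
      (Polynomial.C ((Fintype.card V : ℤ)) * Polynomial.X ^ (Fintype.card V)
        - Polynomial.X * ∑ S ∈ (Finset.univ : Finset V).powerset,
            Polynomial.C ((ncompDel ends S : ℤ)) * (Polynomial.X - 1) ^ S.card)
      = - ∑ S ∈ (Finset.univ : Finset V).powerset,
          (ncompDel ends S : ℤ) * ((-1:ℤ)^S.card *
            (if S.card ≤ i then (((Fintype.card V - 1 - S.card).choose (i - S.card) : ℕ) : ℤ) else 0)) := by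
  set n := Fintype.card V with hn_def
  rw [Psi_sub]
  have h1 : Psi n i (Polynomial.C ((n : ℤ)) * Polynomial.X ^ n) = 0 := by
    rw [Psi_monomial n i n _ le_rfl, Nat.sub_self, Nat.choose_eq_zero_of_lt (by omega), Nat.cast_zero, mul_zero]
  rw [h1, zero_sub]
  congr 1
  rw [Finset.mul_sum, Psi_sum]
  refine Finset.sum_congr rfl (fun S hS => ?_)
  by_cases hSu : S = Finset.univ
  · subst hSu
    rw [ncompDel_univ ends]
    simp only [Nat.cast_zero, Polynomial.C_0, zero_mul, mul_zero]
    unfold Psi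
    simp
  · have hcard : S.card ≤ n - 1 := by
      have h2 : S.card < n := by
        have := Finset.card_lt_card (Finset.ssubset_univ_iff.mpr hSu)
        simpa using this
      omega
    rw [sumPow_expand, Psi_sum]
    have hterm : ∀ t ∈ Finset.range (S.card + 1),
        Psi n i (Polynomial.C ((ncompDel ends S : ℤ) * ((-1:ℤ)^(S.card-t) * ((S.card.choose t : ℕ) : ℤ)))
            * Polynomial.X ^ (t+1))
          = (ncompDel ends S : ℤ) * ((-1:ℤ)^S.card *
              ((-1:ℤ)^t * ((S.card.choose t : ℕ) : ℤ) * (((n - 1 - t).choose i : ℕ) : ℤ))) := by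
      intro t ht
      have ht' : t ≤ S.card := by
        have := Finset.mem_range.mp ht; omega
      rw [Psi_monomial n i (t+1) _ (by omega)]
      have he : n - (t+1) = n - 1 - t := by omega
      rw [he]
      have hsign : (-1:ℤ)^(S.card - t) = (-1:ℤ)^S.card * (-1:ℤ)^t := by
        have hp := pow_add (-1:ℤ) (S.card - t) t
        rw [Nat.sub_add_cancel ht'] at hp
        have h2 : (-1:ℤ)^t * (-1:ℤ)^t = 1 := by rw [← mul_pow]; norm_num
        rw [hp, mul_assoc, h2, mul_one]
      rw [hsign]
      ring
    rw [Finset.sum_congr rfl hterm, ← Finset.mul_sum, ← Finset.mul_sum]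
    congr 1
    congr 1
    have := bin1 i S.card (n-1) hcard
    calc ∑ t ∈ Finset.range (S.card + 1),
          (-1:ℤ)^t * ((S.card.choose t : ℕ) : ℤ) * (((n - 1 - t).choose i : ℕ) : ℤ)
        = if S.card ≤ i then (((n - 1 - S.card).choose (i - S.card) : ℕ) : ℤ) else 0 := this


lemma neg_one_pow_sub (i j : ℕ) (h : j ≤ i) : (-1:ℤ)^(i-j) = (-1:ℤ)^i * (-1:ℤ)^j := by
  have hp := pow_add (-1:ℤ) (i - j) j
  rw [Nat.sub_add_cancel h] at hp
  have h2 : (-1:ℤ)^j * (-1:ℤ)^j = 1 := by rw [← mul_pow]; norm_num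
  rw [hp, mul_assoc, h2, mul_one]

lemma mainLemma (ends : E → Sym2 V) (k : ℕ) (hk : 1 ≤ k) (hconn : KConnected ends k)
    (i : ℕ) (hi1 : 1 ≤ i) (hik : i ≤ k) :
    cInv ends i = 1 + ∑ S ∈ Finset.powersetCard i (Finset.univ : Finset V),
      ((ncompDel ends S : ℤ) - 1) := by
  have hkn : k < Fintype.card V := hconn.1
  have hn1 : 1 ≤ Fintype.card V := by omega
  have hin : i ≤ Fintype.card V - 1 := by omega
  have h1 : cInv ends i
      = (-1:ℤ)^(i-1) * Psi (Fintype.card V) i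
          (∑ A ∈ (Finset.univ : Finset E).powerset,
            Polynomial.C ((-1:ℤ)^(A.card - rk ends A) * beta ends A) * Polynomial.X ^ (ncomp ends A)) := by
    rw [cInv, Psi_PL]
  rw [h1, polyEq, Psi_PR ends i hi1 hn1]
  set n := Fintype.card V with hn_def
  set F : Finset V → ℤ := fun S => (ncompDel ends S : ℤ) * ((-1:ℤ)^S.card *
    (if S.card ≤ i then (((n - 1 - S.card).choose (i - S.card) : ℕ) : ℤ) else 0)) with hF
  have hpow : ∀ W : ℤ, (-1:ℤ)^(i-1) * -W = (-1:ℤ)^i * W := by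
    intro W
    have hii : i - 1 + 1 = i := by omega
    have hsp : (-1:ℤ)^i = (-1:ℤ)^(i-1) * (-1) := by rw [← pow_succ, hii]
    rw [hsp]
    ring
  rw [hpow]
  have e1 : ∑ S ∈ (Finset.univ : Finset V).powerset, F S
      = ∑ j ∈ Finset.range (n+1), ∑ S ∈ Finset.powersetCard j (Finset.univ : Finset V), F S := by
    rw [Finset.sum_powerset, Finset.card_univ]
  have e2 : ∀ j ∈ Finset.range (n+1), j ∉ Finset.range (i+1) →
      (∑ S ∈ Finset.powersetCard j (Finset.univ : Finset V), F S) = 0 := by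
    intro j _ hj2
    have hji : ¬ (j ≤ i) := by
      simp only [Finset.mem_range] at hj2; omega
    refine Finset.sum_eq_zero (fun S hS => ?_)
    have hcard : S.card = j := (Finset.mem_powersetCard.mp hS).2
    rw [hF]
    simp only [hcard, if_neg hji, mul_zero]
  have e3 : ∑ j ∈ Finset.range (n+1), ∑ S ∈ Finset.powersetCard j (Finset.univ : Finset V), F S
      = ∑ j ∈ Finset.range (i+1), ∑ S ∈ Finset.powersetCard j (Finset.univ : Finset V), F S :=
    (Finset.sum_subset (by intro x hx; simp only [Finset.mem_range] at hx ⊢; omega) e2).symm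
  set M : ℤ := ∑ S ∈ Finset.powersetCard i (Finset.univ : Finset V), (ncompDel ends S : ℤ) with hM
  have e5 : ∑ S ∈ Finset.powersetCard i (Finset.univ : Finset V), F S = (-1:ℤ)^i * M := by
    rw [hM, Finset.mul_sum]
    refine Finset.sum_congr rfl (fun S hS => ?_)
    have hcard : S.card = i := (Finset.mem_powersetCard.mp hS).2
    rw [hF]
    simp only [hcard, if_pos le_rfl, Nat.sub_self, Nat.choose_zero_right, Nat.cast_one, mul_one]
    ring
  have e6 : ∀ j ∈ Finset.range i,
      (∑ S ∈ Finset.powersetCard j (Finset.univ : Finset V), F S)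
        = ((n.choose j : ℕ) : ℤ) * ((-1:ℤ)^j * (((n - 1 - j).choose (i - j) : ℕ) : ℤ)) := by
    intro j hj
    have hj' : j < i := Finset.mem_range.mp hj
    have hterm : ∀ S ∈ Finset.powersetCard j (Finset.univ : Finset V),
        F S = (-1:ℤ)^j * (((n - 1 - j).choose (i - j) : ℕ) : ℤ) := by
      intro S hS
      have hcard : S.card = j := (Finset.mem_powersetCard.mp hS).2
      have hdel : ncompDel ends S = 1 := hconn.2 S (by omega)
      rw [hF]
      simp only [hcard, hdel, Nat.cast_one, one_mul, if_pos (by omega : j ≤ i)]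
    rw [Finset.sum_congr rfl hterm, Finset.sum_const, Finset.card_powersetCard, Finset.card_univ,
      nsmul_eq_mul]
  have e7 : ∑ j ∈ Finset.range i,
      (-1:ℤ)^i * (((n.choose j : ℕ) : ℤ) * ((-1:ℤ)^j * (((n - 1 - j).choose (i - j) : ℕ) : ℤ)))
      = 1 - ((n.choose i : ℕ) : ℤ) := by
    have hb := bin2 n i hn1 hin
    rw [Finset.sum_range_succ] at hb
    have hlast : (-1:ℤ)^(i-i) * (((n-1-i).choose (i-i) : ℕ) : ℤ) * ((n.choose i : ℕ) : ℤ)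
        = ((n.choose i : ℕ) : ℤ) := by
      simp [Nat.sub_self]
    rw [hlast] at hb
    have hterm : ∀ j ∈ Finset.range i,
        (-1:ℤ)^(i-j) * (((n-1-j).choose (i-j) : ℕ) : ℤ) * ((n.choose j : ℕ) : ℤ)
          = (-1:ℤ)^i * (((n.choose j : ℕ) : ℤ) * ((-1:ℤ)^j * (((n - 1 - j).choose (i - j) : ℕ) : ℤ))) := by
      intro j hj
      have hj' : j < i := Finset.mem_range.mp hj
      rw [neg_one_pow_sub i j (by omega)]
      ring
    rw [← Finset.sum_congr rfl hterm]
    linarith [hb]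
  have hsq : (-1:ℤ)^i * (-1:ℤ)^i = 1 := by rw [← mul_pow]; norm_num
  have hrhs : ∑ S ∈ Finset.powersetCard i (Finset.univ : Finset V), ((ncompDel ends S : ℤ) - 1)
      = M - ((n.choose i : ℕ) : ℤ) := by
    rw [Finset.sum_sub_distrib, Finset.sum_const, Finset.card_powersetCard, Finset.card_univ,
      nsmul_eq_mul, mul_one, hM]
  rw [e1, e3, Finset.sum_range_succ, e5, Finset.sum_congr rfl e6, hrhs, mul_add, Finset.mul_sum, e7]
  calc (1 - ((n.choose i : ℕ) : ℤ)) + (-1:ℤ)^i * ((-1:ℤ)^i * M)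
      = (1 - ((n.choose i : ℕ) : ℤ)) + ((-1:ℤ)^i * (-1:ℤ)^i) * M := by ring
    _ = 1 + (M - ((n.choose i : ℕ) : ℤ)) := by rw [hsq]; ring

/-- For a `k`-connected graph without self-loops (`k ≥ 1`):
`c₁(G) = … = c_{k-1}(G) = 1` and
`c_k(G) = 1 + Σ_{S ⊆ V, |S| = k} (|π₀(G \ S)| - 1)`. -/
theorem cInv_of_kConnected (ends : E → Sym2 V) (k : ℕ) (hk : 1 ≤ k)
    (hloop : ∀ e : E, ¬ (ends e).IsDiag)
    (hconn : KConnected ends k) :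
    (∀ i, 1 ≤ i → i < k → cInv ends i = 1) ∧
      cInv ends k = 1 + ∑ S ∈ Finset.powersetCard k (Finset.univ : Finset V),
        ((ncompDel ends S : ℤ) - 1) := by
  constructor
  · intro i hi1 hik
    rw [mainLemma ends k hk hconn i hi1 (le_of_lt hik)]
    have hz : ∀ S ∈ Finset.powersetCard i (Finset.univ : Finset V),
        ((ncompDel ends S : ℤ) - 1) = 0 := by
      intro S hS
      have hcard : S.card = i := (Finset.mem_powersetCard.mp hS).2
      rw [hconn.2 S (by omega)]
      ring
    rw [Finset.sum_congr rfl hz, Finset.sum_const_zero, add_zero]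
  · exact mainLemma ends k hk hconn k hk le_rfl

end Stmt10
end

section
/- For a connected finite graph G without self-loops, Σ_{A ⊆ E(G)} (-1)^{ℓ(A)} β(A) = rk(G) = |V(G)| - 1, where ℓ(A) = |A| - rk(A) and β is Crapo's beta invariant of the spanning subgraph A. -/
open scoped Classical

namespace Stmt11

variable {V E : Type} [Fintype V] [Fintype E] [DecidableEq V] [DecidableEq E]

/-- Adjacency of two vertices via an edge in the edge set `A`. -/
def Adj (ends : E → Sym2 V) (A : Finset E) (u v : V) : Prop :=
  ∃ e ∈ A, ends e = s(u, v)

/-- The number of connected components of the spanning subgraph `(V, A)`. -/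
noncomputable def ncomp (ends : E → Sym2 V) (A : Finset E) : ℕ :=
  Nat.card (Quotient (Relation.EqvGen.setoid (Adj ends A)))

/-- The rank of the spanning subgraph `(V, A)`: `|V| - |π₀(A)|`. -/
noncomputable def rk (ends : E → Sym2 V) (A : Finset E) : ℕ :=
  Fintype.card V - ncomp ends A

/-- Crapo's beta invariant of the spanning subgraph `(V, A)`. -/
noncomputable def beta (ends : E → Sym2 V) (A : Finset E) : ℤ :=
  (-1) ^ rk ends A * ∑ B ∈ A.powerset, (-1 : ℤ) ^ B.card * (rk ends B : ℤ)

lemma eqvGen_mono {ends : E → Sym2 V} {A A' : Finset E} (h : A ⊆ A') {u v : V}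
    (huv : Relation.EqvGen (Adj ends A) u v) : Relation.EqvGen (Adj ends A') u v :=
  Relation.EqvGen.mono (fun (x y : V) (hxy : Adj ends A x y) =>
    (match hxy with | ⟨e, he, h2⟩ => ⟨e, h he, h2⟩ : Adj ends A' x y)) _ _ huv

lemma ncomp_empty (ends : E → Sym2 V) : ncomp ends (∅ : Finset E) = Fintype.card V := by
  have key : ∀ u v : V, Relation.EqvGen (Adj ends ∅) u v → u = v := by
    intro u v h
    induction h with
    | rel x y h => obtain ⟨e, he, _⟩ := h; simp at he
    | refl => rfl
    | symm x y _ ih => exact ih.symm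
    | trans x y z _ _ ih1 ih2 => exact ih1.trans ih2
  have e : Quotient (Relation.EqvGen.setoid (Adj ends (∅ : Finset E))) ≃ V :=
    { toFun := Quotient.lift id (fun a b h => key a b h)
      invFun := Quotient.mk _
      left_inv := fun x => Quotient.inductionOn x (fun _ => rfl)
      right_inv := fun _ => rfl }
  rw [ncomp, Nat.card_congr e, Nat.card_eq_fintype_card]

lemma insert_rel {ends : E → Sym2 V} {A : Finset E} {e : E} {a b : V}
    (hab : ends e = s(a, b)) {u v : V}
    (h : Relation.EqvGen (Adj ends (insert e A)) u v) :
    Relation.EqvGen (Adj ends A) u v ∨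
    (Relation.EqvGen (Adj ends A) u a ∧ Relation.EqvGen (Adj ends A) b v) ∨
    (Relation.EqvGen (Adj ends A) u b ∧ Relation.EqvGen (Adj ends A) a v) := by
  induction h with
  | rel x y hxy =>
    obtain ⟨f, hf, hends⟩ := hxy
    rcases Finset.mem_insert.mp hf with rfl | hf
    · rw [hab] at hends
      rcases Sym2.eq_iff.mp hends.symm with ⟨rfl, rfl⟩ | ⟨rfl, rfl⟩
      · exact Or.inr (Or.inl ⟨Relation.EqvGen.refl _, Relation.EqvGen.refl _⟩)
      · exact Or.inr (Or.inr ⟨Relation.EqvGen.refl _, Relation.EqvGen.refl _⟩)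
    · exact Or.inl (Relation.EqvGen.rel _ _ ⟨f, hf, hends⟩)
  | refl x => exact Or.inl (Relation.EqvGen.refl x)
  | symm x y _ ih =>
    rcases ih with h | ⟨h1, h2⟩ | ⟨h1, h2⟩
    · exact Or.inl (Relation.EqvGen.symm _ _ h)
    · exact Or.inr (Or.inr ⟨Relation.EqvGen.symm _ _ h2, Relation.EqvGen.symm _ _ h1⟩)
    · exact Or.inr (Or.inl ⟨Relation.EqvGen.symm _ _ h2, Relation.EqvGen.symm _ _ h1⟩)
  | trans x y z _ _ ih1 ih2 =>
    have T := @Relation.EqvGen.trans V (Adj ends A)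
    have S := @Relation.EqvGen.symm V (Adj ends A)
    rcases ih1 with h | ⟨h1, h2⟩ | ⟨h1, h2⟩ <;>
      rcases ih2 with h' | ⟨h1', h2'⟩ | ⟨h1', h2'⟩
    · exact Or.inl (T _ _ _ h h')
    · exact Or.inr (Or.inl ⟨T _ _ _ h h1', h2'⟩)
    · exact Or.inr (Or.inr ⟨T _ _ _ h h1', h2'⟩)
    · exact Or.inr (Or.inl ⟨h1, T _ _ _ h2 h'⟩)
    · -- x~a, b~y, y~a, b~z : then b~a hence x~a~b~z
      exact Or.inl (T _ _ _ h1 (T _ _ _ (S _ _ (T _ _ _ h2 h1')) h2'))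
    · -- x~a, b~y, y~b, a~z : x~a~z
      exact Or.inl (T _ _ _ h1 h2')
    · exact Or.inr (Or.inr ⟨h1, T _ _ _ h2 h'⟩)
    · -- x~b, a~y, y~a, b~z : x~b~z
      exact Or.inl (T _ _ _ h1 h2')
    · -- x~b, a~y, y~b, a~z : a~b hence x~b~a~z
      exact Or.inl (T _ _ _ h1 (T _ _ _ (S _ _ (T _ _ _ h2 h1')) h2'))

lemma ncomp_le_insert (ends : E → Sym2 V) (A : Finset E) (e : E) :
    ncomp ends A ≤ ncomp ends (insert e A) + 1 := by
  obtain ⟨a, b, hab⟩ : ∃ a b, ends e = s(a, b) :=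
    Sym2.ind (f := fun z => ∃ a b, z = s(a, b)) (fun x y => ⟨x, y, rfl⟩) (ends e)
  set S1 := Relation.EqvGen.setoid (Adj ends A) with hS1
  set S2 := Relation.EqvGen.setoid (Adj ends (insert e A)) with hS2
  let φ : Quotient S1 → Quotient S2 :=
    Quotient.map id (fun u v h => eqvGen_mono (Finset.subset_insert e A) h)
  let G : Quotient S1 → Quotient S2 ⊕ Unit := fun x =>
    if x = Quotient.mk S1 a then Sum.inr () else Sum.inl (φ x)
  have hinj : Function.Injective G := by
    intro x y hxy
    by_cases hx : x = Quotient.mk S1 a <;> by_cases hy : y = Quotient.mk S1 a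
    · exact hx.trans hy.symm
    · simp only [G, if_pos hx, if_neg hy] at hxy; simp at hxy
    · simp only [G, if_neg hx, if_pos hy] at hxy; simp at hxy
    · simp only [G, if_neg hx, if_neg hy, Sum.inl.injEq] at hxy
      obtain ⟨u, rfl⟩ := Quotient.exists_rep x
      obtain ⟨v, rfl⟩ := Quotient.exists_rep y
      have huv : Relation.EqvGen (Adj ends (insert e A)) u v := by
        have : (Quotient.mk S2 u : Quotient S2) = Quotient.mk S2 v := hxy
        exact Quotient.exact this
      rcases insert_rel hab huv with h | ⟨h1, h2⟩ | ⟨h1, h2⟩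
      · exact Quotient.sound h
      · exact absurd (Quotient.sound h1) hx
      · exact absurd (Quotient.sound (Relation.EqvGen.symm _ _ h2)) hy
  have hle : Nat.card (Quotient S1) ≤ Nat.card (Quotient S2 ⊕ Unit) :=
    Nat.card_le_card_of_injective G hinj
  have : Nat.card (Quotient S2 ⊕ Unit) = Nat.card (Quotient S2) + 1 := by
    simp [Nat.card_sum]
  rw [ncomp, ncomp, ← hS1, ← hS2]
  omega

lemma card_le_ncomp_add (ends : E → Sym2 V) (A : Finset E) :
    Fintype.card V ≤ ncomp ends A + A.card := by
  induction A using Finset.induction with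
  | empty => simp [ncomp_empty]
  | @insert e A he ih =>
    have h1 := ncomp_le_insert ends A e
    rw [Finset.card_insert_of_notMem he]
    omega

lemma rk_le_card (ends : E → Sym2 V) (A : Finset E) : rk ends A ≤ A.card := by
  have := card_le_ncomp_add ends A
  rw [rk]; omega

/-- For a connected graph without self-loops,
`Σ_{A ⊆ E(G)} (-1)^{ℓ(A)} β(A) = rk(G) = |V(G)| - 1`. -/
theorem sum_beta_eq_rank (ends : E → Sym2 V)
    (hloop : ∀ e : E, ¬ (ends e).IsDiag)
    (hconn : ncomp ends (Finset.univ : Finset E) = 1) :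
    (∑ A ∈ (Finset.univ : Finset E).powerset,
        (-1 : ℤ) ^ (A.card - rk ends A) * beta ends A)
      = (rk ends Finset.univ : ℤ) ∧
    rk ends (Finset.univ : Finset E) = Fintype.card V - 1 := by
  refine ⟨?_, by simp [rk, hconn]⟩
  have hterm : ∀ A : Finset E,
      (-1 : ℤ) ^ (A.card - rk ends A) * beta ends A
        = ∑ B ∈ A.powerset, ((-1 : ℤ) ^ B.card * (rk ends B : ℤ)) * (-1 : ℤ) ^ A.card := by
    intro A
    rw [beta, ← mul_assoc, ← pow_add, Nat.sub_add_cancel (rk_le_card ends A),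
      Finset.mul_sum]
    exact Finset.sum_congr rfl fun B _ => by ring
  calc
    (∑ A ∈ (Finset.univ : Finset E).powerset,
        (-1 : ℤ) ^ (A.card - rk ends A) * beta ends A)
      = ∑ A ∈ (Finset.univ : Finset E).powerset, ∑ B ∈ A.powerset,
          ((-1 : ℤ) ^ B.card * (rk ends B : ℤ)) * (-1 : ℤ) ^ A.card :=
      Finset.sum_congr rfl fun A _ => hterm A
    _ = ∑ B ∈ (Finset.univ : Finset E).powerset,
          ∑ A ∈ (Finset.univ : Finset E).powerset.filter (fun A => B ⊆ A),
          ((-1 : ℤ) ^ B.card * (rk ends B : ℤ)) * (-1 : ℤ) ^ A.card := by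
      apply Finset.sum_comm'
      intro A B
      simp only [Finset.mem_powerset, Finset.mem_filter, Finset.subset_univ, true_and]
      tauto
    _ = ∑ B ∈ (Finset.univ : Finset E).powerset,
          ((-1 : ℤ) ^ B.card * (rk ends B : ℤ)) *
          ∑ A ∈ (Finset.univ : Finset E).powerset.filter (fun A => B ⊆ A),
            (-1 : ℤ) ^ A.card := by
      exact Finset.sum_congr rfl fun B _ => (Finset.mul_sum _ _ _).symm
    _ = (rk ends Finset.univ : ℤ) := ?_
  have hinner : ∀ B : Finset E,
      (∑ A ∈ (Finset.univ : Finset E).powerset.filter (fun A => B ⊆ A),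
        (-1 : ℤ) ^ A.card)
        = if B = Finset.univ then (-1 : ℤ) ^ B.card else 0 := by
    intro B
    have hbij : (∑ A ∈ (Finset.univ : Finset E).powerset.filter (fun A => B ⊆ A),
        (-1 : ℤ) ^ A.card) = ∑ C ∈ Bᶜ.powerset, (-1 : ℤ) ^ (B ∪ C).card := by
      apply Finset.sum_nbij' (fun A => A \ B) (fun C => B ∪ C)
      · intro A hA
        simp only [Finset.mem_filter, Finset.mem_powerset] at hA ⊢
        intro x hx
        simp only [Finset.mem_sdiff] at hx
        simpa [Finset.mem_compl] using hx.2
      · intro C hC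
        simp only [Finset.mem_powerset] at hC
        simp [Finset.mem_filter, Finset.subset_union_left]
      · intro A hA
        simp only [Finset.mem_filter, Finset.mem_powerset] at hA
        exact Finset.union_sdiff_of_subset hA.2
      · intro C hC
        simp only [Finset.mem_powerset] at hC
        apply Finset.union_sdiff_cancel_left
        exact Finset.disjoint_left.mpr fun x hxB hxC =>
          (Finset.mem_compl.mp (hC hxC)) hxB
      · intro A hA
        simp only [Finset.mem_filter, Finset.mem_powerset] at hA
        rw [Finset.union_sdiff_of_subset hA.2]
    rw [hbij]
    have : ∀ C ∈ Bᶜ.powerset, (-1 : ℤ) ^ (B ∪ C).card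
        = (-1 : ℤ) ^ B.card * (-1 : ℤ) ^ C.card := by
      intro C hC
      simp only [Finset.mem_powerset] at hC
      rw [Finset.card_union_of_disjoint, pow_add]
      exact Finset.disjoint_left.mpr fun x hxB hxC =>
        (Finset.mem_compl.mp (hC hxC)) hxB
    rw [Finset.sum_congr rfl this, ← Finset.mul_sum,
      Finset.sum_powerset_neg_one_pow_card]
    by_cases hB : B = Finset.univ
    · simp [hB]
    · have : ¬ (Bᶜ = ∅) := by
        simpa [Finset.compl_eq_empty_iff] using hB
      simp [this, hB]
  rw [Finset.sum_congr rfl fun B _ => by rw [hinner B]]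
  rw [Finset.sum_eq_single (Finset.univ : Finset E)
    (fun b _ hb => by simp [hb])
    (fun h => absurd (Finset.mem_powerset.mpr (Finset.Subset.refl _)) h)]
  simp only [if_pos rfl, if_true]
  have hE : (-1 : ℤ) ^ (Finset.univ : Finset E).card *
      (-1 : ℤ) ^ (Finset.univ : Finset E).card = 1 := by
    rw [← pow_add]
    exact Even.neg_one_pow ⟨_, rfl⟩
  rw [mul_right_comm, hE, one_mul]

end Stmt11
end
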